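/- arXiv:0809.2320 — 6 statements merged into one kernel-verified Lean document; each statement's English description precedes it below -/
import Mathlib

section
/- Let ε ∈ {1, -1} and let d be an ε-admissible partition of m that has full members. Then for every ε-admissible partition f of m with f < d in the dominance order, one has dim_ε(d) - dim_ε(f) ≥ 4. (Geometrically: the singular locus of the closure of the nilpotent orbit of Jordan type d has codimension at least 4.) -/
/-- A partition is `ε`-admissible if every even part (when `ε = 1`), respectively every
odd part (when `ε = -1`), occurs with even multiplicity. -/
def EpsAdmissible {m : ℕ} (ε : ℤ) (d : Nat.Partition m) : Prop :=
  ∀ p : ℕ, ((ε = 1 ∧ Even p) ∨ (ε = -1 ∧ Odd p)) → Even (Multiset.count p d.parts)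

/-- The dominance order on partitions of `m`: `f ≤ d` iff for every `j`, the sum of the
`j` largest parts of `f` is at most the sum of the `j` largest parts of `d`. -/
def DominanceLE {m : ℕ} (f d : Nat.Partition m) : Prop :=
  ∀ j : ℕ, ((Multiset.sort f.parts (· ≥ ·)).take j).sum ≤
    ((Multiset.sort d.parts (· ≥ ·)).take j).sum

/-- A partition has full members if every integer `j` with `1 ≤ j ≤ d₁` (where `d₁` is
the largest part) occurs as a part. -/
def FullMembers {m : ℕ} (d : Nat.Partition m) : Prop :=
  ∀ j : ℕ, 1 ≤ j → j ≤ d.parts.sup → j ∈ d.parts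

/-- The `i`-th part of the transpose partition: `#{j : d_j ≥ i}`. -/
def transposePart {m : ℕ} (d : Nat.Partition m) (i : ℕ) : ℕ :=
  Multiset.card (d.parts.filter (fun p => i ≤ p))

/-- The number of odd parts of `d`, counted with multiplicity. -/
def oddCount {m : ℕ} (d : Nat.Partition m) : ℕ :=
  Multiset.card (d.parts.filter (fun p => Odd p))

/-- `dim_ε(d) = (m² - εm)/2 - (Σ_i ((dᵗ)_i)² - ε·odd(d))/2`, the dimension of the
nilpotent orbit of Jordan type `d` in `so(m, ℂ)` (for `ε = 1`) or `sp(m, ℂ)`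
(for `ε = -1`). -/
noncomputable def epsDim (ε : ℤ) {m : ℕ} (d : Nat.Partition m) : ℚ :=
  ((m : ℚ) ^ 2 - (ε : ℚ) * m) / 2 -
    ((∑ i ∈ Finset.Icc 1 m, (transposePart d i : ℚ) ^ 2) - (ε : ℚ) * oddCount d) / 2

namespace KP

lemma core (m : ℕ) (ε : ℤ) (hε : ε = 1 ∨ ε = -1) (c e : ℕ → ℤ)
    (he0 : ∀ i, 0 ≤ e i)
    (hcmono : ∀ i, c (i+1) ≤ c i) (hemono : ∀ i, e (i+1) ≤ e i)
    (hczero : ∀ i, m < i → c i = 0) (hezero : ∀ i, m < i → e i = 0)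
    (htot : ∑ i ∈ Finset.Icc 1 m, e i = ∑ i ∈ Finset.Icc 1 m, c i)
    (hdom : ∀ j, j ≤ m → ∑ i ∈ Finset.Icc 1 j, c i ≤ ∑ i ∈ Finset.Icc 1 j, e i)
    (hne : ∃ i, 1 ≤ i ∧ i ≤ m ∧ c i ≠ e i)
    (hfull : ∀ j, 1 ≤ j → 0 < c (j+1) → c (j+1) < c j)
    (hparc : ∀ p : ℕ, 1 ≤ p → ((ε = 1 ∧ Even p) ∨ (ε = -1 ∧ Odd p)) → Even (c p - c (p+1)))
    (hpare : ∀ p : ℕ, 1 ≤ p → ((ε = 1 ∧ Even p) ∨ (ε = -1 ∧ Odd p)) → Even (e p - e (p+1))) :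
    8 ≤ (∑ i ∈ Finset.Icc 1 m, (e i ^ 2 - c i ^ 2))
        - ε * ∑ i ∈ Finset.Icc 1 m, (-1 : ℤ) ^ (i + 1) * (e i - c i) := by
  classical
  set δ : ℕ → ℤ := fun i => e i - c i with hδdef
  set D : ℕ → ℤ := fun j => ∑ i ∈ Finset.Icc 1 j, δ i with hDdef
  set w : ℕ → ℤ := fun i => e i + c i - ε * (-1) ^ (i + 1) with hwdef
  have hD0 : D 0 = 0 := by simp [hDdef]
  have hDstep : ∀ j, D (j+1) = D j + δ (j+1) := by
    intro j
    simp only [hDdef]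
    exact Finset.sum_Icc_succ_top (by omega) δ
  have hDm : D m = 0 := by
    simp only [hDdef, hδdef, Finset.sum_sub_distrib]
    linarith [htot]
  have hDtop : ∀ j, m ≤ j → D j = 0 := by
    intro j hj
    induction j, hj using Nat.le_induction with
    | base => exact hDm
    | succ n hn ih =>
      rw [hDstep, ih]
      have : δ (n+1) = 0 := by
        simp only [hδdef]
        rw [hezero (n+1) (by omega), hczero (n+1) (by omega)]
        ring
      rw [this]; norm_num
  have hDpos : ∀ j, 0 ≤ D j := by
    intro j
    rcases le_or_gt j m with h | h
    · have := hdom j h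
      simp only [hDdef, hδdef, Finset.sum_sub_distrib]
      linarith
    · rw [hDtop j (by omega)]
  have hcmono' : ∀ a b : ℕ, a ≤ b → c b ≤ c a :=
    fun a b h => antitone_nat_of_succ_le hcmono h
  have hdelta : ∀ j : ℕ, 1 ≤ j → δ j = D j - D (j - 1) := by
    intro j hj
    obtain ⟨k, rfl⟩ : ∃ k, j = k + 1 := ⟨j - 1, by omega⟩
    rw [hDstep]; simp
  have hDsplit : ∀ a b : ℕ, a ≤ b → D b = D a + ∑ i ∈ Finset.Icc (a+1) b, δ i := by
    intro a b hab
    induction b, hab using Nat.le_induction with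
    | base => simp
    | succ n hn ih =>
      rw [hDstep, ih, Finset.sum_Icc_succ_top (by omega)]
      ring
  have hDex : ∃ j, 1 ≤ j ∧ j ≤ m ∧ 0 < D j := by
    by_contra h
    push_neg at h
    have hall : ∀ j, j ≤ m → D j = 0 := by
      intro j hj
      rcases Nat.eq_zero_or_pos j with rfl | hj1
      · exact hD0
      · exact le_antisymm (h j hj1 hj) (hDpos j)
    obtain ⟨i, hi1, him, hine⟩ := hne
    have : δ i = 0 := by
      rw [hdelta i hi1, hall i him, hall (i-1) (by omega)]; ring
    simp only [hδdef] at this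
    exact hine (by linarith)
  -- Abel summation
  have habel : ∀ n : ℕ, ∑ i ∈ Finset.Icc 1 n, δ i * w i
      = (∑ j ∈ Finset.Icc 1 n, D j * (w j - w (j+1))) + D n * w (n+1) := by
    intro n
    induction n with
    | zero => simp [hD0]
    | succ n ih =>
      rw [Finset.sum_Icc_succ_top (by omega), Finset.sum_Icc_succ_top (by omega), ih,
        hDstep]
      ring
  have hX : (∑ i ∈ Finset.Icc 1 m, (e i ^ 2 - c i ^ 2))
      - ε * ∑ i ∈ Finset.Icc 1 m, (-1 : ℤ) ^ (i + 1) * (e i - c i)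
      = ∑ j ∈ Finset.Icc 1 m, D j * (w j - w (j+1)) := by
    have h1 : (∑ i ∈ Finset.Icc 1 m, (e i ^ 2 - c i ^ 2))
        - ε * ∑ i ∈ Finset.Icc 1 m, (-1 : ℤ) ^ (i + 1) * (e i - c i)
        = ∑ i ∈ Finset.Icc 1 m, δ i * w i := by
      rw [Finset.mul_sum, ← Finset.sum_sub_distrib]
      apply Finset.sum_congr rfl
      intro i _
      simp only [hδdef, hwdef]
      ring
    rw [h1, habel m, hDm]
    ring
  rw [hX]
  -- parity/sign normalization
  obtain ⟨r, hr01, hsgn_good, hsgn_bad, hparc', hpare'⟩ :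
      ∃ r : ℕ, r ≤ 1 ∧ (∀ j : ℕ, j % 2 = r → ε * (-1) ^ (j+1) = -1)
        ∧ (∀ j : ℕ, j % 2 ≠ r → ε * (-1) ^ (j+1) = 1)
        ∧ (∀ p : ℕ, 1 ≤ p → p % 2 = r → Even (c p - c (p+1)))
        ∧ (∀ p : ℕ, 1 ≤ p → p % 2 = r → Even (e p - e (p+1))) := by
    rcases hε with rfl | rfl
    · refine ⟨0, by norm_num, ?_, ?_, ?_, ?_⟩
      · intro j hj
        have : Odd (j+1) := by
          rw [Nat.odd_iff]; omega
        rw [this.neg_one_pow]; ring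
      · intro j hj
        have : Even (j+1) := by
          rw [Nat.even_iff]; omega
        rw [this.neg_one_pow]; ring
      · intro p hp hp2
        exact hparc p hp (Or.inl ⟨rfl, Nat.even_iff.mpr hp2⟩)
      · intro p hp hp2
        exact hpare p hp (Or.inl ⟨rfl, Nat.even_iff.mpr hp2⟩)
    · refine ⟨1, le_refl 1, ?_, ?_, ?_, ?_⟩
      · intro j hj
        have : Even (j+1) := by
          rw [Nat.even_iff]; omega
        rw [this.neg_one_pow]; ring
      · intro j hj
        have : Odd (j+1) := by
          rw [Nat.odd_iff]; omega
        rw [this.neg_one_pow]; ring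
      · intro p hp hp2
        exact hparc p hp (Or.inr ⟨rfl, Nat.odd_iff.mpr hp2⟩)
      · intro p hp hp2
        exact hpare p hp (Or.inr ⟨rfl, Nat.odd_iff.mpr hp2⟩)
  -- pair evenness of δ-sums and evenness of D at bad sites
  have hpair : ∀ p : ℕ, 1 ≤ p → p % 2 = r → Even (δ p + δ (p+1)) := by
    intro p hp hp2
    obtain ⟨a, ha⟩ := hparc' p hp hp2
    obtain ⟨b, hb⟩ := hpare' p hp hp2
    exact ⟨b - a + e (p+1) - c (p+1), by simp only [hδdef]; linarith⟩
  have hDeven : ∀ j : ℕ, 1 ≤ j → j % 2 ≠ r → Even (D j) := by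
    intro j hj hjr
    have key : ∀ k : ℕ, Even (∑ i ∈ Finset.Icc (j+1) (j + 2*k), δ i) := by
      intro k
      induction k with
      | zero => simp
      | succ k ih =>
        have h1 : j + 2*(k+1) = (j + 2*k + 1) + 1 := by ring
        rw [h1, Finset.sum_Icc_succ_top (by omega), Finset.sum_Icc_succ_top (by omega)]
        have hp2 : (j + 2*k + 1) % 2 = r := by omega
        have := hpair (j + 2*k + 1) (by omega) hp2
        have h2 : δ (j+2*k+1) + δ (j+2*k+1+1) = δ (j+2*k+1) + δ (j+2*k+2) := by
          norm_num
        obtain ⟨x, hx⟩ := ih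
        obtain ⟨y, hy⟩ := this
        exact ⟨x + y, by rw [hx] at *; linarith [hy]⟩
    have hsplit := hDsplit j (j + 2*m) (by omega)
    rw [hDtop (j + 2*m) (by omega)] at hsplit
    obtain ⟨x, hx⟩ := key m
    exact ⟨-x, by linarith⟩
  -- positivity of c (j+1) when D j > 0
  have hcpos : ∀ j : ℕ, 0 < D j → 0 < c (j+1) := by
    intro j hDj
    have hsplit := hDsplit j (j + m) (by omega)
    rw [hDtop (j + m) (by omega)] at hsplit
    have hneg : ∑ i ∈ Finset.Icc (j+1) (j+m), δ i < 0 := by linarith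
    have : ∃ i ∈ Finset.Icc (j+1) (j+m), δ i < 0 := by
      by_contra hc
      push_neg at hc
      exact absurd (Finset.sum_nonneg hc) (by linarith)
    obtain ⟨i, hi, hdi⟩ := this
    simp only [Finset.mem_Icc] at hi
    have : 0 < c i := by
      have := he0 i
      simp only [hδdef] at hdi
      linarith
    calc 0 < c i := this
      _ ≤ c (j+1) := hcmono' (j+1) i hi.1
  have hgap1 : ∀ j : ℕ, 1 ≤ j → 0 < D j → c (j+1) + 1 ≤ c j := by
    intro j hj hDj
    have := hfull j hj (hcpos j hDj)
    linarith
  have hgap2 : ∀ j : ℕ, 1 ≤ j → j % 2 = r → 0 < D j → c (j+1) + 2 ≤ c j := by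
    intro j hj hjr hDj
    obtain ⟨t, ht⟩ := hparc' j hj hjr
    have := hgap1 j hj hDj
    omega
  have hkappa : ∀ j : ℕ, w j - w (j+1)
      = (e j - e (j+1)) + (c j - c (j+1)) - 2 * (ε * (-1)^(j+1)) := by
    intro j
    simp only [hwdef]
    have : ((-1 : ℤ)) ^ (j+1+1) = -((-1)^(j+1)) := by
      rw [pow_succ]; ring
    rw [this]
    ring
  have hegap : ∀ j : ℕ, 1 ≤ j →
      e j - e (j+1) = (c j - c (j+1)) + 2 * D j - D (j-1) - D (j+1) := by
    intro j hj
    have h1 := hdelta j hj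
    have h2 := hDstep j
    simp only [hδdef] at h1 h2
    linarith
  have hsign_good : ∀ j : ℕ, j % 2 = r → w j - w (j+1)
      = (e j - e (j+1)) + (c j - c (j+1)) + 2 := by
    intro j hj
    rw [hkappa j, hsgn_good j hj]
    ring
  have hsign_bad : ∀ j : ℕ, j % 2 ≠ r → w j - w (j+1)
      = (e j - e (j+1)) + (c j - c (j+1)) - 2 := by
    intro j hj
    rw [hkappa j, hsgn_bad j hj]
    ring
  have Bgood : ∀ j : ℕ, 1 ≤ j → j % 2 = r → 4 * D j ≤ D j * (w j - w (j+1)) := by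
    intro j hj hjr
    rcases eq_or_lt_of_le (hDpos j) with h0 | h0
    · rw [← h0]; ring_nf; rfl
    · have hκ : 4 ≤ w j - w (j+1) := by
        rw [hsign_good j hjr]
        have := hgap2 j hj hjr h0
        have := hemono j
        linarith
      calc 4 * D j = D j * 4 := by ring
        _ ≤ D j * (w j - w (j+1)) := mul_le_mul_of_nonneg_left hκ (le_of_lt h0)
  have Bgood2 : ∀ j : ℕ, 1 ≤ j → j % 2 = r → 0 < D j → D (j-1) = 0 → D (j+1) = 0 →
      8 ≤ D j * (w j - w (j+1)) := by
    intro j hj hjr hDj ha hb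
    have hκ : 2 * D j + 6 ≤ w j - w (j+1) := by
      rw [hsign_good j hjr, hegap j hj, ha, hb]
      have := hgap2 j hj hjr hDj
      linarith
    have h1 : D j * (2 * D j + 6) ≤ D j * (w j - w (j+1)) :=
      mul_le_mul_of_nonneg_left hκ (le_of_lt hDj)
    nlinarith
  have Bbad : ∀ j : ℕ, 1 ≤ j → j % 2 ≠ r →
      (if 0 < D j then (8:ℤ) else 0) ≤ D j * (w j - w (j+1)) + 2 * D (j-1) + 2 * D (j+1) := by
    intro j hj hjr
    rcases eq_or_lt_of_le (hDpos j) with h0 | h0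
    · rw [if_neg (by rw [← h0]; exact lt_irrefl 0), ← h0]
      have := hDpos (j-1)
      have := hDpos (j+1)
      linarith
    · rw [if_pos h0]
      have hD2 : 2 ≤ D j := by
        obtain ⟨t, ht⟩ := hDeven j hj hjr
        omega
      have ha := hDpos (j-1)
      have hb := hDpos (j+1)
      have hgap := hgap1 j hj h0
      have hem := hemono j
      by_cases hcase : D (j-1) + D (j+1) ≤ 2 * D j
      · have hκ : 2 * D j - D (j-1) - D (j+1) ≤ w j - w (j+1) := by
          rw [hsign_bad j hjr, hegap j hj]
          linarith
        have h1 : D j * (2 * D j - D (j-1) - D (j+1)) ≤ D j * (w j - w (j+1)) :=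
          mul_le_mul_of_nonneg_left hκ (le_of_lt h0)
        nlinarith [mul_nonneg (by linarith : (0:ℤ) ≤ D j - 2)
          (by linarith : (0:ℤ) ≤ 2 * D j - D (j-1) - D (j+1))]
      · push_neg at hcase
        have hκ : -1 ≤ w j - w (j+1) := by
          rw [hsign_bad j hjr]
          linarith
        have h1 : D j * (-1) ≤ D j * (w j - w (j+1)) :=
          mul_le_mul_of_nonneg_left hκ (le_of_lt h0)
        linarith
  -- assembly
  set G : Finset ℕ := (Finset.Icc 1 m).filter (fun j => j % 2 = r) with hGdef
  set B : Finset ℕ := (Finset.Icc 1 m).filter (fun j => ¬ j % 2 = r) with hBdef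
  have hsplitGB : ∑ j ∈ Finset.Icc 1 m, D j * (w j - w (j+1))
      = (∑ j ∈ G, D j * (w j - w (j+1))) + ∑ j ∈ B, D j * (w j - w (j+1)) :=
    (Finset.sum_filter_add_sum_filter_not _ _ _).symm
  have hGsum : ∑ j ∈ G, 4 * D j ≤ ∑ j ∈ G, D j * (w j - w (j+1)) := by
    apply Finset.sum_le_sum
    intro j hjG
    simp only [hGdef, Finset.mem_filter, Finset.mem_Icc] at hjG
    exact Bgood j hjG.1.1 hjG.2
  have hAlloc1 : ∑ j ∈ B, D (j - 1) ≤ ∑ j ∈ G, D j := by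
    have hinj : ∀ x ∈ B, ∀ y ∈ B, x - 1 = y - 1 → x = y := by
      intro x hx y hy hxy
      simp only [hBdef, Finset.mem_filter, Finset.mem_Icc] at hx hy
      omega
    rw [← Finset.sum_image hinj]
    have hsub : B.image (fun j => j - 1) ⊆ insert 0 G := by
      intro i hi
      simp only [Finset.mem_image] at hi
      obtain ⟨j, hjB, rfl⟩ := hi
      simp only [hBdef, Finset.mem_filter, Finset.mem_Icc] at hjB
      rcases Nat.eq_or_lt_of_le hjB.1.1 with h1 | h1
      · simp [← h1]
      · apply Finset.mem_insert_of_mem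
        simp only [hGdef, Finset.mem_filter, Finset.mem_Icc]
        omega
    calc ∑ i ∈ B.image (fun j => j - 1), D i
        ≤ ∑ i ∈ insert 0 G, D i :=
          Finset.sum_le_sum_of_subset_of_nonneg hsub (fun i _ _ => hDpos i)
      _ = D 0 + ∑ i ∈ G, D i := by
          rw [Finset.sum_insert (by simp [hGdef])]
      _ = ∑ i ∈ G, D i := by rw [hD0]; ring
  have hAlloc2 : ∑ j ∈ B, D (j + 1) ≤ ∑ j ∈ G, D j := by
    have hinj : ∀ x ∈ B, ∀ y ∈ B, x + 1 = y + 1 → x = y := by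
      intro x hx y hy hxy; omega
    rw [← Finset.sum_image hinj]
    have hsub : B.image (fun j => j + 1) ⊆ insert (m+1) G := by
      intro i hi
      simp only [Finset.mem_image] at hi
      obtain ⟨j, hjB, rfl⟩ := hi
      simp only [hBdef, Finset.mem_filter, Finset.mem_Icc] at hjB
      rcases Nat.eq_or_lt_of_le hjB.1.2 with h1 | h1
      · simp [h1]
      · apply Finset.mem_insert_of_mem
        simp only [hGdef, Finset.mem_filter, Finset.mem_Icc]
        omega
    calc ∑ i ∈ B.image (fun j => j + 1), D i
        ≤ ∑ i ∈ insert (m+1) G, D i :=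
          Finset.sum_le_sum_of_subset_of_nonneg hsub (fun i _ _ => hDpos i)
      _ = D (m+1) + ∑ i ∈ G, D i := by
          rw [Finset.sum_insert (by simp [hGdef])]
      _ = ∑ i ∈ G, D i := by rw [hDtop (m+1) (by omega)]; ring
  by_cases hBex : ∃ j ∈ B, 0 < D j
  · obtain ⟨j₀, hj₀B, hj₀D⟩ := hBex
    have hle : ∀ j ∈ B, (if 0 < D j then (8:ℤ) else 0) - 2 * D (j-1) - 2 * D (j+1)
        ≤ D j * (w j - w (j+1)) := by
      intro j hjB
      simp only [hBdef, Finset.mem_filter, Finset.mem_Icc] at hjB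
      have := Bbad j hjB.1.1 hjB.2
      linarith
    have hBsum : (∑ j ∈ B, (if 0 < D j then (8:ℤ) else 0))
        - 2 * (∑ j ∈ B, D (j-1)) - 2 * (∑ j ∈ B, D (j+1))
        ≤ ∑ j ∈ B, D j * (w j - w (j+1)) := by
      calc (∑ j ∈ B, (if 0 < D j then (8:ℤ) else 0))
          - 2 * (∑ j ∈ B, D (j-1)) - 2 * (∑ j ∈ B, D (j+1))
          = ∑ j ∈ B, ((if 0 < D j then (8:ℤ) else 0) - 2 * D (j-1) - 2 * D (j+1)) := by
            rw [Finset.sum_sub_distrib, Finset.sum_sub_distrib, Finset.mul_sum,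
              Finset.mul_sum]
        _ ≤ _ := Finset.sum_le_sum hle
    have h8 : (8:ℤ) ≤ ∑ j ∈ B, (if 0 < D j then (8:ℤ) else 0) := by
      calc (8:ℤ) = (if 0 < D j₀ then (8:ℤ) else 0) := by rw [if_pos hj₀D]
        _ ≤ ∑ j ∈ B, (if 0 < D j then (8:ℤ) else 0) :=
          Finset.single_le_sum (f := fun j => (if 0 < D j then (8:ℤ) else 0))
            (fun i _ => by positivity) hj₀B
    have hGnonneg : (0:ℤ) ≤ ∑ j ∈ G, D j :=
      Finset.sum_nonneg (fun i _ => hDpos i)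
    rw [hsplitGB]
    have h4G : ∑ j ∈ G, (4:ℤ) * D j = 4 * ∑ j ∈ G, D j := by
      rw [Finset.mul_sum]
    linarith
  · push_neg at hBex
    have hBzero : ∀ j ∈ B, D j = 0 := fun j hj => le_antisymm (hBex j hj) (hDpos j)
    obtain ⟨j₀, hj₀1, hj₀m, hj₀D⟩ := hDex
    have hj₀r : j₀ % 2 = r := by
      by_contra hc
      have : j₀ ∈ B := by
        simp only [hBdef, Finset.mem_filter, Finset.mem_Icc]
        exact ⟨⟨hj₀1, hj₀m⟩, hc⟩
      rw [hBzero j₀ this] at hj₀D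
      exact lt_irrefl 0 hj₀D
    have hprev : D (j₀ - 1) = 0 := by
      rcases Nat.eq_or_lt_of_le hj₀1 with h1 | h1
      · rw [← h1]; simpa using hD0
      · apply hBzero
        simp only [hBdef, Finset.mem_filter, Finset.mem_Icc]
        omega
    have hnext : D (j₀ + 1) = 0 := by
      rcases Nat.lt_or_ge m (j₀ + 1) with h1 | h1
      · exact hDtop (j₀+1) (by omega)
      · apply hBzero
        simp only [hBdef, Finset.mem_filter, Finset.mem_Icc]
        omega
    have hterm := Bgood2 j₀ hj₀1 hj₀r hj₀D hprev hnext
    have hnonneg : ∀ j ∈ Finset.Icc 1 m, (0:ℤ) ≤ D j * (w j - w (j+1)) := by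
      intro j hj
      simp only [Finset.mem_Icc] at hj
      by_cases hjr : j % 2 = r
      · have := Bgood j hj.1 hjr
        have := hDpos j
        linarith
      · have : j ∈ B := by
          simp only [hBdef, Finset.mem_filter, Finset.mem_Icc]
          exact ⟨hj, hjr⟩
        rw [hBzero j this]
        ring_nf
        rfl
    calc (8:ℤ) ≤ D j₀ * (w j₀ - w (j₀+1)) := hterm
      _ ≤ ∑ j ∈ Finset.Icc 1 m, D j * (w j - w (j+1)) :=
        Finset.single_le_sum hnonneg (Finset.mem_Icc.mpr ⟨hj₀1, hj₀m⟩)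


variable {m : ℕ}

lemma parts_mem_bounds (x : Nat.Partition m) {p : ℕ} (hp : p ∈ x.parts) :
    1 ≤ p ∧ p ≤ m := by
  constructor
  · exact x.parts_pos hp
  · calc p ≤ x.parts.sum := Multiset.single_le_sum (fun q _ => Nat.zero_le q) p hp
      _ = m := x.parts_sum

lemma tp_antitone (x : Nat.Partition m) (i : ℕ) :
    transposePart x (i+1) ≤ transposePart x i := by
  apply Multiset.card_le_card
  apply Multiset.monotone_filter_right
  intro a ha
  omega

lemma tp_antitone' (x : Nat.Partition m) {i j : ℕ} (h : i ≤ j) :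
    transposePart x j ≤ transposePart x i :=
  antitone_nat_of_succ_le (tp_antitone x) h

lemma tp_zero (x : Nat.Partition m) {i : ℕ} (hi : m < i) :
    transposePart x i = 0 := by
  unfold transposePart
  rw [Multiset.card_eq_zero, Multiset.filter_eq_nil]
  intro a ha
  have := (parts_mem_bounds x ha).2
  omega

lemma tp_count (x : Nat.Partition m) (j : ℕ) (hj : 1 ≤ j) :
    transposePart x j = transposePart x (j+1) + Multiset.count j x.parts := by
  unfold transposePart
  rw [Multiset.count_eq_card_filter_eq]
  rw [← Multiset.card_add]
  congr 1
  have h := Multiset.filter_add_filter (p := fun p => j + 1 ≤ p) (fun p => j = p) x.parts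
  have h1 : Multiset.filter (fun a => j + 1 ≤ a ∨ j = a) x.parts
      = Multiset.filter (fun p => j ≤ p) x.parts := by
    apply Multiset.filter_congr
    intro a _
    constructor
    · intro hh; omega
    · intro hh; omega
  have h2 : Multiset.filter (fun a => (j + 1 ≤ a) ∧ j = a) x.parts = 0 := by
    rw [Multiset.filter_eq_nil]
    intro a _ hh
    omega
  rw [h1, h2, add_zero] at h
  exact h.symm

lemma tp_total (x : Nat.Partition m) :
    ∑ i ∈ Finset.Icc 1 m, transposePart x i = m := by
  conv_rhs => rw [← x.parts_sum]
  unfold transposePart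
  have hb : ∀ p ∈ x.parts, 1 ≤ p ∧ p ≤ m := fun p hp => parts_mem_bounds x hp
  revert hb
  induction x.parts using Multiset.induction with
  | empty => simp
  | cons a s ih =>
    intro hb
    have ha := hb a (Multiset.mem_cons_self a s)
    have hs : ∀ p ∈ s, 1 ≤ p ∧ p ≤ m := fun p hp => hb p (Multiset.mem_cons_of_mem hp)
    have key : ∀ i, Multiset.card (Multiset.filter (fun p => i ≤ p) (a ::ₘ s))
        = Multiset.card (Multiset.filter (fun p => i ≤ p) s) + (if i ≤ a then 1 else 0) := by
      intro i
      by_cases h : i ≤ a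
      · rw [Multiset.filter_cons_of_pos _ h, if_pos h, Multiset.card_cons]
      · rw [Multiset.filter_cons_of_neg _ h, if_neg h]
        exact (Nat.add_zero _).symm
    simp only [key, Finset.sum_add_distrib, ih hs, Multiset.sum_cons]
    have hia : ∑ i ∈ Finset.Icc 1 m, (if i ≤ a then 1 else 0) = a := by
      rw [Finset.sum_boole]
      have : (Finset.Icc 1 m).filter (fun i => i ≤ a) = Finset.Icc 1 a := by
        ext i
        simp only [Finset.mem_filter, Finset.mem_Icc]
        omega
      rw [this]
      simp [Nat.card_Icc]
    rw [hia]
    omega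

lemma alt_sum (a : ℕ) : ∑ i ∈ Finset.Icc 1 a, (-1 : ℤ)^(i+1) = if Odd a then 1 else 0 := by
  induction a with
  | zero => simp
  | succ n ih =>
    rw [Finset.sum_Icc_succ_top (by omega), ih]
    rcases Nat.even_or_odd n with h | h
    · rw [if_neg (Nat.not_odd_iff_even.mpr h), if_pos (by simpa using Even.add_one h)]
      have h2 : Even (n + 1 + 1) := by
        rcases h with ⟨t, rfl⟩
        exact ⟨t + 1, by ring⟩
      rw [h2.neg_one_pow]
      ring
    · rw [if_pos h, if_neg (by simp [Nat.not_odd_iff_even, Odd.add_one h])]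
      have h2 : Odd (n + 1 + 1) := by
        rcases h with ⟨t, rfl⟩
        exact ⟨t + 1, by ring⟩
      rw [h2.neg_one_pow]
      ring

lemma odd_count_eq (x : Nat.Partition m) :
    (Multiset.card (x.parts.filter (fun p => Odd p)) : ℤ)
      = ∑ i ∈ Finset.Icc 1 m, (-1 : ℤ)^(i+1) * (transposePart x i : ℤ) := by
  unfold transposePart
  have hb : ∀ p ∈ x.parts, 1 ≤ p ∧ p ≤ m := fun p hp => parts_mem_bounds x hp
  revert hb
  induction x.parts using Multiset.induction with
  | empty => simp
  | cons a s ih =>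
    intro hb
    have ha := hb a (Multiset.mem_cons_self a s)
    have hs : ∀ p ∈ s, 1 ≤ p ∧ p ≤ m := fun p hp => hb p (Multiset.mem_cons_of_mem hp)
    have key : ∀ i, (Multiset.card (Multiset.filter (fun p => i ≤ p) (a ::ₘ s)) : ℤ)
        = (Multiset.card (Multiset.filter (fun p => i ≤ p) s) : ℤ)
          + (if i ≤ a then 1 else 0) := by
      intro i
      by_cases h : i ≤ a
      · rw [Multiset.filter_cons_of_pos _ h, if_pos h, Multiset.card_cons]
        push_cast; ring
      · rw [Multiset.filter_cons_of_neg _ h, if_neg h]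
        ring
    have hsplit : ∑ i ∈ Finset.Icc 1 m, (-1 : ℤ)^(i+1)
          * ((Multiset.card (Multiset.filter (fun p => i ≤ p) s) : ℤ)
            + (if i ≤ a then 1 else 0))
        = (∑ i ∈ Finset.Icc 1 m, (-1 : ℤ)^(i+1)
            * (Multiset.card (Multiset.filter (fun p => i ≤ p) s) : ℤ))
          + ∑ i ∈ Finset.Icc 1 m, (-1 : ℤ)^(i+1) * (if i ≤ a then 1 else 0) := by
      rw [← Finset.sum_add_distrib]
      apply Finset.sum_congr rfl
      intro i _
      ring
    simp only [key]
    rw [hsplit, ← ih hs]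
    have halt : ∑ i ∈ Finset.Icc 1 m, (-1 : ℤ)^(i+1) * (if i ≤ a then 1 else 0)
        = if Odd a then 1 else 0 := by
      have h1 : ∀ i ∈ Finset.Icc 1 m, (-1 : ℤ)^(i+1) * (if i ≤ a then 1 else 0)
          = if i ≤ a then (-1 : ℤ)^(i+1) else 0 := by
        intro i _
        split <;> ring
      rw [Finset.sum_congr rfl h1, ← Finset.sum_filter]
      have h2 : (Finset.Icc 1 m).filter (fun i => i ≤ a) = Finset.Icc 1 a := by
        ext i
        simp only [Finset.mem_filter, Finset.mem_Icc]
        omega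
      rw [h2, alt_sum]
    rw [halt]
    by_cases h : Odd a
    · rw [Multiset.filter_cons_of_pos _ h, if_pos h, Multiset.card_cons]
      push_cast; ring
    · rw [Multiset.filter_cons_of_neg _ h, if_neg h]
      ring


lemma listA : ∀ (l : List ℕ) (j i : ℕ),
    (l.take j).sum ≤ j * i + (l.map (fun p => p - i)).sum := by
  intro l
  induction l with
  | nil => intro j i; simp
  | cons a l ih =>
    intro j i
    cases j with
    | zero => simp
    | succ j =>
      simp only [List.take_succ_cons, List.sum_cons, List.map_cons]
      have h1 := ih j i
      have h2 : a ≤ i + (a - i) := by omega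
      calc a + (l.take j).sum
          ≤ (i + (a - i)) + (j * i + (l.map (fun p => p - i)).sum) := by omega
        _ = (j+1) * i + ((a - i) + (l.map (fun p => p - i)).sum) := by ring

lemma listB : ∀ (l : List ℕ), l.Pairwise (· ≥ ·) → ∀ i : ℕ,
    (l.map (fun p => p - i)).sum + (l.countP (fun p => decide (i < p))) * i
      = (l.take (l.countP (fun p => decide (i < p)))).sum := by
  intro l
  induction l with
  | nil => intro _ i; simp
  | cons a l ih =>
    intro hs i
    rw [List.pairwise_cons] at hs
    by_cases h : i < a
    · rw [List.countP_cons_of_pos (by simpa using h)]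
      simp only [List.map_cons, List.sum_cons, List.take_succ_cons]
      have hih := ih hs.2 i
      have h2 : a - i + i = a := by omega
      have h3 : (l.countP (fun p => decide (i < p)) + 1) * i
          = l.countP (fun p => decide (i < p)) * i + i := by ring
      rw [h3]
      omega
    · have hple : ∀ b ∈ a :: l, b ≤ i := by
        intro b hb
        rcases List.mem_cons.mp hb with rfl | hb'
        · omega
        · exact le_trans (hs.1 b hb') (by omega)
      have hcount : (a :: l).countP (fun p => decide (i < p)) = 0 := by
        rw [List.countP_eq_zero]
        intro b hb
        simpa using Nat.not_lt.mpr (hple b hb)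
      rw [hcount]
      simp only [List.take_zero, List.sum_nil, Nat.zero_mul, Nat.add_zero]
      apply List.sum_eq_zero
      intro x hx
      rw [List.mem_map] at hx
      obtain ⟨p, hp, rfl⟩ := hx
      have := hple p hp
      omega

lemma map_sum_sort (s : Multiset ℕ) (g : ℕ → ℕ) :
    ((Multiset.sort s (· ≥ ·)).map g).sum = (s.map g).sum := by
  conv_rhs => rw [← Multiset.sort_eq s (· ≥ ·)]
  rfl

lemma Rmono (f d : Nat.Partition m)
    (hdom : ∀ j : ℕ, ((Multiset.sort f.parts (· ≥ ·)).take j).sum ≤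
      ((Multiset.sort d.parts (· ≥ ·)).take j).sum) (i : ℕ) :
    (f.parts.map (fun p => p - i)).sum ≤ (d.parts.map (fun p => p - i)).sum := by
  set lf := Multiset.sort f.parts (· ≥ ·) with hlf
  set ld := Multiset.sort d.parts (· ≥ ·) with hld
  set k := lf.countP (fun p => decide (i < p)) with hk
  have h1 : (lf.map (fun p => p - i)).sum + k * i = (lf.take k).sum :=
    listB lf (Multiset.pairwise_sort _ _) i
  have h2 : (lf.take k).sum ≤ (ld.take k).sum := hdom k
  have h3 : (ld.take k).sum ≤ k * i + (ld.map (fun p => p - i)).sum := listA ld k i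
  have h4 : (lf.map (fun p => p - i)).sum + k * i
      ≤ (ld.map (fun p => p - i)).sum + k * i := by omega
  have h5 := Nat.le_of_add_le_add_right h4
  rw [map_sum_sort, map_sum_sort] at h5
  exact h5

lemma tp_tail (x : Nat.Partition m) (i : ℕ) :
    ∑ l ∈ Finset.Icc (i+1) m, transposePart x l = (x.parts.map (fun p => p - i)).sum := by
  unfold transposePart
  have hb : ∀ p ∈ x.parts, 1 ≤ p ∧ p ≤ m := fun p hp => parts_mem_bounds x hp
  revert hb
  induction x.parts using Multiset.induction with
  | empty => simp
  | cons a s ih =>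
    intro hb
    have ha := hb a (Multiset.mem_cons_self a s)
    have hs : ∀ p ∈ s, 1 ≤ p ∧ p ≤ m := fun p hp => hb p (Multiset.mem_cons_of_mem hp)
    have key : ∀ l, Multiset.card (Multiset.filter (fun p => l ≤ p) (a ::ₘ s))
        = Multiset.card (Multiset.filter (fun p => l ≤ p) s) + (if l ≤ a then 1 else 0) := by
      intro l
      by_cases h : l ≤ a
      · rw [Multiset.filter_cons_of_pos _ h, if_pos h, Multiset.card_cons]
      · rw [Multiset.filter_cons_of_neg _ h, if_neg h]
        exact (Nat.add_zero _).symm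
    simp only [key, Finset.sum_add_distrib, ih hs, Multiset.map_cons, Multiset.sum_cons]
    have hia : ∑ l ∈ Finset.Icc (i+1) m, (if l ≤ a then 1 else 0) = a - i := by
      rw [Finset.sum_boole]
      have : (Finset.Icc (i+1) m).filter (fun l => l ≤ a) = Finset.Icc (i+1) a := by
        ext l
        simp only [Finset.mem_filter, Finset.mem_Icc]
        omega
      rw [this]
      simp [Nat.card_Icc]
    rw [hia]
    omega

lemma tp_prefix (f d : Nat.Partition m)
    (hdom : ∀ j : ℕ, ((Multiset.sort f.parts (· ≥ ·)).take j).sum ≤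
      ((Multiset.sort d.parts (· ≥ ·)).take j).sum) (J : ℕ) (hJ : J ≤ m) :
    ∑ l ∈ Finset.Icc 1 J, transposePart d l ≤ ∑ l ∈ Finset.Icc 1 J, transposePart f l := by
  have hsplit : ∀ (x : Nat.Partition m),
      (∑ l ∈ Finset.Icc 1 J, transposePart x l)
        + ∑ l ∈ Finset.Icc (J+1) m, transposePart x l = m := by
    intro x
    have h1 : Finset.Icc 1 J = Finset.Ioc 0 J := by
      ext l; simp [Finset.mem_Icc, Finset.mem_Ioc]; omega
    have h2 : Finset.Icc (J+1) m = Finset.Ioc J m := by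
      ext l; simp [Finset.mem_Icc, Finset.mem_Ioc]
    have h3 : Finset.Icc 1 m = Finset.Ioc 0 m := by
      ext l; simp [Finset.mem_Icc, Finset.mem_Ioc]; omega
    rw [h1, h2, Finset.sum_Ioc_consecutive _ (by omega) hJ, ← h3, tp_total]
  have hd := hsplit d
  have hf := hsplit f
  have htail : ∑ l ∈ Finset.Icc (J+1) m, transposePart f l
      ≤ ∑ l ∈ Finset.Icc (J+1) m, transposePart d l := by
    rw [tp_tail, tp_tail]
    exact Rmono f d hdom J
  omega

lemma tp_ne (f d : Nat.Partition m) (hne : f ≠ d) :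
    ∃ i, 1 ≤ i ∧ i ≤ m ∧ transposePart d i ≠ transposePart f i := by
  by_contra h
  push_neg at h
  apply hne
  have hcount : ∀ j, Multiset.count j f.parts = Multiset.count j d.parts := by
    intro j
    rcases Nat.eq_zero_or_pos j with rfl | hj1
    · rw [Multiset.count_eq_zero_of_notMem, Multiset.count_eq_zero_of_notMem]
      · intro hmem; exact absurd (parts_mem_bounds d hmem).1 (by omega)
      · intro hmem; exact absurd (parts_mem_bounds f hmem).1 (by omega)
    · rcases Nat.lt_or_ge m j with hj2 | hj2
      · rw [Multiset.count_eq_zero_of_notMem, Multiset.count_eq_zero_of_notMem]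
        · intro hmem; exact absurd (parts_mem_bounds d hmem).2 (by omega)
        · intro hmem; exact absurd (parts_mem_bounds f hmem).2 (by omega)
      · have hcf := tp_count f j hj1
        have hcd := tp_count d j hj1
        have hj := h j hj1 hj2
        rcases Nat.lt_or_ge j m with hjm | hjm
        · have hj' := h (j+1) (by omega) (by omega)
          omega
        · have hj' : j = m := by omega
          have hzf : transposePart f (j+1) = 0 := tp_zero f (by omega)
          have hzd : transposePart d (j+1) = 0 := tp_zero d (by omega)
          omega
  ext1
  exact Multiset.ext.mpr hcount

lemma tp_full (d : Nat.Partition m)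
    (hfull : ∀ j : ℕ, 1 ≤ j → j ≤ d.parts.sup → j ∈ d.parts) :
    ∀ j, 1 ≤ j → 0 < transposePart d (j+1) → transposePart d (j+1) < transposePart d j := by
  intro j hj hpos
  have hx : ∃ p ∈ d.parts, j + 1 ≤ p := by
    by_contra hc
    push_neg at hc
    have : Multiset.filter (fun p => j + 1 ≤ p) d.parts = 0 := by
      rw [Multiset.filter_eq_nil]
      intro a ha
      exact Nat.not_le.mpr (hc a ha)
    unfold transposePart at hpos
    rw [this] at hpos
    simp at hpos
  obtain ⟨p, hp, hple⟩ := hx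
  have hsup : j ≤ d.parts.sup := le_trans (by omega) (Multiset.le_sup hp)
  have hmem := hfull j hj hsup
  have hcount : 0 < Multiset.count j d.parts := Multiset.count_pos.mpr hmem
  have := tp_count d j hj
  omega


end KP

/-- If an `ε`-admissible partition `d` of `m` has full members, then every `ε`-admissible
partition `f` of `m` with `f < d` in the dominance order satisfies
`dim_ε(d) - dim_ε(f) ≥ 4`: the singular locus of the closure of the nilpotent orbit of
Jordan type `d` has codimension at least `4`. -/
theorem fullMembers_codim_ge_four {m : ℕ} (hm : 0 < m) (ε : ℤ) (hε : ε = 1 ∨ ε = -1)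
    (d : Nat.Partition m) (hd : EpsAdmissible ε d) (hfull : FullMembers d) :
    ∀ f : Nat.Partition m, EpsAdmissible ε f → DominanceLE f d → f ≠ d →
      4 ≤ epsDim ε d - epsDim ε f := by
  intro f hf hdomle hne
  set c : ℕ → ℤ := fun i => (transposePart d i : ℤ) with hc
  set e : ℕ → ℤ := fun i => (transposePart f i : ℤ) with he
  have he0 : ∀ i, 0 ≤ e i := fun i => Int.natCast_nonneg _
  have hcmono : ∀ i, c (i+1) ≤ c i := fun i => by
    simp only [hc]; exact_mod_cast KP.tp_antitone d i
  have hemono : ∀ i, e (i+1) ≤ e i := fun i => by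
    simp only [he]; exact_mod_cast KP.tp_antitone f i
  have hczero : ∀ i, m < i → c i = 0 := fun i hi => by
    simp only [hc, KP.tp_zero d hi, Nat.cast_zero]
  have hezero : ∀ i, m < i → e i = 0 := fun i hi => by
    simp only [he, KP.tp_zero f hi, Nat.cast_zero]
  have htot : ∑ i ∈ Finset.Icc 1 m, e i = ∑ i ∈ Finset.Icc 1 m, c i := by
    simp only [hc, he]
    rw [← Nat.cast_sum, ← Nat.cast_sum, KP.tp_total f, KP.tp_total d]
  have hdom : ∀ j, j ≤ m →
      ∑ i ∈ Finset.Icc 1 j, c i ≤ ∑ i ∈ Finset.Icc 1 j, e i := by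
    intro j hj
    simp only [hc, he]
    rw [← Nat.cast_sum, ← Nat.cast_sum]
    exact_mod_cast KP.tp_prefix f d hdomle j hj
  have hne' : ∃ i, 1 ≤ i ∧ i ≤ m ∧ c i ≠ e i := by
    obtain ⟨i, h1, h2, h3⟩ := KP.tp_ne f d hne
    refine ⟨i, h1, h2, fun hcon => h3 ?_⟩
    simp only [hc, he] at hcon
    exact_mod_cast hcon
  have hfull' : ∀ j, 1 ≤ j → 0 < c (j+1) → c (j+1) < c j := by
    intro j hj hpos
    simp only [hc] at hpos ⊢
    exact_mod_cast KP.tp_full d hfull j hj (by exact_mod_cast hpos)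
  have hcount_eq : ∀ (x : Nat.Partition m) (p : ℕ), 1 ≤ p →
      (transposePart x p : ℤ) - (transposePart x (p+1) : ℤ)
        = (Multiset.count p x.parts : ℤ) := by
    intro x p hp
    rw [KP.tp_count x p hp]
    push_cast
    ring
  have hparc : ∀ p : ℕ, 1 ≤ p → ((ε = 1 ∧ Even p) ∨ (ε = -1 ∧ Odd p)) →
      Even (c p - c (p+1)) := by
    intro p hp hcond
    simp only [hc]
    rw [hcount_eq d p hp]
    exact (Int.even_coe_nat _).mpr (hd p hcond)
  have hpare : ∀ p : ℕ, 1 ≤ p → ((ε = 1 ∧ Even p) ∨ (ε = -1 ∧ Odd p)) →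
      Even (e p - e (p+1)) := by
    intro p hp hcond
    simp only [he]
    rw [hcount_eq f p hp]
    exact (Int.even_coe_nat _).mpr (hf p hcond)
  have hcore := KP.core m ε hε c e he0 hcmono hemono hczero hezero htot hdom hne'
    hfull' hparc hpare
  -- rewrite the alternating sum via odd counts
  have hoddf : (oddCount f : ℤ) = ∑ i ∈ Finset.Icc 1 m, (-1 : ℤ)^(i+1) * e i := by
    simp only [he]
    exact KP.odd_count_eq f
  have hoddd : (oddCount d : ℤ) = ∑ i ∈ Finset.Icc 1 m, (-1 : ℤ)^(i+1) * c i := by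
    simp only [hc]
    exact KP.odd_count_eq d
  have hsub : ∑ i ∈ Finset.Icc 1 m, (-1 : ℤ)^(i+1) * (e i - c i)
      = (∑ i ∈ Finset.Icc 1 m, (-1 : ℤ)^(i+1) * e i)
        - ∑ i ∈ Finset.Icc 1 m, (-1 : ℤ)^(i+1) * c i := by
    rw [← Finset.sum_sub_distrib]
    apply Finset.sum_congr rfl
    intro i _
    ring
  have hZ : 8 ≤ (∑ i ∈ Finset.Icc 1 m, (e i ^ 2 - c i ^ 2))
      - ε * ((oddCount f : ℤ) - (oddCount d : ℤ)) := by
    rw [hoddf, hoddd, ← hsub]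
    exact hcore
  have hsq : ∑ i ∈ Finset.Icc 1 m, (e i ^ 2 - c i ^ 2)
      = (∑ i ∈ Finset.Icc 1 m, e i ^ 2) - ∑ i ∈ Finset.Icc 1 m, c i ^ 2 :=
    Finset.sum_sub_distrib _ _
  rw [hsq] at hZ
  have hQ : (8 : ℚ) ≤ ((∑ i ∈ Finset.Icc 1 m, (transposePart f i : ℚ) ^ 2)
      - ∑ i ∈ Finset.Icc 1 m, (transposePart d i : ℚ) ^ 2)
      - (ε : ℚ) * ((oddCount f : ℚ) - (oddCount d : ℚ)) := by
    have h8 : ((8 : ℤ) : ℚ) ≤ ((((∑ i ∈ Finset.Icc 1 m, e i ^ 2)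
        - ∑ i ∈ Finset.Icc 1 m, c i ^ 2)
        - ε * ((oddCount f : ℤ) - (oddCount d : ℤ)) : ℤ) : ℚ) := by
      exact_mod_cast hZ
    push_cast [hc, he] at h8
    convert h8 using 2 <;> norm_num
  unfold epsDim
  linarith
end

section
/- Let ε ∈ {1, -1} and let d be an ε-admissible partition of m that does not have full members. Then there exists an ε-admissible partition f of m with f < d in the dominance order and dim_ε(d) - dim_ε(f) = 2. (Geometrically: the singular locus of the closure of the nilpotent orbit of Jordan type d has codimension exactly 2.) -/
section CodimHelpers

lemma list_sum_le' (c : ℕ) : ∀ t : List ℕ, t.sum ≤ t.length * c + (t.map (· - c)).sum := by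
  intro t
  induction t with
  | nil => simp
  | cons a t ih =>
    simp only [List.sum_cons, List.length_cons, List.map_cons, Nat.succ_mul]
    omega

lemma list_sum_eq' (c : ℕ) : ∀ t : List ℕ, (∀ p ∈ t, c ≤ p) →
    t.sum = t.length * c + (t.map (· - c)).sum := by
  intro t
  induction t with
  | nil => simp
  | cons a t ih =>
    intro h
    have ha := h a (by simp)
    have := ih (fun p hp => h p (by simp [hp]))
    simp only [List.sum_cons, List.length_cons, List.map_cons, Nat.succ_mul]
    omega

lemma map_sum_sort' (s : Multiset ℕ) (f : ℕ → ℕ) :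
    ((Multiset.sort s (· ≥ ·)).map f).sum = (s.map f).sum := by
  conv_rhs => rw [← Multiset.sort_eq (s := s) (r := (· ≥ ·))]
  rfl

lemma topSum_le' (s : Multiset ℕ) (j c : ℕ) :
    ((Multiset.sort s (· ≥ ·)).take j).sum ≤ j * c + (s.map (· - c)).sum := by
  set l := Multiset.sort s (· ≥ ·) with hl
  have h1 := list_sum_le' c (l.take j)
  have h2 : (l.take j).length ≤ j := by simp
  have h3 : ((l.take j).map (· - c)).sum ≤ (l.map (· - c)).sum := by
    conv_rhs => rw [← List.take_append_drop j l]
    rw [List.map_append, List.sum_append]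
    omega
  rw [map_sum_sort' s (· - c)] at h3
  have h5 : (l.take j).length * c ≤ j * c := Nat.mul_le_mul_right c h2
  omega

lemma topSum_exists' (s : Multiset ℕ) (j : ℕ) :
    ∃ c, ((Multiset.sort s (· ≥ ·)).take j).sum = j * c + (s.map (· - c)).sum := by
  set l := Multiset.sort s (· ≥ ·) with hl
  by_cases hj : l.length ≤ j
  · refine ⟨0, ?_⟩
    rw [List.take_of_length_le hj]
    have := map_sum_sort' s id
    simp only [List.map_id, Multiset.map_id] at this
    simpa using this
  · push_neg at hj
    refine ⟨l[j], ?_⟩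
    set c := l[j] with hc
    have hsorted : List.Pairwise (· ≥ ·) l := Multiset.pairwise_sort (s := s) (r := (· ≥ ·))
    have hpw := List.pairwise_iff_get.mp hsorted
    have htake : ∀ p ∈ l.take j, c ≤ p := by
      intro p hp
      rw [List.mem_take_iff_getElem] at hp
      obtain ⟨i, hi, rfl⟩ := hp
      exact hpw ⟨i, by omega⟩ ⟨j, hj⟩ (by simpa using (by omega : i < j))
    have hdrop : ∀ p ∈ l.drop j, p ≤ c := by
      intro p hp
      rw [List.mem_iff_getElem] at hp
      obtain ⟨i, hi, rfl⟩ := hp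
      rw [List.length_drop] at hi
      rw [List.getElem_drop]
      rcases Nat.eq_zero_or_pos i with h0 | h0
      · subst h0; simp [hc]
      · exact hpw ⟨j, hj⟩ ⟨j + i, by simpa using (by omega : j + i < l.length)⟩
          (by simpa using (by omega : j < j + i))
    have hdrop0 : ((l.drop j).map (· - c)).sum = 0 := by
      rw [List.sum_eq_zero]
      intro x hx
      rw [List.mem_map] at hx
      obtain ⟨p, hp, rfl⟩ := hx
      have := hdrop p hp
      omega
    have hsplit : (s.map (· - c)).sum = ((l.take j).map (· - c)).sum := by
      rw [← map_sum_sort' s (· - c), ← hl]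
      conv_lhs => rw [← List.take_append_drop j l]
      rw [List.map_append, List.sum_append, hdrop0]
      omega
    have hlen : (l.take j).length = j := List.length_take_of_le (by omega)
    have h := list_sum_eq' c (l.take j) htake
    rw [hlen] at h
    rw [hsplit]
    exact h

lemma icc_filter_le' (k a : ℕ) :
    (Finset.Icc 1 k).filter (fun i => i ≤ a) = Finset.Icc 1 (min a k) := by
  ext i
  simp only [Finset.mem_filter, Finset.mem_Icc]
  omega

lemma icc_sum_countP' (k : ℕ) (B : Multiset ℕ) :
    ∑ i ∈ Finset.Icc 1 k, Multiset.countP (i ≤ ·) B = (B.map (fun q => min q k)).sum := by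
  induction B using Multiset.induction_on with
  | empty => simp
  | cons a B ih =>
    simp only [Multiset.countP_cons, Multiset.map_cons, Multiset.sum_cons,
      Finset.sum_add_distrib, ih]
    rw [Finset.sum_boole, icc_filter_le', Nat.card_Icc, Nat.cast_id, Nat.min_def]
    split_ifs <;> omega

lemma icc_sum_countP_mul' (m : ℕ) (B : Multiset ℕ) :
    ∀ (A : Multiset ℕ), (∀ p ∈ A, p ≤ m) →
    ∑ i ∈ Finset.Icc 1 m, (Multiset.countP (i ≤ ·) A) * (Multiset.countP (i ≤ ·) B)
      = (A.map (fun p => (B.map (fun q => min q p)).sum)).sum := by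
  intro A
  induction A using Multiset.induction_on with
  | empty => simp
  | cons a A ih =>
    intro h
    have ha : a ≤ m := h a (by simp)
    have claim : ∑ i ∈ Finset.Icc 1 m, (if i ≤ a then 1 else 0) * Multiset.countP (i ≤ ·) B
        = (B.map (fun q => min q a)).sum := by
      have : ∀ i, (if i ≤ a then 1 else 0) * Multiset.countP (i ≤ ·) B
          = if i ≤ a then Multiset.countP (i ≤ ·) B else 0 := by
        intro i; split_ifs <;> simp
      rw [Finset.sum_congr rfl (fun i _ => this i), ← Finset.sum_filter, icc_filter_le',
        min_eq_left ha, icc_sum_countP']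
    calc ∑ i ∈ Finset.Icc 1 m, (Multiset.countP (i ≤ ·) (a ::ₘ A)) * (Multiset.countP (i ≤ ·) B)
        = ∑ i ∈ Finset.Icc 1 m, ((Multiset.countP (i ≤ ·) A) * (Multiset.countP (i ≤ ·) B)
            + (if i ≤ a then 1 else 0) * Multiset.countP (i ≤ ·) B) := by
          refine Finset.sum_congr rfl fun i _ => ?_
          rw [Multiset.countP_cons, add_mul]
      _ = (A.map (fun p => (B.map (fun q => min q p)).sum)).sum
            + (B.map (fun q => min q a)).sum := by
          rw [Finset.sum_add_distrib, ih (fun p hp => h p (by simp [hp])), claim]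
      _ = ((a ::ₘ A).map (fun p => (B.map (fun q => min q p)).sum)).sum := by
          simp [Multiset.map_cons, Multiset.sum_cons]; omega

lemma countP_singleton' (p : ℕ → Prop) [DecidablePred p] (a : ℕ) :
    Multiset.countP p ({a} : Multiset ℕ) = if p a then 1 else 0 := by
  rw [show ({a} : Multiset ℕ) = a ::ₘ 0 from rfl, Multiset.countP_cons, Multiset.countP_zero]
  omega

lemma pair_le' {s : Multiset ℕ} {x y : ℕ} (h : x ≠ y) (hx : x ∈ s) (hy : y ∈ s) :
    x ::ₘ {y} ≤ s := by
  rw [Multiset.le_iff_count]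
  intro a
  rcases eq_or_ne a x with rfl | hax
  · have := Multiset.count_pos.mpr hx
    simp [Multiset.count_cons, Multiset.count_singleton, h]
    omega
  · rcases eq_or_ne a y with rfl | hay
    · have := Multiset.count_pos.mpr hy
      simp [Multiset.count_cons, Multiset.count_singleton, hax]
      omega
    · simp [Multiset.count_cons, Multiset.count_singleton, hax, hay]

lemma two_le' {s : Multiset ℕ} {x : ℕ} (hx : 2 ≤ Multiset.count x s) : x ::ₘ {x} ≤ s := by
  rw [Multiset.le_iff_count]
  intro a
  rcases eq_or_ne a x with rfl | hax
  · simp [Multiset.count_cons, Multiset.count_singleton]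
    omega
  · simp [Multiset.count_cons, Multiset.count_singleton, hax]

lemma one_two_le' {s : Multiset ℕ} {x y : ℕ} (h : x ≠ y) (hx : x ∈ s)
    (hy : 2 ≤ Multiset.count y s) : x ::ₘ y ::ₘ {y} ≤ s := by
  rw [Multiset.le_iff_count]
  intro a
  rcases eq_or_ne a x with rfl | hax
  · have := Multiset.count_pos.mpr hx
    simp [Multiset.count_cons, Multiset.count_singleton, h]
    omega
  · rcases eq_or_ne a y with rfl | hay
    · simp [Multiset.count_cons, Multiset.count_singleton, hax]
      omega
    · simp [Multiset.count_cons, Multiset.count_singleton, hax, hay]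

lemma two_one_le' {s : Multiset ℕ} {x y : ℕ} (h : x ≠ y) (hx : 2 ≤ Multiset.count x s)
    (hy : y ∈ s) : x ::ₘ x ::ₘ {y} ≤ s := by
  rw [Multiset.le_iff_count]
  intro a
  rcases eq_or_ne a x with rfl | hax
  · simp [Multiset.count_cons, Multiset.count_singleton, h]
    omega
  · rcases eq_or_ne a y with rfl | hay
    · have := Multiset.count_pos.mpr hy
      simp [Multiset.count_cons, Multiset.count_singleton, hax]
      omega
    · simp [Multiset.count_cons, Multiset.count_singleton, hax, hay]

lemma two_two_le' {s : Multiset ℕ} {x y : ℕ} (h : x ≠ y) (hx : 2 ≤ Multiset.count x s)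
    (hy : 2 ≤ Multiset.count y s) : x ::ₘ x ::ₘ y ::ₘ {y} ≤ s := by
  rw [Multiset.le_iff_count]
  intro a
  rcases eq_or_ne a x with rfl | hax
  · simp [Multiset.count_cons, Multiset.count_singleton, h]
    omega
  · rcases eq_or_ne a y with rfl | hay
    · simp [Multiset.count_cons, Multiset.count_singleton, hax]
      omega
    · simp [Multiset.count_cons, Multiset.count_singleton, hax, hay]

set_option maxHeartbeats 1000000 in
lemma master_move {m : ℕ} (ε : ℤ) (d : Nat.Partition m)
    (hd : EpsAdmissible ε d) (R A : Multiset ℕ) (r : ℕ)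
    (hR : R ≤ d.parts)
    (hA0 : ∀ p ∈ A, 0 < p)
    (hAm : ∀ p ∈ A, p ≤ m) (hRm : ∀ p ∈ R, p ≤ m)
    (hsum : A.sum = R.sum)
    (hadm : ∀ p : ℕ, ((ε = 1 ∧ Even p) ∨ (ε = -1 ∧ Odd p)) →
        Even (Multiset.count p R + Multiset.count p A))
    (hdom : ∀ c : ℕ, (A.map (· - c)).sum ≤ (R.map (· - c)).sum)
    (hne : ∃ p : ℕ, Multiset.count p A ≠ Multiset.count p R)
    (ht : ∀ i, 1 ≤ i → i ≤ m →
      Multiset.countP (i ≤ ·) A ≠ Multiset.countP (i ≤ ·) R → transposePart d i = r)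
    (hdim : ((A.map (fun p => (A.map (fun q => min q p)).sum)).sum : ℤ)
        - 2 * ((A.map (fun p => (R.map (fun q => min q p)).sum)).sum : ℤ)
        + ((R.map (fun p => (R.map (fun q => min q p)).sum)).sum : ℤ)
        - ε * ((Multiset.countP Odd A : ℤ) - (Multiset.countP Odd R : ℤ)) = 4) :
    ∃ f : Nat.Partition m, EpsAdmissible ε f ∧ DominanceLE f d ∧ f ≠ d ∧
      epsDim ε d - epsDim ε f = 2 := by
  classical
  have hsubadd : d.parts - R + R = d.parts := tsub_add_cancel_of_le hR
  set P : Multiset ℕ := d.parts - R + A with hP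
  have hPsum : P.sum = m := by
    have h1 : (d.parts - R).sum + R.sum = d.parts.sum := by
      rw [← Multiset.sum_add, hsubadd]
    have h2 : P.sum = (d.parts - R).sum + A.sum := by
      rw [hP, Multiset.sum_add]
    have h3 := d.parts_sum
    omega
  have hPpos : ∀ {p : ℕ}, p ∈ P → 0 < p := by
    intro p hp
    rw [hP, Multiset.mem_add] at hp
    rcases hp with hp | hp
    · exact d.parts_pos (Multiset.mem_of_le (tsub_le_self) hp)
    · exact hA0 p hp
  set f : Nat.Partition m := ⟨P, hPpos, hPsum⟩ with hf
  have hcount : ∀ p : ℕ, Multiset.count p P + Multiset.count p R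
      = Multiset.count p d.parts + Multiset.count p A := by
    intro p
    have h1 : Multiset.count p (d.parts - R) + Multiset.count p R
        = Multiset.count p d.parts := by rw [← Multiset.count_add, hsubadd]
    rw [hP, Multiset.count_add]
    omega
  have hcountP : ∀ (q : ℕ → Prop) [DecidablePred q],
      Multiset.countP q P + Multiset.countP q R
      = Multiset.countP q d.parts + Multiset.countP q A := by
    intro q _
    have h1 : Multiset.countP q (d.parts - R) + Multiset.countP q R
        = Multiset.countP q d.parts := by rw [← Multiset.countP_add, hsubadd]
    rw [hP, Multiset.countP_add]
    omega
  refine ⟨f, ?_, ?_, ?_, ?_⟩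
  · intro p hp
    have h1 := hd p hp
    have h2 := hadm p hp
    have h3 := hcount p
    have h4 : Multiset.count p R ≤ Multiset.count p d.parts := Multiset.count_le_of_le p hR
    rw [Nat.even_iff] at h1 h2 ⊢
    show Multiset.count p P % 2 = 0
    omega
  · intro j
    obtain ⟨c, hc⟩ := topSum_exists' d.parts j
    rw [hc]
    refine le_trans (topSum_le' P j c) ?_
    have h1 : (P.map (· - c)).sum = ((d.parts - R).map (· - c)).sum + (A.map (· - c)).sum := by
      rw [hP, Multiset.map_add, Multiset.sum_add]
    have h2 : ((d.parts - R).map (· - c)).sum + (R.map (· - c)).sum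
        = (d.parts.map (· - c)).sum := by rw [← Multiset.sum_add, ← Multiset.map_add, hsubadd]
    have h3 := hdom c
    omega
  · intro heq
    obtain ⟨p, hp⟩ := hne
    apply hp
    have hparts : P = d.parts := congrArg Nat.Partition.parts heq
    have h1 := hcount p
    have h2 : Multiset.count p R ≤ Multiset.count p d.parts := Multiset.count_le_of_le p hR
    rw [hparts] at h1
    omega
  · have htf : ∀ i : ℕ, transposePart f i + Multiset.countP (i ≤ ·) R
        = transposePart d i + Multiset.countP (i ≤ ·) A := by
      intro i
      have := hcountP (fun p => i ≤ p)
      simpa [transposePart, Multiset.countP_eq_card_filter] using this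
    have hodd : oddCount f + Multiset.countP Odd R
        = oddCount d + Multiset.countP Odd A := by
      have := hcountP (fun p => Odd p)
      simpa [oddCount, Multiset.countP_eq_card_filter] using this
    set cA : ℕ → ℕ := fun i => Multiset.countP (i ≤ ·) A with hcA
    set cR : ℕ → ℕ := fun i => Multiset.countP (i ≤ ·) R with hcR
    set nAA : ℕ := (A.map (fun p => (A.map (fun q => min q p)).sum)).sum with hnAA
    set nAR : ℕ := (A.map (fun p => (R.map (fun q => min q p)).sum)).sum with hnAR
    set nRR : ℕ := (R.map (fun p => (R.map (fun q => min q p)).sum)).sum with hnRR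
    set noA : ℕ := Multiset.countP Odd A with hnoA
    set noR : ℕ := Multiset.countP Odd R with hnoR
    have key : ∀ i ∈ Finset.Icc 1 m, (transposePart f i : ℚ) ^ 2
        = (transposePart d i : ℚ) ^ 2 + (2 * r) * (cA i) - (2 * r) * (cR i)
          + (cA i) * (cA i) - 2 * ((cA i) * (cR i)) + (cR i) * (cR i) := by
      intro i hi
      rw [Finset.mem_Icc] at hi
      have e1 : (transposePart f i : ℚ) = (transposePart d i : ℚ) + cA i - cR i := by
        have h : (transposePart f i : ℚ) + cR i = transposePart d i + cA i := by
          exact_mod_cast htf i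
        linarith
      rcases eq_or_ne (cA i) (cR i) with he | he
      · rw [e1, he]; ring
      · have e2 : transposePart d i = r := ht i hi.1 hi.2 he
        rw [e1, e2]; ring
    have S1 : ∑ i ∈ Finset.Icc 1 m, (transposePart f i : ℚ) ^ 2
        = ∑ i ∈ Finset.Icc 1 m, (transposePart d i : ℚ) ^ 2
          + (2 * r) * (∑ i ∈ Finset.Icc 1 m, (cA i : ℚ))
          - (2 * r) * (∑ i ∈ Finset.Icc 1 m, (cR i : ℚ))
          + (∑ i ∈ Finset.Icc 1 m, ((cA i : ℚ) * (cA i)))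
          - 2 * (∑ i ∈ Finset.Icc 1 m, ((cA i : ℚ) * (cR i)))
          + (∑ i ∈ Finset.Icc 1 m, ((cR i : ℚ) * (cR i))) := by
      rw [Finset.sum_congr rfl key]
      simp only [Finset.sum_add_distrib, Finset.sum_sub_distrib, ← Finset.mul_sum]
    have hminA : (A.map (fun q => min q m)).sum = A.sum := by
      rw [Multiset.map_congr rfl (fun q hq => min_eq_left (hAm q hq)), Multiset.map_id']
    have hminR : (R.map (fun q => min q m)).sum = R.sum := by
      rw [Multiset.map_congr rfl (fun q hq => min_eq_left (hRm q hq)), Multiset.map_id']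
    have hsA : ∑ i ∈ Finset.Icc 1 m, (cA i : ℚ) = (A.sum : ℚ) := by
      exact_mod_cast (icc_sum_countP' m A).trans hminA
    have hsR : ∑ i ∈ Finset.Icc 1 m, (cR i : ℚ) = (R.sum : ℚ) := by
      exact_mod_cast (icc_sum_countP' m R).trans hminR
    have hAA : ∑ i ∈ Finset.Icc 1 m, ((cA i : ℚ) * (cA i)) = (nAA : ℚ) := by
      rw [hnAA, ← icc_sum_countP_mul' m A A hAm]
      push_cast
      rfl
    have hAR : ∑ i ∈ Finset.Icc 1 m, ((cA i : ℚ) * (cR i)) = (nAR : ℚ) := by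
      rw [hnAR, ← icc_sum_countP_mul' m R A hAm]
      push_cast
      rfl
    have hRR : ∑ i ∈ Finset.Icc 1 m, ((cR i : ℚ) * (cR i)) = (nRR : ℚ) := by
      rw [hnRR, ← icc_sum_countP_mul' m R R hRm]
      push_cast
      rfl
    have hdimQ : (nAA : ℚ) - 2 * (nAR : ℚ) + (nRR : ℚ)
        - (ε : ℚ) * ((noA : ℚ) - (noR : ℚ)) = 4 := by
      exact_mod_cast hdim
    have hoddQ : (oddCount f : ℚ) + (noR : ℚ) = (oddCount d : ℚ) + (noA : ℚ) := by
      exact_mod_cast hodd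
    have hsumQ : (A.sum : ℚ) = (R.sum : ℚ) := by exact_mod_cast hsum
    simp only [epsDim]
    rw [S1, hsA, hsR, hAA, hAR, hRR]
    linear_combination hdimQ / 2 - (ε : ℚ)/2 * hoddQ + (r : ℚ) * hsumQ

end CodimHelpers

set_option maxHeartbeats 4000000 in
/-- If an `ε`-admissible partition `d` of `m` does not have full members, then there is an
`ε`-admissible partition `f` of `m` with `f < d` in the dominance order and
`dim_ε(d) - dim_ε(f) = 2`: the singular locus of the closure of the nilpotent orbit of
Jordan type `d` has codimension exactly `2`. -/
theorem not_fullMembers_codim_eq_two {m : ℕ} (hm : 0 < m) (ε : ℤ) (hε : ε = 1 ∨ ε = -1)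
    (d : Nat.Partition m) (hd : EpsAdmissible ε d) (hfull : ¬ FullMembers d) :
    ∃ f : Nat.Partition m, EpsAdmissible ε f ∧ DominanceLE f d ∧ f ≠ d ∧
      epsDim ε d - epsDim ε f = 2 := by
  classical
  rw [FullMembers] at hfull
  push_neg at hfull
  obtain ⟨j0, hj01, hj0sup, hj0mem⟩ := hfull
  have hex : ∃ k, 1 ≤ k ∧ k ∉ d.parts := ⟨j0, hj01, hj0mem⟩
  set j := Nat.find hex with hjdef
  obtain ⟨hj1, hjmem⟩ : 1 ≤ j ∧ j ∉ d.parts := Nat.find_spec hex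
  have hjmin : ∀ k, 1 ≤ k → k < j → k ∈ d.parts := by
    intro k hk1 hkj
    by_contra hk
    have h2 : Nat.find hex ≤ k := Nat.find_le ⟨hk1, hk⟩
    omega
  have hjle : j ≤ j0 := by
    have h2 : Nat.find hex ≤ j0 := Nat.find_le ⟨hj01, hj0mem⟩
    omega
  have hbig : ∃ p, p ∈ d.parts ∧ j < p := by
    by_contra h
    push_neg at h
    have hsup : d.parts.sup ≤ j - 1 := by
      rw [Multiset.sup_le]
      intro p hp
      have h1 := h p hp
      have h2 : p ≠ j := ne_of_mem_of_not_mem hp hjmem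
      omega
    omega
  set b := Nat.find hbig with hbdef
  obtain ⟨hbmem, hjb⟩ : b ∈ d.parts ∧ j < b := Nat.find_spec hbig
  have hbmin : ∀ q, q ∈ d.parts → j < q → b ≤ q := by
    intro q hq1 hq2
    have h3 : Nat.find hbig ≤ q := Nat.find_le ⟨hq1, hq2⟩
    omega
  have hgap : ∀ p, p ∈ d.parts → p < b → p < j := by
    intro p hp hpb
    by_contra h
    push_neg at h
    have h2 : p ≠ j := ne_of_mem_of_not_mem hp hjmem
    have := hbmin p hp (by omega)
    omega
  have hpartle : ∀ p, p ∈ d.parts → p ≤ m := by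
    intro p hp
    obtain ⟨t, ht⟩ := Multiset.exists_cons_of_mem hp
    have h1 : d.parts.sum = m := d.parts_sum
    rw [ht, Multiset.sum_cons] at h1
    omega
  have hbm : b ≤ m := hpartle b hbmem
  have hconst : ∀ i, j ≤ i → i ≤ b → transposePart d i = transposePart d b := by
    intro i h1 h2
    show Multiset.card _ = Multiset.card _
    congr 1
    apply Multiset.filter_congr
    intro p hp
    rcases lt_or_ge p b with h3 | h3
    · have := hgap p hp h3
      omega
    · omega
  obtain ⟨β, hβ⟩ : ∃ β : ℕ, ((ε = 1 ∧ β = 0) ∨ (ε = -1 ∧ β = 1)) := by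
    rcases hε with h | h
    exacts [⟨0, Or.inl ⟨h, rfl⟩⟩, ⟨1, Or.inr ⟨h, rfl⟩⟩]
  have hbad : ∀ p : ℕ, (((ε = 1 ∧ Even p) ∨ (ε = -1 ∧ Odd p)) ↔ p % 2 = β) := by
    rcases hβ with ⟨he, hb⟩ | ⟨he, hb⟩ <;> subst he <;> subst hb <;>
      intro p <;> simp [Nat.even_iff, Nat.odd_iff]
  have hβ2 : β ≤ 1 := by rcases hβ with ⟨_, hb⟩ | ⟨_, hb⟩ <;> omega
  have hεβ : ε = 1 - 2 * (β : ℤ) := by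
    rcases hβ with ⟨he, hb⟩ | ⟨he, hb⟩ <;> subst hb <;> simp [he]
  have hd' : ∀ p : ℕ, p % 2 = β → Even (Multiset.count p d.parts) := by
    intro p hp
    exact hd p ((hbad p).mpr hp)
  have hcountb : 0 < Multiset.count b d.parts := Multiset.count_pos.mpr hbmem
  by_cases hbb : b % 2 = β
  · have hcb2 : 2 ≤ Multiset.count b d.parts := by
      have := hd' b hbb
      rw [Nat.even_iff] at this
      omega
    by_cases hjj : j % 2 = β
    · -- block 4: b bad, j bad
      have hb2 : j + 2 ≤ b := by omega
      rcases eq_or_lt_of_le hj1 with hj2 | hj2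
      · -- 4b : j = 1
        refine master_move ε d hd ((b) ::ₘ ({b} : Multiset ℕ)) ((b-1) ::ₘ (b-1) ::ₘ ({2} : Multiset ℕ)) (transposePart d b)
          (two_le' hcb2) ?_ ?_ ?_ ?_ ?_ ?_ ?_ ?_ ?_
        · intro p hp
          simp only [Multiset.mem_cons, Multiset.mem_singleton] at hp
          omega
        · intro p hp
          simp only [Multiset.mem_cons, Multiset.mem_singleton] at hp
          omega
        · intro p hp
          simp only [Multiset.mem_cons, Multiset.mem_singleton] at hp
          omega
        · simp only [Multiset.sum_cons, Multiset.sum_singleton]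
          omega
        · intro p hp
          rw [hbad p] at hp
          rw [Nat.even_iff]
          simp only [Multiset.count_cons, Multiset.count_singleton]
          split_ifs <;> omega
        · intro c
          simp only [Multiset.map_cons, Multiset.map_singleton, Multiset.sum_cons,
            Multiset.sum_singleton]
          omega
        · refine ⟨b, ?_⟩
          simp only [Multiset.count_cons, Multiset.count_singleton]
          split_ifs <;> omega
        · intro i h1 h2 hne'
          simp only [Multiset.countP_cons, countP_singleton'] at hne'
          split_ifs at hne' <;> exact hconst i (by omega) (by omega)
        · simp only [Multiset.map_cons, Multiset.map_singleton, Multiset.sum_cons,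
            Multiset.sum_singleton, Multiset.countP_cons, countP_singleton', Nat.odd_iff]
          rw [show min (b-1) (b-1) = (b-1) from by omega,
            show min (2) (b-1) = (2) from by omega,
            show min (b-1) (2) = (2) from by omega,
            show min (2) (2) = (2) from by omega,
            show min (b) (b-1) = (b-1) from by omega,
            show min (b) (2) = (2) from by omega,
            show min (b) (b) = (b) from by omega]
          split_ifs <;> first | exact (False.elim (by assumption)) | omega
      · -- 4a : j ≥ 2
        have hjm : j - 1 ∈ d.parts := hjmin (j-1) (by omega) (by omega)
        refine master_move ε d hd ((b) ::ₘ (b) ::ₘ ({j-1} : Multiset ℕ)) ((b-1) ::ₘ (b-1) ::ₘ ({j+1} : Multiset ℕ)) (transposePart d b)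
          (two_one_le' (by omega) hcb2 hjm) ?_ ?_ ?_ ?_ ?_ ?_ ?_ ?_ ?_
        · intro p hp
          simp only [Multiset.mem_cons, Multiset.mem_singleton] at hp
          omega
        · intro p hp
          simp only [Multiset.mem_cons, Multiset.mem_singleton] at hp
          omega
        · intro p hp
          simp only [Multiset.mem_cons, Multiset.mem_singleton] at hp
          omega
        · simp only [Multiset.sum_cons, Multiset.sum_singleton]
          omega
        · intro p hp
          rw [hbad p] at hp
          rw [Nat.even_iff]
          simp only [Multiset.count_cons, Multiset.count_singleton]
          split_ifs <;> omega
        · intro c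
          simp only [Multiset.map_cons, Multiset.map_singleton, Multiset.sum_cons,
            Multiset.sum_singleton]
          omega
        · refine ⟨b, ?_⟩
          simp only [Multiset.count_cons, Multiset.count_singleton]
          split_ifs <;> omega
        · intro i h1 h2 hne'
          simp only [Multiset.countP_cons, countP_singleton'] at hne'
          split_ifs at hne' <;> exact hconst i (by omega) (by omega)
        · simp only [Multiset.map_cons, Multiset.map_singleton, Multiset.sum_cons,
            Multiset.sum_singleton, Multiset.countP_cons, countP_singleton', Nat.odd_iff]
          rw [show min (b-1) (b-1) = (b-1) from by omega,
            show min (j+1) (b-1) = (j+1) from by omega,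
            show min (b-1) (j+1) = (j+1) from by omega,
            show min (j+1) (j+1) = (j+1) from by omega,
            show min (b) (b-1) = (b-1) from by omega,
            show min (j-1) (b-1) = (j-1) from by omega,
            show min (b) (j+1) = (j+1) from by omega,
            show min (j-1) (j+1) = (j-1) from by omega,
            show min (b) (b) = (b) from by omega,
            show min (j-1) (b) = (j-1) from by omega,
            show min (b) (j-1) = (j-1) from by omega,
            show min (j-1) (j-1) = (j-1) from by omega]
          split_ifs <;> first | exact (False.elim (by assumption)) | omega
    · -- block 3: b bad, j good
      rcases eq_or_lt_of_le hj1 with hj2 | hj2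
      · -- 3b : j = 1
        refine master_move ε d hd ((b) ::ₘ ({b} : Multiset ℕ)) ((b-1) ::ₘ (b-1) ::ₘ (1) ::ₘ ({1} : Multiset ℕ)) (transposePart d b)
          (two_le' hcb2) ?_ ?_ ?_ ?_ ?_ ?_ ?_ ?_ ?_
        · intro p hp
          simp only [Multiset.mem_cons, Multiset.mem_singleton] at hp
          omega
        · intro p hp
          simp only [Multiset.mem_cons, Multiset.mem_singleton] at hp
          omega
        · intro p hp
          simp only [Multiset.mem_cons, Multiset.mem_singleton] at hp
          omega
        · simp only [Multiset.sum_cons, Multiset.sum_singleton]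
          omega
        · intro p hp
          rw [hbad p] at hp
          rw [Nat.even_iff]
          simp only [Multiset.count_cons, Multiset.count_singleton]
          split_ifs <;> omega
        · intro c
          simp only [Multiset.map_cons, Multiset.map_singleton, Multiset.sum_cons,
            Multiset.sum_singleton]
          omega
        · refine ⟨b, ?_⟩
          simp only [Multiset.count_cons, Multiset.count_singleton]
          split_ifs <;> omega
        · intro i h1 h2 hne'
          simp only [Multiset.countP_cons, countP_singleton'] at hne'
          split_ifs at hne' <;> exact hconst i (by omega) (by omega)
        · simp only [Multiset.map_cons, Multiset.map_singleton, Multiset.sum_cons,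
            Multiset.sum_singleton, Multiset.countP_cons, countP_singleton', Nat.odd_iff]
          rw [show min (b-1) (b-1) = (b-1) from by omega,
            show min (1) (b-1) = (1) from by omega,
            show min (b-1) (1) = (1) from by omega,
            show min (1) (1) = (1) from by omega,
            show min (b) (b-1) = (b-1) from by omega,
            show min (b) (1) = (1) from by omega,
            show min (b) (b) = (b) from by omega]
          split_ifs <;> first | exact (False.elim (by assumption)) | omega
      · -- 3a : j ≥ 2
        have hjm : j - 1 ∈ d.parts := hjmin (j-1) (by omega) (by omega)
        have hjm2 : 2 ≤ Multiset.count (j-1) d.parts := by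
          have ha1 := hd' (j-1) (by omega)
          have ha2 := Multiset.count_pos.mpr hjm
          rw [Nat.even_iff] at ha1
          omega
        refine master_move ε d hd ((b) ::ₘ (b) ::ₘ (j-1) ::ₘ ({j-1} : Multiset ℕ)) ((b-1) ::ₘ (b-1) ::ₘ (j) ::ₘ ({j} : Multiset ℕ)) (transposePart d b)
          (two_two_le' (by omega) hcb2 hjm2) ?_ ?_ ?_ ?_ ?_ ?_ ?_ ?_ ?_
        · intro p hp
          simp only [Multiset.mem_cons, Multiset.mem_singleton] at hp
          omega
        · intro p hp
          simp only [Multiset.mem_cons, Multiset.mem_singleton] at hp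
          omega
        · intro p hp
          simp only [Multiset.mem_cons, Multiset.mem_singleton] at hp
          omega
        · simp only [Multiset.sum_cons, Multiset.sum_singleton]
          omega
        · intro p hp
          rw [hbad p] at hp
          rw [Nat.even_iff]
          simp only [Multiset.count_cons, Multiset.count_singleton]
          split_ifs <;> omega
        · intro c
          simp only [Multiset.map_cons, Multiset.map_singleton, Multiset.sum_cons,
            Multiset.sum_singleton]
          omega
        · refine ⟨b, ?_⟩
          simp only [Multiset.count_cons, Multiset.count_singleton]
          split_ifs <;> omega
        · intro i h1 h2 hne'
          simp only [Multiset.countP_cons, countP_singleton'] at hne'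
          split_ifs at hne' <;> exact hconst i (by omega) (by omega)
        · simp only [Multiset.map_cons, Multiset.map_singleton, Multiset.sum_cons,
            Multiset.sum_singleton, Multiset.countP_cons, countP_singleton', Nat.odd_iff]
          rw [show min (b-1) (b-1) = (b-1) from by omega,
            show min (j) (b-1) = (j) from by omega,
            show min (b-1) (j) = (j) from by omega,
            show min (j) (j) = (j) from by omega,
            show min (b) (b-1) = (b-1) from by omega,
            show min (j-1) (b-1) = (j-1) from by omega,
            show min (b) (j) = (j) from by omega,
            show min (j-1) (j) = (j-1) from by omega,
            show min (b) (b) = (b) from by omega,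
            show min (j-1) (b) = (j-1) from by omega,
            show min (b) (j-1) = (j-1) from by omega,
            show min (j-1) (j-1) = (j-1) from by omega]
          split_ifs <;> first | exact (False.elim (by assumption)) | omega
  · by_cases hjj : j % 2 = β
    · -- block 2 : b good, j bad
      rcases eq_or_lt_of_le (show j + 1 ≤ b by omega) with hb3 | hb3
      · -- b = j + 1
        rcases eq_or_lt_of_le hj1 with hj2 | hj2
        · -- 2b : j = 1
          refine master_move ε d hd (({b} : Multiset ℕ)) ((1) ::ₘ ({1} : Multiset ℕ)) (transposePart d b)
            (Multiset.singleton_le.mpr hbmem) ?_ ?_ ?_ ?_ ?_ ?_ ?_ ?_ ?_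
          · intro p hp
            simp only [Multiset.mem_cons, Multiset.mem_singleton] at hp
            omega
          · intro p hp
            simp only [Multiset.mem_cons, Multiset.mem_singleton] at hp
            omega
          · intro p hp
            simp only [Multiset.mem_cons, Multiset.mem_singleton] at hp
            omega
          · simp only [Multiset.sum_cons, Multiset.sum_singleton]
            omega
          · intro p hp
            rw [hbad p] at hp
            rw [Nat.even_iff]
            simp only [Multiset.count_cons, Multiset.count_singleton]
            split_ifs <;> omega
          · intro c
            simp only [Multiset.map_cons, Multiset.map_singleton, Multiset.sum_cons,
              Multiset.sum_singleton]
            omega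
          · refine ⟨b, ?_⟩
            simp only [Multiset.count_cons, Multiset.count_singleton]
            split_ifs <;> omega
          · intro i h1 h2 hne'
            simp only [Multiset.countP_cons, countP_singleton'] at hne'
            split_ifs at hne' <;> exact hconst i (by omega) (by omega)
          · simp only [Multiset.map_cons, Multiset.map_singleton, Multiset.sum_cons,
              Multiset.sum_singleton, Multiset.countP_cons, countP_singleton', Nat.odd_iff]
            rw [show min (1) (1) = (1) from by omega,
              show min (b) (1) = (1) from by omega,
              show min (b) (b) = (b) from by omega]
            split_ifs <;> first | exact (False.elim (by assumption)) | omega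
        · -- 2a : j ≥ 2
          have hjm : j - 1 ∈ d.parts := hjmin (j-1) (by omega) (by omega)
          refine master_move ε d hd ((b) ::ₘ ({j-1} : Multiset ℕ)) ((j) ::ₘ ({j} : Multiset ℕ)) (transposePart d b)
            (pair_le' (by omega) hbmem hjm) ?_ ?_ ?_ ?_ ?_ ?_ ?_ ?_ ?_
          · intro p hp
            simp only [Multiset.mem_cons, Multiset.mem_singleton] at hp
            omega
          · intro p hp
            simp only [Multiset.mem_cons, Multiset.mem_singleton] at hp
            omega
          · intro p hp
            simp only [Multiset.mem_cons, Multiset.mem_singleton] at hp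
            omega
          · simp only [Multiset.sum_cons, Multiset.sum_singleton]
            omega
          · intro p hp
            rw [hbad p] at hp
            rw [Nat.even_iff]
            simp only [Multiset.count_cons, Multiset.count_singleton]
            split_ifs <;> omega
          · intro c
            simp only [Multiset.map_cons, Multiset.map_singleton, Multiset.sum_cons,
              Multiset.sum_singleton]
            omega
          · refine ⟨b, ?_⟩
            simp only [Multiset.count_cons, Multiset.count_singleton]
            split_ifs <;> omega
          · intro i h1 h2 hne'
            simp only [Multiset.countP_cons, countP_singleton'] at hne'
            split_ifs at hne' <;> exact hconst i (by omega) (by omega)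
          · simp only [Multiset.map_cons, Multiset.map_singleton, Multiset.sum_cons,
              Multiset.sum_singleton, Multiset.countP_cons, countP_singleton', Nat.odd_iff]
            rw [show min (j) (j) = (j) from by omega,
              show min (b) (j) = (j) from by omega,
              show min (j-1) (j) = (j-1) from by omega,
              show min (b) (b) = (b) from by omega,
              show min (j-1) (b) = (j-1) from by omega,
              show min (b) (j-1) = (j-1) from by omega,
              show min (j-1) (j-1) = (j-1) from by omega]
            split_ifs <;> first | exact (False.elim (by assumption)) | omega
      · -- b ≥ j + 3
        have hb3' : j + 3 ≤ b := by omega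
        rcases eq_or_lt_of_le hj1 with hj2 | hj2
        · -- 2d : j = 1
          refine master_move ε d hd (({b} : Multiset ℕ)) ((b-2) ::ₘ ({2} : Multiset ℕ)) (transposePart d b)
            (Multiset.singleton_le.mpr hbmem) ?_ ?_ ?_ ?_ ?_ ?_ ?_ ?_ ?_
          · intro p hp
            simp only [Multiset.mem_cons, Multiset.mem_singleton] at hp
            omega
          · intro p hp
            simp only [Multiset.mem_cons, Multiset.mem_singleton] at hp
            omega
          · intro p hp
            simp only [Multiset.mem_cons, Multiset.mem_singleton] at hp
            omega
          · simp only [Multiset.sum_cons, Multiset.sum_singleton]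
            omega
          · intro p hp
            rw [hbad p] at hp
            rw [Nat.even_iff]
            simp only [Multiset.count_cons, Multiset.count_singleton]
            split_ifs <;> omega
          · intro c
            simp only [Multiset.map_cons, Multiset.map_singleton, Multiset.sum_cons,
              Multiset.sum_singleton]
            omega
          · refine ⟨b, ?_⟩
            simp only [Multiset.count_cons, Multiset.count_singleton]
            split_ifs <;> omega
          · intro i h1 h2 hne'
            simp only [Multiset.countP_cons, countP_singleton'] at hne'
            split_ifs at hne' <;> exact hconst i (by omega) (by omega)
          · simp only [Multiset.map_cons, Multiset.map_singleton, Multiset.sum_cons,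
              Multiset.sum_singleton, Multiset.countP_cons, countP_singleton', Nat.odd_iff]
            rw [show min (b-2) (b-2) = (b-2) from by omega,
              show min (2) (b-2) = (2) from by omega,
              show min (b-2) (2) = (2) from by omega,
              show min (2) (2) = (2) from by omega,
              show min (b) (b-2) = (b-2) from by omega,
              show min (b) (2) = (2) from by omega,
              show min (b) (b) = (b) from by omega]
            split_ifs <;> first | exact (False.elim (by assumption)) | omega
        · -- 2c : j ≥ 2
          have hjm : j - 1 ∈ d.parts := hjmin (j-1) (by omega) (by omega)
          refine master_move ε d hd ((b) ::ₘ ({j-1} : Multiset ℕ)) ((b-2) ::ₘ ({j+1} : Multiset ℕ)) (transposePart d b)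
            (pair_le' (by omega) hbmem hjm) ?_ ?_ ?_ ?_ ?_ ?_ ?_ ?_ ?_
          · intro p hp
            simp only [Multiset.mem_cons, Multiset.mem_singleton] at hp
            omega
          · intro p hp
            simp only [Multiset.mem_cons, Multiset.mem_singleton] at hp
            omega
          · intro p hp
            simp only [Multiset.mem_cons, Multiset.mem_singleton] at hp
            omega
          · simp only [Multiset.sum_cons, Multiset.sum_singleton]
            omega
          · intro p hp
            rw [hbad p] at hp
            rw [Nat.even_iff]
            simp only [Multiset.count_cons, Multiset.count_singleton]
            split_ifs <;> omega
          · intro c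
            simp only [Multiset.map_cons, Multiset.map_singleton, Multiset.sum_cons,
              Multiset.sum_singleton]
            omega
          · refine ⟨b, ?_⟩
            simp only [Multiset.count_cons, Multiset.count_singleton]
            split_ifs <;> omega
          · intro i h1 h2 hne'
            simp only [Multiset.countP_cons, countP_singleton'] at hne'
            split_ifs at hne' <;> exact hconst i (by omega) (by omega)
          · simp only [Multiset.map_cons, Multiset.map_singleton, Multiset.sum_cons,
              Multiset.sum_singleton, Multiset.countP_cons, countP_singleton', Nat.odd_iff]
            rw [show min (b-2) (b-2) = (b-2) from by omega,
              show min (j+1) (b-2) = (j+1) from by omega,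
              show min (b-2) (j+1) = (j+1) from by omega,
              show min (j+1) (j+1) = (j+1) from by omega,
              show min (b) (b-2) = (b-2) from by omega,
              show min (j-1) (b-2) = (j-1) from by omega,
              show min (b) (j+1) = (j+1) from by omega,
              show min (j-1) (j+1) = (j-1) from by omega,
              show min (b) (b) = (b) from by omega,
              show min (j-1) (b) = (j-1) from by omega,
              show min (b) (j-1) = (j-1) from by omega,
              show min (j-1) (j-1) = (j-1) from by omega]
            split_ifs <;> first | exact (False.elim (by assumption)) | omega
    · -- block 1 : b good, j good
      have hb2 : j + 2 ≤ b := by omega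
      rcases eq_or_lt_of_le hj1 with hj2 | hj2
      · -- 1b : j = 1
        refine master_move ε d hd (({b} : Multiset ℕ)) ((b-2) ::ₘ (1) ::ₘ ({1} : Multiset ℕ)) (transposePart d b)
          (Multiset.singleton_le.mpr hbmem) ?_ ?_ ?_ ?_ ?_ ?_ ?_ ?_ ?_
        · intro p hp
          simp only [Multiset.mem_cons, Multiset.mem_singleton] at hp
          omega
        · intro p hp
          simp only [Multiset.mem_cons, Multiset.mem_singleton] at hp
          omega
        · intro p hp
          simp only [Multiset.mem_cons, Multiset.mem_singleton] at hp
          omega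
        · simp only [Multiset.sum_cons, Multiset.sum_singleton]
          omega
        · intro p hp
          rw [hbad p] at hp
          rw [Nat.even_iff]
          simp only [Multiset.count_cons, Multiset.count_singleton]
          split_ifs <;> omega
        · intro c
          simp only [Multiset.map_cons, Multiset.map_singleton, Multiset.sum_cons,
            Multiset.sum_singleton]
          omega
        · refine ⟨b, ?_⟩
          simp only [Multiset.count_cons, Multiset.count_singleton]
          split_ifs <;> omega
        · intro i h1 h2 hne'
          simp only [Multiset.countP_cons, countP_singleton'] at hne'
          split_ifs at hne' <;> exact hconst i (by omega) (by omega)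
        · simp only [Multiset.map_cons, Multiset.map_singleton, Multiset.sum_cons,
            Multiset.sum_singleton, Multiset.countP_cons, countP_singleton', Nat.odd_iff]
          rw [show min (b-2) (b-2) = (b-2) from by omega,
            show min (1) (b-2) = (1) from by omega,
            show min (b-2) (1) = (1) from by omega,
            show min (1) (1) = (1) from by omega,
            show min (b) (b-2) = (b-2) from by omega,
            show min (b) (1) = (1) from by omega,
            show min (b) (b) = (b) from by omega]
          split_ifs <;> first | exact (False.elim (by assumption)) | omega
      · -- 1a : j ≥ 2
        have hjm : j - 1 ∈ d.parts := hjmin (j-1) (by omega) (by omega)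
        have hjm2 : 2 ≤ Multiset.count (j-1) d.parts := by
          have ha1 := hd' (j-1) (by omega)
          have ha2 := Multiset.count_pos.mpr hjm
          rw [Nat.even_iff] at ha1
          omega
        refine master_move ε d hd ((b) ::ₘ (j-1) ::ₘ ({j-1} : Multiset ℕ)) ((b-2) ::ₘ (j) ::ₘ ({j} : Multiset ℕ)) (transposePart d b)
          (one_two_le' (by omega) hbmem hjm2) ?_ ?_ ?_ ?_ ?_ ?_ ?_ ?_ ?_
        · intro p hp
          simp only [Multiset.mem_cons, Multiset.mem_singleton] at hp
          omega
        · intro p hp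
          simp only [Multiset.mem_cons, Multiset.mem_singleton] at hp
          omega
        · intro p hp
          simp only [Multiset.mem_cons, Multiset.mem_singleton] at hp
          omega
        · simp only [Multiset.sum_cons, Multiset.sum_singleton]
          omega
        · intro p hp
          rw [hbad p] at hp
          rw [Nat.even_iff]
          simp only [Multiset.count_cons, Multiset.count_singleton]
          split_ifs <;> omega
        · intro c
          simp only [Multiset.map_cons, Multiset.map_singleton, Multiset.sum_cons,
            Multiset.sum_singleton]
          omega
        · refine ⟨b, ?_⟩
          simp only [Multiset.count_cons, Multiset.count_singleton]
          split_ifs <;> omega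
        · intro i h1 h2 hne'
          simp only [Multiset.countP_cons, countP_singleton'] at hne'
          split_ifs at hne' <;> exact hconst i (by omega) (by omega)
        · simp only [Multiset.map_cons, Multiset.map_singleton, Multiset.sum_cons,
            Multiset.sum_singleton, Multiset.countP_cons, countP_singleton', Nat.odd_iff]
          rw [show min (b-2) (b-2) = (b-2) from by omega,
            show min (j) (b-2) = (j) from by omega,
            show min (b-2) (j) = (j) from by omega,
            show min (j) (j) = (j) from by omega,
            show min (b) (b-2) = (b-2) from by omega,
            show min (j-1) (b-2) = (j-1) from by omega,
            show min (b) (j) = (j) from by omega,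
            show min (j-1) (j) = (j-1) from by omega,
            show min (b) (b) = (b) from by omega,
            show min (j-1) (b) = (j-1) from by omega,
            show min (b) (j-1) = (j-1) from by omega,
            show min (j-1) (j-1) = (j-1) from by omega]
          split_ifs <;> first | exact (False.elim (by assumption)) | omega
end

section
/- Let ε ∈ {1, -1} and let d be an ε-admissible partition of m that has full members, with largest part k, so that d = [k^{s_k}, (k-1)^{s_{k-1}}, ..., 1^{s_1}] with all s_j ≥ 1. If d > f is a minimal ε-degeneration, then there exists j with 1 ≤ j ≤ k-1 such that f agrees with d except that the multiplicities of the parts j+1, j, j-1 in f are either (s_{j+1}-2, s_j+4, s_{j-1}-2) or (s_{j+1}-1, s_j+2, s_{j-1}-1), where for j = 1 the condition on the part 0 is vacuous. -/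
/-- Strict dominance order. -/
def DominanceLT {m : ℕ} (f d : Nat.Partition m) : Prop :=
  DominanceLE f d ∧ f ≠ d

/-- `d > f` is a minimal `ε`-degeneration: both are `ε`-admissible, `f < d` in the
dominance order, and no `ε`-admissible partition lies strictly between. -/
def IsMinimalDegeneration {m : ℕ} (ε : ℤ) (d f : Nat.Partition m) : Prop :=
  EpsAdmissible ε d ∧ EpsAdmissible ε f ∧ DominanceLT f d ∧
    ∀ d' : Nat.Partition m, EpsAdmissible ε d' → DominanceLT f d' → DominanceLT d' d → False

section AuxMinDeg

open List Finset

-- L1: threshold sum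
lemma sum_eq_sum_countP (l : List ℕ) (B : ℕ) (hB : ∀ x ∈ l, x ≤ B) :
    l.sum = ∑ v ∈ Finset.Icc 1 B, l.countP (fun x => decide (v ≤ x)) := by
  induction l with
  | nil => simp
  | cons x t ih =>
    have hx : x ≤ B := hB x (by simp)
    have ht : ∀ y ∈ t, y ≤ B := fun y hy => hB y (by simp [hy])
    simp only [List.sum_cons, List.countP_cons, ih ht]
    rw [Finset.sum_add_distrib]
    have : ∑ v ∈ Finset.Icc 1 B, (if (decide (v ≤ x)) = true then 1 else 0)
        = ∑ v ∈ Finset.Icc 1 B, (if v ∈ Finset.Icc 1 x then 1 else 0) := by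
      apply Finset.sum_congr rfl
      intro v hv
      simp only [Finset.mem_Icc] at hv ⊢
      by_cases h : v ≤ x <;> simp [h, hv.1]
    rw [this, Finset.sum_ite_mem]
    have hinter : Finset.Icc 1 B ∩ Finset.Icc 1 x = Finset.Icc 1 x := by
      apply Finset.inter_eq_right.2
      intro v hv
      simp only [Finset.mem_Icc] at hv ⊢
      omega
    rw [hinter]
    simp [Nat.card_Icc]
    omega

-- L2
lemma countP_take_sorted (v : ℕ) : ∀ (l : List ℕ), l.Pairwise (· ≥ ·) → ∀ p,
    (l.take p).countP (fun x => decide (v ≤ x)) = min p (l.countP (fun x => decide (v ≤ x))) := by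
  intro l
  induction l with
  | nil => intro _ p; simp
  | cons x t ih =>
    intro hs p
    have hst : t.Pairwise (· ≥ ·) := hs.of_cons
    cases p with
    | zero => simp
    | succ q =>
      simp only [List.take_succ_cons, List.countP_cons]
      rw [ih hst q]
      by_cases h : v ≤ x
      · simp only [decide_eq_true_eq, if_pos h]
        omega
      · have ht0 : t.countP (fun x => decide (v ≤ x)) = 0 := by
          rw [List.countP_eq_zero]
          intro y hy
          have := List.rel_of_pairwise_cons hs hy
          simp only [decide_eq_true_eq]
          omega
        have ht0' : (t.take q).countP (fun x => decide (v ≤ x)) = 0 := by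
          rw [ih hst q, ht0]; omega
        simp only [decide_eq_true_eq, if_neg h]
        omega

-- N at multiset level
def Nge (s : Multiset ℕ) (v : ℕ) : ℕ := (s.filter (v ≤ ·)).card

lemma countP_sort_eq_Nge (s : Multiset ℕ) (v : ℕ) :
    (Multiset.sort s (· ≥ ·)).countP (fun x => decide (v ≤ x)) = Nge s v := by
  rw [List.countP_eq_length_filter, Nge]
  conv_rhs => rw [← Multiset.sort_eq s (· ≥ ·)]
  rw [Multiset.filter_coe]
  simp

-- L3 : Lemma A
lemma take_sum_sort_eq (s : Multiset ℕ) (B : ℕ) (hB : ∀ x ∈ s, x ≤ B) (p : ℕ) :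
    ((Multiset.sort s (· ≥ ·)).take p).sum = ∑ v ∈ Finset.Icc 1 B, min p (Nge s v) := by
  set l := Multiset.sort s (· ≥ ·) with hl
  have hsort : l.Pairwise (· ≥ ·) := Multiset.pairwise_sort _ _
  have hBl : ∀ x ∈ l.take p, x ≤ B := by
    intro x hx
    apply hB
    rw [← Multiset.sort_eq s (· ≥ ·), ← hl]
    exact Multiset.mem_coe.2 (List.mem_of_mem_take hx)
  rw [sum_eq_sum_countP _ B hBl]
  apply Finset.sum_congr rfl
  intro v _
  rw [countP_take_sorted v l hsort p, countP_sort_eq_Nge]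

-- L4
lemma eq_of_prefix_sums (l₁ : List ℕ) : ∀ (l₂ : List ℕ), (∀ x ∈ l₁, 0 < x) → (∀ x ∈ l₂, 0 < x) →
    (∀ p, (l₁.take p).sum = (l₂.take p).sum) → l₁ = l₂ := by
  induction l₁ with
  | nil =>
    intro l₂ _ h2 h
    cases l₂ with
    | nil => rfl
    | cons y u =>
      have := h 1
      simp at this
      exact absurd this.symm (Nat.ne_of_gt (h2 y (by simp)))
  | cons x t ih =>
    intro l₂ h1 h2 h
    cases l₂ with
    | nil =>
      have := h 1
      simp at this
      exact absurd this (Nat.ne_of_gt (h1 x (by simp)))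
    | cons y u =>
      have hxy : x = y := by have := h 1; simpa using this
      subst hxy
      have htu : t = u := by
        apply ih u (fun z hz => h1 z (by simp [hz])) (fun z hz => h2 z (by simp [hz]))
        intro p
        have := h (p + 1)
        simpa using this
      rw [htu]

-- L5
lemma take_sum_succ (l : List ℕ) (p : ℕ) (h : p < l.length) :
    (l.take (p+1)).sum = (l.take p).sum + l[p] := by
  rw [List.take_succ, List.getElem?_eq_getElem h]
  rw [List.sum_append]
  simp

lemma take_sum_succ_le (l : List ℕ) (p : ℕ) (c : ℕ) (hc : ∀ x ∈ l.drop p, x ≤ c) :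
    (l.take (p+1)).sum ≤ (l.take p).sum + c := by
  by_cases h : p < l.length
  · rw [take_sum_succ l p h]
    have : l[p] ∈ l.drop p := by
      rw [List.drop_eq_getElem_cons h]
      exact List.mem_cons_self
    exact Nat.add_le_add_left (hc _ this) _
  · rw [List.take_of_length_le (by omega), List.take_of_length_le (by omega)]
    omega

-- L6
lemma take_sum_mono (l : List ℕ) {p q : ℕ} (h : p ≤ q) :
    (l.take p).sum ≤ (l.take q).sum := by
  have : q = p + (q - p) := by omega
  rw [this, List.take_add]
  simp

-- L7
lemma take_sum_upper (l : List ℕ) (p q c : ℕ) (hpq : p ≤ q) (hc : ∀ x ∈ l.drop p, x ≤ c) :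
    (l.take q).sum ≤ (l.take p).sum + (q - p) * c := by
  obtain ⟨e, rfl⟩ : ∃ e, q = p + e := ⟨q - p, by omega⟩
  have he : p + e - p = e := by omega
  rw [he, List.take_add, List.sum_append]
  have h1 : ((l.drop p).take e).sum ≤ ((l.drop p).take e).length • c :=
    List.sum_le_card_nsmul _ c (fun x hx => hc x (List.mem_of_mem_take hx))
  have h2 : ((l.drop p).take e).length ≤ e := by simp
  have h3 := Nat.mul_le_mul_right c h2
  simp only [smul_eq_mul] at h1
  omega

-- L8
lemma take_sum_lower (l : List ℕ) (p q c : ℕ) (hpq : p ≤ q) (hq : q ≤ l.length)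
    (hc : ∀ i, p ≤ i → (h : i < l.length) → i < q → c ≤ l[i]) :
    (l.take p).sum + (q - p) * c ≤ (l.take q).sum := by
  obtain ⟨e, rfl⟩ : ∃ e, q = p + e := ⟨q - p, by omega⟩
  have he : p + e - p = e := by omega
  rw [he, List.take_add, List.sum_append]
  have hlen : ((l.drop p).take e).length = e := by
    simp; omega
  have h1 : ((l.drop p).take e).length • c ≤ ((l.drop p).take e).sum := by
    apply List.card_nsmul_le_sum
    intro x hx
    rw [List.mem_iff_getElem] at hx
    obtain ⟨i, hi, hix⟩ := hx
    rw [hlen] at hi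
    have hlt : i < (l.drop p).length := by simp; omega
    rw [List.getElem_take, List.getElem_drop] at hix
    rw [← hix]
    exact hc (p + i) (by omega) (by simp at hlt; omega) (by omega)
  simp only [smul_eq_mul, hlen] at h1
  omega

-- L9
lemma sorted_getElem_iff (l : List ℕ) (hs : l.Pairwise (· ≥ ·)) (v i : ℕ) (hi : i < l.length) :
    v ≤ l[i] ↔ i < l.countP (fun x => decide (v ≤ x)) := by
  constructor
  · intro h
    have hall : ∀ x ∈ l.take (i+1), v ≤ x := by
      intro x hx
      rw [List.mem_iff_getElem] at hx
      obtain ⟨j, hj, hjx⟩ := hx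
      have hjlen : j < l.length := by
        have := List.length_take (i := i+1) (l := l)
        omega
      rw [List.getElem_take] at hjx
      have hji : j ≤ i := by
        have := List.length_take (i := i+1) (l := l)
        omega
      have : l[j] ≥ l[i] := by
        have := hs.rel_get_of_le (a := ⟨j, hjlen⟩) (b := ⟨i, hi⟩) (by simpa using hji)
        simpa using this
      omega
    have : (l.take (i+1)).countP (fun x => decide (v ≤ x)) = (l.take (i+1)).length := by
      rw [List.countP_eq_length]
      intro x hx
      simpa using hall x hx
    rw [countP_take_sorted v l hs (i+1)] at this
    rw [List.length_take] at this
    omega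
  · intro h
    have h1 : (l.take (i+1)).countP (fun x => decide (v ≤ x)) = i + 1 := by
      rw [countP_take_sorted v l hs (i+1)]
      omega
    by_contra hv
    have h2 : (l.take i).countP (fun x => decide (v ≤ x)) ≤ i := by
      rw [countP_take_sorted v l hs i]
      omega
    have h3 : l.take (i+1) = l.take i ++ [l[i]] := by
      rw [List.take_succ, List.getElem?_eq_getElem hi]
      rfl
    rw [h3, List.countP_append] at h1
    simp only [List.countP_singleton] at h1
    rw [if_neg (by simpa using hv)] at h1
    omega

-- L10
lemma Nge_succ_add_count (s : Multiset ℕ) (v : ℕ) :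
    Nge s v = Nge s (v+1) + s.count v := by
  unfold Nge
  have : s.filter (v ≤ ·) = s.filter (v + 1 ≤ ·) + s.filter (· = v) := by
    ext x
    simp only [Multiset.count_add, Multiset.count_filter]
    split_ifs <;> omega
  rw [this, Multiset.card_add, Multiset.filter_eq', Multiset.card_replicate, Multiset.count]

-- Nge antitone
lemma Nge_anti (s : Multiset ℕ) {v w : ℕ} (h : v ≤ w) : Nge s w ≤ Nge s v := by
  rw [← countP_sort_eq_Nge, ← countP_sort_eq_Nge]
  apply List.countP_mono_left
  intro x _ hx
  simp only [decide_eq_true_eq] at hx ⊢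
  omega

-- identity for sums differing at two points
lemma sum_min_two_point (B a b : ℕ) (Nd Ng : ℕ → ℕ) (p : ℕ)
    (haB : a ∈ Finset.Icc 1 B) (hbB : b ∈ Finset.Icc 1 B) (hab : a ≠ b)
    (hoth : ∀ v, 1 ≤ v → v ≠ a → v ≠ b → Ng v = Nd v) :
    (∑ v ∈ Finset.Icc 1 B, min p (Ng v)) + min p (Nd a) + min p (Nd b)
      = (∑ v ∈ Finset.Icc 1 B, min p (Nd v)) + min p (Ng a) + min p (Ng b) := by
  have key : ∀ N : ℕ → ℕ, (∑ v ∈ Finset.Icc 1 B, min p (N v))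
      = (∑ v ∈ ((Finset.Icc 1 B).erase a).erase b, min p (N v)) + min p (N a) + min p (N b) := by
    intro N
    rw [add_assoc, add_comm (min p (N a)), ← add_assoc]
    rw [Finset.sum_erase_add _ _ (Finset.mem_erase.2 ⟨Ne.symm hab, hbB⟩)]
    rw [Finset.sum_erase_add _ _ haB]
  rw [key Nd, key Ng]
  have : ∀ v ∈ ((Finset.Icc 1 B).erase a).erase b, min p (Ng v) = min p (Nd v) := by
    intro v hv
    rw [Finset.mem_erase] at hv
    obtain ⟨hvb, hv2⟩ := hv
    rw [Finset.mem_erase] at hv2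
    have hv1 : 1 ≤ v := by
      have := hv2.2
      rw [Finset.mem_Icc] at this
      exact this.1
    rw [hoth v hv1 hv2.1 hvb]
  rw [Finset.sum_congr rfl this]
  ring

lemma dominance_aux (B a c : ℕ) (Nd Ng F D Dg : ℕ → ℕ)
    (hD : ∀ p, D p = ∑ v ∈ Finset.Icc 1 B, min p (Nd v))
    (hDg : ∀ p, Dg p = ∑ v ∈ Finset.Icc 1 B, min p (Ng v))
    (ha2 : 2 ≤ a) (haB : a ≤ B)
    (hc : c = 1 ∨ c = 2)
    (hNa : Ng a + c = Nd a)
    (hNa1 : Ng (a-1) = Nd (a-1) + c)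
    (hNoth : ∀ v, 1 ≤ v → v ≠ a → v ≠ a-1 → Ng v = Nd v)
    (hmono : Nd a ≤ Nd (a-1)) (hNac : c ≤ Nd a)
    (hdom : ∀ p, F p ≤ D p)
    (hdef : ∀ p, Nd a ≤ p → p ≤ Nd (a-1) → F p + c ≤ D p)
    (hdefend : c = 2 → F (Nd a - 1) + 1 ≤ D (Nd a - 1) ∧
      F (Nd (a-1) + 1) + 1 ≤ D (Nd (a-1) + 1)) :
    ∀ p, F p ≤ Dg p ∧ Dg p ≤ D p := by
  intro p
  have hid : Dg p + min p (Nd a) + min p (Nd (a-1))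
      = D p + min p (Ng a) + min p (Ng (a-1)) := by
    rw [hD, hDg]
    exact sum_min_two_point B a (a-1) Nd Ng p (by simp [Finset.mem_Icc]; omega)
      (by simp [Finset.mem_Icc]; omega) (by omega) hNoth
  have hF := hdom p
  -- case analysis
  rcases lt_or_ge p (Nd a) with h1 | h1
  · rcases hc with rfl | rfl
    · constructor <;> omega
    · by_cases hp : p = Nd a - 1
      · obtain ⟨he1, he2⟩ := hdefend rfl
        subst hp
        constructor <;> omega
      · constructor <;> omega
  · rcases le_or_gt p (Nd (a-1)) with h2 | h2
    · have := hdef p h1 h2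
      constructor <;> omega
    · rcases hc with rfl | rfl
      · constructor <;> omega
      · by_cases hp : p = Nd (a-1) + 1
        · obtain ⟨he1, he2⟩ := hdefend rfl
          subst hp
          constructor <;> omega
        · constructor <;> omega

lemma Nge_add (s t : Multiset ℕ) (v : ℕ) : Nge (s + t) v = Nge s v + Nge t v := by
  unfold Nge
  rw [Multiset.filter_add, Multiset.card_add]

lemma Nge_replicate (n x v : ℕ) : Nge (Multiset.replicate n x) v = if v ≤ x then n else 0 := by
  unfold Nge
  split_ifs with h
  · rw [Multiset.filter_eq_self.2 (fun y hy => by rw [Multiset.eq_of_mem_replicate hy]; exact h)]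
    exact Multiset.card_replicate _ _
  · rw [Multiset.filter_eq_nil.2 (fun y hy => by rw [Multiset.eq_of_mem_replicate hy]; exact h)]
    rfl

lemma build_g (d : Multiset ℕ) (a c : ℕ) (ha2 : 2 ≤ a)
    (hc1 : c ≤ d.count a) (hc2 : a = 2 ∨ c ≤ d.count (a-2)) (h0 : d.count 0 = 0) :
    ∃ g : Multiset ℕ,
      (∀ p, p ≠ a → p ≠ a-1 → p ≠ a-2 → g.count p = d.count p) ∧
      (g.count a + c = d.count a) ∧
      (g.count (a-1) = d.count (a-1) + 2*c) ∧
      (a = 2 ∨ g.count (a-2) + c = d.count (a-2)) ∧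
      g.sum = d.sum ∧
      (∀ v, 1 ≤ v → Nge g v + (if v ≤ a then c else 0) + (if v ≤ a-2 then c else 0)
        = Nge d v + (if v ≤ a-1 then 2*c else 0)) ∧
      (∀ x ∈ g, x = a-1 ∨ x ∈ d) := by
  classical
  obtain ⟨c', hc'⟩ : ∃ c', (a = 2 ∧ c' = 0) ∨ (3 ≤ a ∧ c' = c) := by
    by_cases h : a = 2
    · exact ⟨0, Or.inl ⟨h, rfl⟩⟩
    · exact ⟨c, Or.inr ⟨by omega, rfl⟩⟩
  set X : Multiset ℕ := Multiset.replicate c a + Multiset.replicate c' (a-2) with hX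
  set g : Multiset ℕ := Multiset.replicate (2*c) (a-1) + (d - X) with hg
  have hXcount : ∀ x, X.count x = (if x = a then c else 0) + (if x = a-2 then c' else 0) := by
    intro x
    rw [hX, Multiset.count_add, Multiset.count_replicate, Multiset.count_replicate]
    split_ifs <;> omega
  have hle : X ≤ d := by
    rw [Multiset.le_iff_count]
    intro x
    rw [hXcount]
    split_ifs with h1 h2 h2
    · omega
    · subst h1; omega
    · subst h2
      rcases hc2 with h | h <;> omega
    · omega
  have hgcount : ∀ x, g.count x = (if x = a-1 then 2*c else 0) + (d.count x - X.count x) := by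
    intro x
    rw [hg, Multiset.count_add, Multiset.count_replicate, Multiset.count_sub]
    split_ifs <;> omega
  have hsplit : (d - X) + X = d := tsub_add_cancel_of_le hle
  refine ⟨g, ?_, ?_, ?_, ?_, ?_, ?_, ?_⟩
  · intro p hp1 hp2 hp3
    rw [hgcount p, hXcount p, if_neg hp2, if_neg hp1, if_neg hp3]
    omega
  · rw [hgcount a, hXcount a, if_neg (show ¬ a = a - 1 by omega), if_pos rfl,
      if_neg (show ¬ a = a - 2 by omega)]
    omega
  · rw [hgcount (a-1), hXcount (a-1), if_pos rfl, if_neg (show ¬ a-1 = a by omega),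
      if_neg (show ¬ a-1 = a-2 by omega)]
    have : X.count (a-1) ≤ d.count (a-1) := Multiset.le_iff_count.1 hle _
    rw [hXcount (a-1), if_neg (show ¬ a-1 = a by omega), if_neg (show ¬ a-1 = a-2 by omega)] at this
    omega
  · rcases hc' with ⟨h2, hc0⟩ | ⟨h3, hcc⟩
    · exact Or.inl h2
    · refine Or.inr ?_
      rw [hgcount (a-2), hXcount (a-2), if_neg (show ¬ a-2 = a-1 by omega),
        if_neg (show ¬ a-2 = a by omega), if_pos rfl]
      rcases hc2 with h | h <;> omega
  · have hsum : (d - X).sum + X.sum = d.sum := by rw [← Multiset.sum_add, hsplit]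
    have hXsum : X.sum = c * a + c' * (a-2) := by
      rw [hX, Multiset.sum_add, Multiset.sum_replicate, Multiset.sum_replicate, smul_eq_mul, smul_eq_mul]
    have hgsum : g.sum = 2*c * (a-1) + (d - X).sum := by
      rw [hg, Multiset.sum_add, Multiset.sum_replicate, smul_eq_mul]
    have harith : 2*c*(a-1) = c * a + c' * (a-2) := by
      rcases hc' with ⟨h2, hc0⟩ | ⟨h3, hcc⟩
      · subst h2; subst hc0; omega
      · rw [hcc]
        have h4 : a - 1 + (a-1) = a + (a - 2) := by omega
        calc 2*c*(a-1) = c*((a-1)+(a-1)) := by ring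
          _ = c*(a+(a-2)) := by rw [h4]
          _ = c * a + c * (a-2) := by ring
    omega
  · intro v hv1
    have hNg : Nge g v = (if v ≤ a-1 then 2*c else 0) + Nge (d - X) v := by
      rw [hg, Nge_add, Nge_replicate]
    have hNd : Nge d v = Nge (d - X) v + Nge X v := by
      conv_lhs => rw [← hsplit]
      rw [Nge_add]
    have hNX : Nge X v = (if v ≤ a then c else 0) + (if v ≤ a-2 then c' else 0) := by
      rw [hX, Nge_add, Nge_replicate, Nge_replicate]
    rw [hNg, hNd, hNX]
    split_ifs with h1 h2 h3 <;> rcases hc' with ⟨h2', hc0⟩ | ⟨h3', hcc⟩ <;> omega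
  · intro x hx
    rw [hg] at hx
    rcases Multiset.mem_add.1 hx with h | h
    · exact Or.inl (Multiset.eq_of_mem_replicate h)
    · exact Or.inr (Multiset.mem_of_le (tsub_le_self) h)

lemma key_aux {m : ℕ} (ε : ℤ) (d : Nat.Partition m) (k : ℕ)
    (f : Nat.Partition m) (hmin : IsMinimalDegeneration ε d f)
    (a c : ℕ) (ha2 : 2 ≤ a) (hak : a ≤ k) (hc : c = 1 ∨ c = 2)
    (g : Nat.Partition m)
    (hgc0 : ∀ p, p ≠ a → p ≠ a-1 → p ≠ a-2 → g.parts.count p = d.parts.count p)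
    (hgca : g.parts.count a + c = d.parts.count a)
    (hgca1 : g.parts.count (a-1) = d.parts.count (a-1) + 2*c)
    (hgca2 : a = 2 ∨ g.parts.count (a-2) + c = d.parts.count (a-2))
    (hgadm : EpsAdmissible ε g)
    (hfg : DominanceLE f g) (hgd : DominanceLE g d) :
    ∃ j : ℕ, 1 ≤ j ∧ j ≤ k - 1 ∧
      (∀ p : ℕ, p ≠ j + 1 → p ≠ j → p ≠ j - 1 →
        Multiset.count p f.parts = Multiset.count p d.parts) ∧
      (((Multiset.count (j + 1) f.parts : ℤ) = (Multiset.count (j + 1) d.parts : ℤ) - 2 ∧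
        (Multiset.count j f.parts : ℤ) = (Multiset.count j d.parts : ℤ) + 4 ∧
        (j = 1 ∨
          (Multiset.count (j - 1) f.parts : ℤ) = (Multiset.count (j - 1) d.parts : ℤ) - 2)) ∨
       ((Multiset.count (j + 1) f.parts : ℤ) = (Multiset.count (j + 1) d.parts : ℤ) - 1 ∧
        (Multiset.count j f.parts : ℤ) = (Multiset.count j d.parts : ℤ) + 2 ∧
        (j = 1 ∨
          (Multiset.count (j - 1) f.parts : ℤ) = (Multiset.count (j - 1) d.parts : ℤ) - 1))) := by
  have hgd_ne : g ≠ d := by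
    intro h
    rw [h] at hgca1
    omega
  by_cases hfg_eq : f = g
  · have hparts : f.parts = g.parts := by rw [hfg_eq]
    refine ⟨a - 1, by omega, by omega, ?_, ?_⟩
    · intro p hp1 hp2 hp3
      rw [hparts]
      exact hgc0 p (by omega) (by omega) (by omega)
    · have e1 : a - 1 + 1 = a := by omega
      have e2 : a - 1 - 1 = a - 2 := rfl
      rw [hparts, e1, e2]
      rcases hc with rfl | rfl
      · refine Or.inr ⟨by omega, by omega, ?_⟩
        rcases hgca2 with h | h
        · exact Or.inl (by omega)
        · exact Or.inr (by omega)
      · refine Or.inl ⟨by omega, by omega, ?_⟩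
        rcases hgca2 with h | h
        · exact Or.inl (by omega)
        · exact Or.inr (by omega)
  · exact absurd (hmin.2.2.2 g hgadm ⟨hfg, hfg_eq⟩ ⟨hgd, hgd_ne⟩) (fun h => h)

/-- Let `d` be an `ε`-admissible partition of `m` with full members, with largest part
`k`, the part `i` having multiplicity `sᵢ`.  If `d > f` is a minimal `ε`-degeneration,
then there is `j` with `1 ≤ j ≤ k - 1` such that `f` agrees with `d` except that the
multiplicities of the parts `j+1`, `j`, `j-1` in `f` are either
`(s_{j+1} - 2, s_j + 4, s_{j-1} - 2)` or `(s_{j+1} - 1, s_j + 2, s_{j-1} - 1)`,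
the condition on the part `0` being vacuous when `j = 1`. -/
theorem minimal_degeneration_of_fullMembers {m : ℕ} (hm : 0 < m) (ε : ℤ)
    (hε : ε = 1 ∨ ε = -1) (d : Nat.Partition m) (hd : EpsAdmissible ε d)
    (hfull : FullMembers d) (k : ℕ) (hk : k = d.parts.sup)
    (f : Nat.Partition m) (hmin : IsMinimalDegeneration ε d f) :
    ∃ j : ℕ, 1 ≤ j ∧ j ≤ k - 1 ∧
      (∀ p : ℕ, p ≠ j + 1 → p ≠ j → p ≠ j - 1 →
        Multiset.count p f.parts = Multiset.count p d.parts) ∧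
      (((Multiset.count (j + 1) f.parts : ℤ) = (Multiset.count (j + 1) d.parts : ℤ) - 2 ∧
        (Multiset.count j f.parts : ℤ) = (Multiset.count j d.parts : ℤ) + 4 ∧
        (j = 1 ∨
          (Multiset.count (j - 1) f.parts : ℤ) = (Multiset.count (j - 1) d.parts : ℤ) - 2)) ∨
       ((Multiset.count (j + 1) f.parts : ℤ) = (Multiset.count (j + 1) d.parts : ℤ) - 1 ∧
        (Multiset.count j f.parts : ℤ) = (Multiset.count j d.parts : ℤ) + 2 ∧
        (j = 1 ∨
          (Multiset.count (j - 1) f.parts : ℤ) = (Multiset.count (j - 1) d.parts : ℤ) - 1))) := by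
  classical
  obtain ⟨hdadm, hfadm, hfd_lt, hminimal⟩ := hmin
  obtain ⟨hfd_le, hfd_ne⟩ := hfd_lt
  set L : List ℕ := Multiset.sort d.parts (· ≥ ·) with hL
  set M : List ℕ := Multiset.sort f.parts (· ≥ ·) with hM
  have hLsort : L.Pairwise (· ≥ ·) := Multiset.pairwise_sort _ _
  have hMsort : M.Pairwise (· ≥ ·) := Multiset.pairwise_sort _ _
  have hLco : (↑L : Multiset ℕ) = d.parts := Multiset.sort_eq _ _
  have hMco : (↑M : Multiset ℕ) = f.parts := Multiset.sort_eq _ _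
  have hLmem : ∀ x ∈ L, x ∈ d.parts := fun x hx => by rw [← hLco]; exact Multiset.mem_coe.2 hx
  have hMmem : ∀ x ∈ M, x ∈ f.parts := fun x hx => by rw [← hMco]; exact Multiset.mem_coe.2 hx
  have hLpos : ∀ x ∈ L, 0 < x := fun x hx => d.parts_pos (hLmem x hx)
  have hMpos : ∀ x ∈ M, 0 < x := fun x hx => f.parts_pos (hMmem x hx)
  have hLk : ∀ x ∈ L, x ≤ k := fun x hx => by rw [hk]; exact Multiset.le_sup (hLmem x hx)
  have hLsum : L.sum = m := by
    have : (↑L : Multiset ℕ).sum = d.parts.sum := by rw [hLco]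
    rw [Multiset.sum_coe] at this
    rw [this, d.parts_sum]
  have hMsum : M.sum = m := by
    have : (↑M : Multiset ℕ).sum = f.parts.sum := by rw [hMco]
    rw [Multiset.sum_coe] at this
    rw [this, f.parts_sum]
  have hfd : ∀ p, (M.take p).sum ≤ (L.take p).sum := hfd_le
  have hDconst : ∀ p, L.length ≤ p → (L.take p).sum = m := fun p hp => by
    rw [List.take_of_length_le hp, hLsum]
  have hFconst : ∀ p, M.length ≤ p → (M.take p).sum = m := fun p hp => by
    rw [List.take_of_length_le hp, hMsum]
  have hDm : ∀ p, (L.take p).sum ≤ m := by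
    intro p
    calc (L.take p).sum ≤ (L.take (p + L.length)).sum := take_sum_mono L (by omega)
    _ = m := hDconst _ (by omega)
  have hex : ∃ p, (M.take p).sum < (L.take p).sum := by
    by_contra hno
    push_neg at hno
    have hall : ∀ p, (M.take p).sum = (L.take p).sum := fun p =>
      le_antisymm (hfd p) (hno p)
    have hML : M = L := eq_of_prefix_sums M L hMpos hLpos hall
    apply hfd_ne
    have hpp : f.parts = d.parts := by rw [← hMco, ← hLco, hML]
    cases f; cases d
    simpa using hpp
  obtain ⟨r, hrdef⟩ : ∃ r, r = Nat.find hex := ⟨_, rfl⟩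
  have hr : (M.take r).sum < (L.take r).sum := by rw [hrdef]; exact Nat.find_spec hex
  have hrmin : ∀ q, q < r → (M.take q).sum = (L.take q).sum := fun q hq =>
    le_antisymm (hfd q) (le_of_not_gt (Nat.find_min hex (by omega)))
  have hr1 : 1 ≤ r := by
    rcases Nat.eq_zero_or_pos r with h | h
    · exfalso; rw [h] at hr; simp at hr
    · exact h
  have hFr1 : (M.take (r-1)).sum = (L.take (r-1)).sum := hrmin _ (by omega)
  have hrlen : r - 1 < L.length := by
    by_contra hlen
    have h1 : (L.take (r-1)).sum = m := hDconst _ (by omega)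
    have h2 : (L.take r).sum = m := hDconst _ (by omega)
    have h3 : (M.take (r-1)).sum ≤ (M.take r).sum := take_sum_mono M (by omega)
    omega
  obtain ⟨a, ha_eq⟩ : ∃ a, a = L[r-1]'hrlen := ⟨_, rfl⟩
  have hDr : (L.take r).sum = (L.take (r-1)).sum + a := by
    have h := take_sum_succ L (r-1) hrlen
    have hr0 : r - 1 + 1 = r := by omega
    rw [hr0] at h
    rw [h, ha_eq]
  have hkey : (M.take r).sum + 1 ≤ (L.take r).sum := hr
  have hMdrop : ∀ x ∈ M.drop (r-1), x + 1 ≤ a := by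
    intro x hx
    have hne : M.drop (r-1) ≠ [] := by
      intro h; rw [h] at hx; exact absurd hx List.not_mem_nil
    have hlenM : r - 1 < M.length := by
      by_contra h
      exact hne (List.drop_eq_nil_of_le (by omega))
    have hcons := List.drop_eq_getElem_cons (l := M) hlenM
    have hxle : x ≤ M[r-1] := by
      rw [hcons] at hx
      rcases List.mem_cons.1 hx with rfl | hx'
      · exact le_refl _
      · have hsd : (M.drop (r-1)).Pairwise (· ≥ ·) := List.Pairwise.drop hMsort
        rw [hcons] at hsd
        exact List.rel_of_pairwise_cons hsd hx'
    have hMr : (M.take r).sum = (M.take (r-1)).sum + M[r-1] := by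
      have h := take_sum_succ M (r-1) hlenM
      have hr0 : r - 1 + 1 = r := by omega
      rw [hr0] at h
      exact h
    omega
  have ha2 : 2 ≤ a := by
    cases hMd : M.drop (r-1) with
    | nil =>
      have hlenM : M.length ≤ r - 1 := by
        by_contra h
        rw [List.drop_eq_getElem_cons (show r-1 < M.length by omega)] at hMd
        exact List.cons_ne_nil _ _ hMd
      have h1 : (M.take (r-1)).sum = m := hFconst _ (by omega)
      have h2 : (M.take r).sum = m := hFconst _ (by omega)
      have h3 := hDm r
      omega
    | cons y t =>
      have hy : y ∈ M.drop (r-1) := by rw [hMd]; exact List.mem_cons_self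
      have h1 := hMdrop y hy
      have h2 : 0 < y := hMpos y (List.mem_of_mem_drop hy)
      omega
  have haLmem : a ∈ L := by rw [ha_eq]; exact List.getElem_mem _
  have hak : a ≤ k := hLk a haLmem
  have hNL : ∀ v, L.countP (fun x => decide (v ≤ x)) = Nge d.parts v := fun v =>
    countP_sort_eq_Nge d.parts v
  have hidx : ∀ v i, (h : i < L.length) → (v ≤ L[i] ↔ i < Nge d.parts v) := by
    intro v i h
    rw [← hNL v]
    exact sorted_getElem_iff L hLsort v i h
  have hNar : r - 1 < Nge d.parts a := (hidx a (r-1) hrlen).1 (by rw [ha_eq])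
  have hNa1r : Nge d.parts (a+1) ≤ r - 1 := by
    by_contra h
    have h2 := (hidx (a+1) (r-1) hrlen).2 (by omega)
    rw [← ha_eq] at h2
    omega
  have hNlen : ∀ v, Nge d.parts v ≤ L.length := fun v => by
    rw [← hNL v]; exact List.countP_le_length
  have hmono' : Nge d.parts a ≤ Nge d.parts (a-1) := Nge_anti _ (by omega)
  have hDlow : ∀ p q c', p ≤ q → q ≤ Nge d.parts c' →
      (L.take p).sum + (q - p) * c' ≤ (L.take q).sum := by
    intro p q c' hpq hq
    apply take_sum_lower L p q c' hpq (le_trans hq (hNlen c'))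
    intro i hpi hi hiq
    exact (hidx c' i hi).2 (by omega)
  have hFup : ∀ p q, r - 1 ≤ p → p ≤ q →
      (M.take q).sum ≤ (M.take p).sum + (q - p) * (a-1) := by
    intro p q h1 h2
    apply take_sum_upper M p q (a-1) h2
    intro x hx
    have hx' : x ∈ M.drop (r-1) := by
      have hdd : M.drop p = (M.drop (r-1)).drop (p - (r-1)) := by
        rw [List.drop_drop]
        congr 1
        omega
      rw [hdd] at hx
      exact List.mem_of_mem_drop hx
    have := hMdrop x hx'
    omega
  have hdef1 : ∀ p, r ≤ p → p ≤ Nge d.parts (a-1) →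
      (M.take p).sum + 1 ≤ (L.take p).sum := by
    intro p h1 h2
    have hu := hFup r p (by omega) h1
    have hl := hDlow r p (a-1) h1 h2
    omega
  have hcount_a : 1 ≤ d.parts.count a := Multiset.one_le_count_iff_mem.2 (hLmem a haLmem)
  have hcount0 : d.parts.count 0 = 0 := by
    rw [Multiset.count_eq_zero]
    intro h
    exact absurd (d.parts_pos h) (by omega)
  have hfull2 : 3 ≤ a → 1 ≤ d.parts.count (a-2) := fun h3 =>
    Multiset.one_le_count_iff_mem.2 (hfull (a-2) (by omega) (by rw [← hk]; omega))
  have htail : ∀ c : ℕ, (c = 1 ∨ c = 2) → c ≤ d.parts.count a →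
      (a = 2 ∨ c ≤ d.parts.count (a-2)) →
      (∀ p, Nge d.parts a ≤ p → p ≤ Nge d.parts (a-1) →
        (M.take p).sum + c ≤ (L.take p).sum) →
      (c = 2 → ((M.take (Nge d.parts a - 1)).sum + 1 ≤ (L.take (Nge d.parts a - 1)).sum ∧
        (M.take (Nge d.parts (a-1) + 1)).sum + 1 ≤ (L.take (Nge d.parts (a-1) + 1)).sum)) →
      (((ε = 1 ∧ Even a) ∨ (ε = -1 ∧ Odd a)) → c = 2) →
      ∃ j : ℕ, 1 ≤ j ∧ j ≤ k - 1 ∧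
      (∀ p : ℕ, p ≠ j + 1 → p ≠ j → p ≠ j - 1 →
        Multiset.count p f.parts = Multiset.count p d.parts) ∧
      (((Multiset.count (j + 1) f.parts : ℤ) = (Multiset.count (j + 1) d.parts : ℤ) - 2 ∧
        (Multiset.count j f.parts : ℤ) = (Multiset.count j d.parts : ℤ) + 4 ∧
        (j = 1 ∨
          (Multiset.count (j - 1) f.parts : ℤ) = (Multiset.count (j - 1) d.parts : ℤ) - 2)) ∨
       ((Multiset.count (j + 1) f.parts : ℤ) = (Multiset.count (j + 1) d.parts : ℤ) - 1 ∧
        (Multiset.count j f.parts : ℤ) = (Multiset.count j d.parts : ℤ) + 2 ∧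
        (j = 1 ∨
          (Multiset.count (j - 1) f.parts : ℤ) = (Multiset.count (j - 1) d.parts : ℤ) - 1))) := by
    intro c hc hc1 hc2 hdefc hdefend hbadOK
    obtain ⟨gM, hg0, hgA, hgA1, hgA2, hgsum, hgN, hgmem⟩ :=
      build_g d.parts a c ha2 hc1 hc2 hcount0
    have hgpos : ∀ x ∈ gM, 0 < x := by
      intro x hx
      rcases hgmem x hx with rfl | h
      · omega
      · exact d.parts_pos h
    have hgsum' : gM.sum = m := by rw [hgsum, d.parts_sum]
    have hgk : ∀ x ∈ gM, x ≤ k := by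
      intro x hx
      rcases hgmem x hx with rfl | h
      · omega
      · rw [hk]; exact Multiset.le_sup h
    have hNgA : Nge gM a + c = Nge d.parts a := by
      have h := hgN a (by omega)
      rw [if_pos (le_refl a), if_neg (show ¬ a ≤ a-2 by omega),
        if_neg (show ¬ a ≤ a-1 by omega)] at h
      omega
    have hNgA1 : Nge gM (a-1) = Nge d.parts (a-1) + c := by
      have h := hgN (a-1) (by omega)
      rw [if_pos (show a-1 ≤ a by omega), if_neg (show ¬ a-1 ≤ a-2 by omega),
        if_pos (le_refl (a-1))] at h
      omega
    have hNgoth : ∀ v, 1 ≤ v → v ≠ a → v ≠ a-1 → Nge gM v = Nge d.parts v := by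
      intro v h1 h2 h3
      have h := hgN v h1
      split_ifs at h <;> omega
    have hNac : c ≤ Nge d.parts a := by
      have h := Nge_succ_add_count d.parts a
      omega
    have hDeq : ∀ p, (L.take p).sum = ∑ v ∈ Finset.Icc 1 k, min p (Nge d.parts v) := fun p =>
      take_sum_sort_eq d.parts k (fun x hx => by rw [hk]; exact Multiset.le_sup hx) p
    have hDgeq : ∀ p, ((Multiset.sort gM (· ≥ ·)).take p).sum
        = ∑ v ∈ Finset.Icc 1 k, min p (Nge gM v) := fun p =>
      take_sum_sort_eq gM k hgk p
    have haux := dominance_aux k a c (Nge d.parts) (Nge gM)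
      (fun p => (M.take p).sum) (fun p => (L.take p).sum)
      (fun p => ((Multiset.sort gM (· ≥ ·)).take p).sum)
      hDeq hDgeq ha2 hak hc hNgA hNgA1 hNgoth hmono' hNac hfd hdefc hdefend
    have hadm : EpsAdmissible ε (⟨gM, fun {i} hi => hgpos i hi, hgsum'⟩ : Nat.Partition m) := by
      intro p hp
      show Even (Multiset.count p gM)
      by_cases hpa : p = a
      · subst hpa
        have hcc := hbadOK hp
        have he := Nat.even_iff.1 (hdadm p hp)
        rw [Nat.even_iff]
        omega
      · by_cases hpa1 : p = a - 1
        · subst hpa1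
          have he := Nat.even_iff.1 (hdadm (a-1) hp)
          rw [Nat.even_iff]
          rcases hc with rfl | rfl <;> omega
        · by_cases hpa2 : p = a - 2
          · by_cases ha3 : 3 ≤ a
            · rcases hgA2 with h | h
              · exact absurd h (by omega)
              · subst hpa2
                have hcon : ((ε = 1 ∧ Even a) ∨ (ε = -1 ∧ Odd a)) := by
                  rcases hp with ⟨he, hev⟩ | ⟨he, hod⟩
                  · exact Or.inl ⟨he, by rw [Nat.even_iff] at hev ⊢; omega⟩
                  · exact Or.inr ⟨he, by rw [Nat.odd_iff] at hod ⊢; omega⟩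
                have hcc := hbadOK hcon
                have he := Nat.even_iff.1 (hdadm (a-2) hp)
                rw [Nat.even_iff]
                omega
            · subst hpa2
              have hz : a - 2 = 0 := by omega
              rw [hz]
              have h0 : Multiset.count 0 gM = 0 :=
                Multiset.count_eq_zero.2 (fun hmem => absurd (hgpos 0 hmem) (by omega))
              rw [h0]
              exact Even.zero
          · rw [hg0 p hpa hpa1 hpa2]
            exact hdadm p hp
    exact key_aux ε d k f ⟨hdadm, hfadm, ⟨hfd_le, hfd_ne⟩, hminimal⟩ a c ha2 hak hc
      ⟨gM, fun {i} hi => hgpos i hi, hgsum'⟩ hg0 hgA hgA1 hgA2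
      hadm (fun j => (haux j).1) (fun j => (haux j).2)
  by_cases hbad : ((ε = 1 ∧ Even a) ∨ (ε = -1 ∧ Odd a))
  · -- bad parity case : c = 2
    have hMcountP : ∀ v, M.countP (fun x => decide (v ≤ x)) = Nge f.parts v := fun v =>
      countP_sort_eq_Nge f.parts v
    have hpre : M.take (r-1) = L.take (r-1) := by
      apply eq_of_prefix_sums
      · intro x hx; exact hMpos x (List.mem_of_mem_take hx)
      · intro x hx; exact hLpos x (List.mem_of_mem_take hx)
      · intro p
        rw [List.take_take, List.take_take]
        exact hrmin (p ⊓ (r-1)) (by omega)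
    have hsplitCount : ∀ v, Nge f.parts v = (M.take (r-1)).countP (fun x => decide (v ≤ x))
        + (M.drop (r-1)).countP (fun x => decide (v ≤ x)) := by
      intro v
      rw [← hMcountP v]
      conv_lhs => rw [← List.take_append_drop (r-1) M]
      rw [List.countP_append]
    have hdropZero : ∀ v, a ≤ v → (M.drop (r-1)).countP (fun x => decide (v ≤ x)) = 0 := by
      intro v hv
      rw [List.countP_eq_zero]
      intro x hx
      have := hMdrop x hx
      simp only [decide_eq_true_eq]
      omega
    have hNfa : Nge f.parts a = r - 1 := by
      have h1 := hsplitCount a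
      rw [hdropZero a (le_refl a), hpre, countP_take_sorted a L hLsort, hNL a] at h1
      omega
    have hNfa1 : Nge f.parts (a+1) = Nge d.parts (a+1) := by
      have h1 := hsplitCount (a+1)
      rw [hdropZero (a+1) (by omega), hpre, countP_take_sorted (a+1) L hLsort, hNL (a+1)] at h1
      omega
    have hcf := Nge_succ_add_count f.parts a
    have hcd := Nge_succ_add_count d.parts a
    have hevd : d.parts.count a % 2 = 0 := Nat.even_iff.1 (hdadm a hbad)
    have hevf : f.parts.count a % 2 = 0 := Nat.even_iff.1 (hfadm a hbad)
    have hra1 : r + 1 ≤ Nge d.parts a := by omega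
    have hra2 : (Nge d.parts a - r) % 2 = 1 := by omega
    have hdefNa : (M.take (Nge d.parts a)).sum + 2 ≤ (L.take (Nge d.parts a)).sum := by
      have hu := hFup r (Nge d.parts a) (by omega) (by omega)
      have hl := hDlow r (Nge d.parts a) a (by omega) (le_refl _)
      have hmul : (Nge d.parts a - r) * a
          = (Nge d.parts a - r) * (a-1) + (Nge d.parts a - r) := by
        obtain ⟨b, hb⟩ : ∃ b, a = b + 1 := ⟨a-1, by omega⟩
        have hb1 : a - 1 = b := by omega
        rw [hb1, hb, Nat.mul_succ]
      omega
    have hdefmid : ∀ p, Nge d.parts a ≤ p → p ≤ Nge d.parts (a-1) →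
        (M.take p).sum + 2 ≤ (L.take p).sum := by
      intro p h1 h2
      have hu := hFup (Nge d.parts a) p (by omega) h1
      have hl := hDlow (Nge d.parts a) p (a-1) h1 h2
      omega
    have hdefendA : (M.take (Nge d.parts a - 1)).sum + 1 ≤ (L.take (Nge d.parts a - 1)).sum :=
      hdef1 _ (by omega) (by omega)
    have hdefendB : (M.take (Nge d.parts (a-1) + 1)).sum + 1
        ≤ (L.take (Nge d.parts (a-1) + 1)).sum := by
      have hu := hFup (Nge d.parts (a-1)) (Nge d.parts (a-1) + 1) (by omega) (by omega)
      have hsimp : Nge d.parts (a-1) + 1 - Nge d.parts (a-1) = 1 := by omega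
      rw [hsimp, one_mul] at hu
      have hmi := hdefmid (Nge d.parts (a-1)) hmono' (le_refl _)
      by_cases ha3 : 3 ≤ a
      · have h1 := Nge_succ_add_count d.parts (a-2)
        have h2 : a - 2 + 1 = a - 1 := by omega
        rw [h2] at h1
        have h3 := hfull2 ha3
        have hl := hDlow (Nge d.parts (a-1)) (Nge d.parts (a-1) + 1) (a-2) (by omega) (by omega)
        rw [hsimp, one_mul] at hl
        omega
      · have hmono2 : (L.take (Nge d.parts (a-1))).sum ≤ (L.take (Nge d.parts (a-1) + 1)).sum :=
          take_sum_mono L (by omega)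
        omega
    have hc1 : 2 ≤ d.parts.count a := by omega
    have hc2 : a = 2 ∨ 2 ≤ d.parts.count (a-2) := by
      by_cases ha3 : 3 ≤ a
      · right
        have hcon : ((ε = 1 ∧ Even (a-2)) ∨ (ε = -1 ∧ Odd (a-2))) := by
          rcases hbad with ⟨he, hev⟩ | ⟨he, hod⟩
          · exact Or.inl ⟨he, by rw [Nat.even_iff] at hev ⊢; omega⟩
          · exact Or.inr ⟨he, by rw [Nat.odd_iff] at hod ⊢; omega⟩
        have h4 := Nat.even_iff.1 (hdadm (a-2) hcon)
        have h5 := hfull2 ha3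
        omega
      · left; omega
    exact htail 2 (Or.inr rfl) hc1 hc2 hdefmid (fun _ => ⟨hdefendA, hdefendB⟩) (fun _ => rfl)
  · -- good parity case : c = 1
    refine htail 1 (Or.inl rfl) hcount_a ?_ ?_ (fun h => absurd h (by omega)) (fun h => absurd h hbad)
    · by_cases ha3 : 3 ≤ a
      · exact Or.inr (hfull2 ha3)
      · exact Or.inl (by omega)
    · intro p h1 h2
      exact hdef1 p (by omega) h2

end AuxMinDeg
end

section
/- Let ε ∈ {1, -1} and let d be an ε-admissible partition of m that has full members, with largest part k. Then the number of ε-admissible partitions f of m such that d > f is a minimal ε-degeneration is exactly k - 1. -/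
namespace CMDAux

/-- `T s x = Σ_{a ∈ s} min a x` : prefix sums of the conjugate partition. -/
def T (s : Multiset ℕ) (x : ℕ) : ℕ := (s.map (fun a => min a x)).sum

lemma T_zero (s : Multiset ℕ) : T s 0 = 0 := by
  simp [T]

lemma T_le_sum (s : Multiset ℕ) (x : ℕ) : T s x ≤ s.sum := by
  unfold T
  conv_rhs => rw [show s.sum = (s.map id).sum by simp]
  exact Multiset.sum_map_le_sum_map _ _ (fun a _ => min_le_left a x)

lemma T_eq_sum_of_le (s : Multiset ℕ) (x : ℕ) (h : ∀ a ∈ s, a ≤ x) : T s x = s.sum := by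
  unfold T
  conv_rhs => rw [show s.sum = (s.map id).sum by simp]
  apply congrArg
  exact Multiset.map_congr rfl (fun a ha => min_eq_left (h a ha))

/-- column heights -/
def C (s : Multiset ℕ) (x : ℕ) : ℕ := Multiset.countP (fun a => x ≤ a) s

lemma T_succ (s : Multiset ℕ) (x : ℕ) : T s (x + 1) = T s x + C s (x + 1) := by
  induction s using Multiset.induction_on with
  | empty => simp [T, C]
  | cons a s ih =>
    simp only [T, C, Multiset.map_cons, Multiset.sum_cons, Multiset.countP_cons] at *
    rw [ih]
    split_ifs with h <;> omega

lemma C_split (s : Multiset ℕ) (x : ℕ) : C s x = s.count x + C s (x + 1) := by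
  induction s using Multiset.induction_on with
  | empty => simp [C]
  | cons a s ih =>
    simp only [C, Multiset.countP_cons, Multiset.count_cons] at *
    rw [ih]
    split_ifs with h1 h2 h3 <;> omega


lemma listE1 (l : List ℕ) (j x : ℕ) :
    (l.take j).sum + (l.map (fun a => min a x)).sum ≤ l.sum + j * x := by
  have hl : l = l.take j ++ l.drop j := (List.take_append_drop j l).symm
  have h1 : ((l.take j).map (fun a => min a x)).sum ≤ j * x := by
    calc ((l.take j).map (fun a => min a x)).sum
        ≤ ((l.take j).map (fun _ => x)).sum :=
          List.sum_le_sum (fun a _ => min_le_right a x)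
      _ = (l.take j).length * x := by
          rw [List.map_const', List.sum_replicate, smul_eq_mul]
      _ ≤ j * x := by
          have := List.length_take_le j l
          exact Nat.mul_le_mul_right x this
  have h2 : ((l.drop j).map (fun a => min a x)).sum ≤ (l.drop j).sum := by
    calc ((l.drop j).map (fun a => min a x)).sum
        ≤ ((l.drop j).map id).sum := List.sum_le_sum (fun a _ => min_le_left a x)
      _ = (l.drop j).sum := by rw [List.map_id]
  have hms : (l.map (fun a => min a x)).sum = ((l.take j).map (fun a => min a x)).sum
      + ((l.drop j).map (fun a => min a x)).sum := by
    rw [← List.sum_append, ← List.map_append, List.take_append_drop]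
  have hs : l.sum = (l.take j).sum + (l.drop j).sum := by
    rw [← List.sum_append, List.take_append_drop]
  omega

lemma listEq (l : List ℕ) (j x : ℕ) (h1 : ∀ a ∈ l.take j, x ≤ a)
    (h2 : ∀ a ∈ l.drop j, a ≤ x) (h3 : (l.take j).length = j) :
    (l.take j).sum + (l.map (fun a => min a x)).sum = l.sum + j * x := by
  have hl : l = l.take j ++ l.drop j := (List.take_append_drop j l).symm
  have e1 : ((l.take j).map (fun a => min a x)).sum = j * x := by
    rw [show (l.take j).map (fun a => min a x) = (l.take j).map (fun _ => x) from
      List.map_congr_left (fun a ha => min_eq_right (h1 a ha))]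
    rw [List.map_const', List.sum_replicate, smul_eq_mul, h3]
  have e2 : ((l.drop j).map (fun a => min a x)).sum = (l.drop j).sum := by
    rw [show (l.drop j).map (fun a => min a x) = (l.drop j).map id from
      List.map_congr_left (fun a ha => min_eq_left (h2 a ha))]
    rw [List.map_id]
  have hms : (l.map (fun a => min a x)).sum = ((l.take j).map (fun a => min a x)).sum
      + ((l.drop j).map (fun a => min a x)).sum := by
    rw [← List.sum_append, ← List.map_append, List.take_append_drop]
  have hs : l.sum = (l.take j).sum + (l.drop j).sum := by
    rw [← List.sum_append, List.take_append_drop]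
  omega

lemma split_exists (x : ℕ) (l : List ℕ) (hl : l.Pairwise (· ≥ ·)) :
    ∃ j ≤ l.length, (∀ a ∈ l.take j, x ≤ a) ∧ (∀ a ∈ l.drop j, a ≤ x) := by
  induction l with
  | nil => exact ⟨0, by simp⟩
  | cons a t ih =>
    rw [List.pairwise_cons] at hl
    by_cases hax : x ≤ a
    · obtain ⟨j, hj, hj1, hj2⟩ := ih hl.2
      refine ⟨j + 1, by simpa using hj, ?_, ?_⟩
      · intro b hb
        rw [List.take_succ_cons] at hb
        rcases List.mem_cons.1 hb with rfl | hb
        · exact hax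
        · exact hj1 b hb
      · intro b hb
        rw [List.drop_succ_cons] at hb
        exact hj2 b hb
    · refine ⟨0, by simp, by simp, ?_⟩
      intro b hb
      simp only [List.drop_zero] at hb
      rcases List.mem_cons.1 hb with rfl | hb
      · omega
      · have := hl.1 b hb; omega

lemma listE2 (l : List ℕ) (hl : l.Pairwise (· ≥ ·)) (x : ℕ) :
    ∃ j, (l.take j).sum + (l.map (fun a => min a x)).sum = l.sum + j * x := by
  obtain ⟨j, hj, h1, h2⟩ := split_exists x l hl
  exact ⟨j, listEq l j x h1 h2 (by rw [List.length_take]; omega)⟩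

lemma listE3 (l : List ℕ) (hl : l.Pairwise (· ≥ ·)) (j : ℕ) :
    ∃ x, (l.take j).sum + (l.map (fun a => min a x)).sum = l.sum + j * x := by
  rcases le_or_gt j l.length with hj | hj
  · have hpw : ∀ a ∈ l.take j, ∀ b ∈ l.drop j, a ≥ b := by
      have : List.Pairwise (· ≥ ·) (l.take j ++ l.drop j) := by
        rw [List.take_append_drop]; exact hl
      exact (List.pairwise_append.1 this).2.2
    rcases hd : l.drop j with _ | ⟨b, t⟩
    · refine ⟨0, listEq l j 0 (fun a _ => Nat.zero_le a) (by rw [hd]; simp)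
        (by rw [List.length_take]; omega)⟩
    · refine ⟨b, listEq l j b ?_ ?_ (by rw [List.length_take]; omega)⟩
      · intro a ha
        exact hpw a ha b (by rw [hd]; exact List.mem_cons_self (a := b) (l := t))
      · intro a ha
        rw [hd] at ha
        rcases List.mem_cons.1 ha with h | h
        · omega
        · have hsort : (l.drop j).Pairwise (· ≥ ·) :=
            hl.sublist (List.drop_sublist j l)
          rw [hd] at hsort
          exact List.rel_of_pairwise_cons hsort h
  · refine ⟨0, ?_⟩
    rw [List.take_of_length_le (by omega)]
    simp [List.map_const', List.sum_replicate]


lemma sort_sum (s : Multiset ℕ) : (Multiset.sort s (· ≥ ·)).sum = s.sum := by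
  conv_rhs => rw [← Multiset.sort_eq s (· ≥ ·)]
  rw [Multiset.sum_coe]

lemma sort_map_sum (s : Multiset ℕ) (f : ℕ → ℕ) :
    ((Multiset.sort s (· ≥ ·)).map f).sum = (s.map f).sum := by
  conv_rhs => rw [← Multiset.sort_eq s (· ≥ ·)]
  rw [Multiset.map_coe, Multiset.sum_coe]

lemma partE1 {m : ℕ} (p : Nat.Partition m) (j x : ℕ) :
    ((Multiset.sort p.parts (· ≥ ·)).take j).sum + T p.parts x ≤ m + j * x := by
  have := listE1 (Multiset.sort p.parts (· ≥ ·)) j x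
  rwa [sort_map_sum, sort_sum, p.parts_sum] at this

lemma partE2 {m : ℕ} (p : Nat.Partition m) (x : ℕ) :
    ∃ j, ((Multiset.sort p.parts (· ≥ ·)).take j).sum + T p.parts x = m + j * x := by
  obtain ⟨j, hj⟩ := listE2 _ (Multiset.pairwise_sort p.parts (· ≥ ·)) x
  rw [sort_map_sum, sort_sum, p.parts_sum] at hj
  exact ⟨j, hj⟩

lemma partE3 {m : ℕ} (p : Nat.Partition m) (j : ℕ) :
    ∃ x, ((Multiset.sort p.parts (· ≥ ·)).take j).sum + T p.parts x = m + j * x := by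
  obtain ⟨x, hx⟩ := listE3 _ (Multiset.pairwise_sort p.parts (· ≥ ·)) j
  rw [sort_map_sum, sort_sum, p.parts_sum] at hx
  exact ⟨x, hx⟩

/-- dominance order in terms of the T-transform -/
lemma dominance_iff_T {m : ℕ} (f d : Nat.Partition m) :
    DominanceLE f d ↔ ∀ x, T d.parts x ≤ T f.parts x := by
  constructor
  · intro h x
    obtain ⟨j, hj⟩ := partE2 f x
    have h1 := partE1 d j x
    have h2 := h j
    omega
  · intro h j
    obtain ⟨x, hx⟩ := partE3 d j
    have h1 := partE1 f j x
    have h2 := h x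
    omega


lemma eq_of_T_eq {s t : Multiset ℕ} (h0s : 0 ∉ s) (h0t : 0 ∉ t)
    (h : ∀ x, T s x = T t x) : s = t := by
  have hC : ∀ x, 1 ≤ x → C s x = C t x := by
    intro x hx
    obtain ⟨y, rfl⟩ := Nat.exists_eq_add_of_le hx
    have h1 := T_succ s y
    have h2 := T_succ t y
    rw [h, h] at h1
    rw [show 1 + y = y + 1 by omega]
    omega
  ext a
  rcases Nat.eq_zero_or_pos a with rfl | ha
  · simp [Multiset.count_eq_zero_of_notMem, h0s, h0t]
  · have h1 := C_split s a
    have h2 := C_split t a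
    have h3 := hC a ha
    have h4 := hC (a + 1) (by omega)
    omega

lemma T_mod_two (s : Multiset ℕ) (n : ℕ) :
    T s n % 2 = (∑ a ∈ s.toFinset, (s.count a * min a n) % 2) % 2 := by
  classical
  rw [T, Finset.sum_multiset_map_count, ← Finset.sum_nat_mod]
  simp [smul_eq_mul]

lemma sum_mod_two (s : Multiset ℕ) :
    s.sum % 2 = (∑ a ∈ s.toFinset, (s.count a * a) % 2) % 2 := by
  classical
  conv_lhs => rw [show s.sum = (s.map id).sum by simp]
  rw [Finset.sum_multiset_map_count, ← Finset.sum_nat_mod]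
  simp [smul_eq_mul]

lemma T_parity_one {m : ℕ} (p : Nat.Partition m) (hp : EpsAdmissible 1 p) (n : ℕ)
    (hn : n % 2 = 1) : T p.parts n % 2 = m % 2 := by
  classical
  conv_rhs => rw [← p.parts_sum]
  rw [T_mod_two, sum_mod_two]
  congr 1
  apply Finset.sum_congr rfl
  intro a _
  rcases Nat.even_or_odd a with ha | ha
  · have hc := hp a (Or.inl ⟨rfl, ha⟩)
    rw [Nat.even_iff] at hc
    rw [Nat.mul_mod, hc, Nat.mul_mod (Multiset.count a p.parts) a, hc]
    simp
  · rw [Nat.odd_iff] at ha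
    have : min a n % 2 = 1 := by omega
    rw [Nat.mul_mod, this, Nat.mul_mod (Multiset.count a p.parts) a, ha]

lemma T_parity_neg {m : ℕ} (p : Nat.Partition m) (hp : EpsAdmissible (-1) p) (n : ℕ)
    (hn : n % 2 = 0) : T p.parts n % 2 = 0 := by
  classical
  rw [T_mod_two]
  have : ∀ a ∈ p.parts.toFinset, (p.parts.count a * min a n) % 2 = 0 := by
    intro a _
    rcases Nat.even_or_odd a with ha | ha
    · rw [Nat.even_iff] at ha
      have : min a n % 2 = 0 := by omega
      rw [Nat.mul_mod, this, Nat.mul_zero, Nat.zero_mod]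
    · have hc := hp a (Or.inr ⟨rfl, ha⟩)
      rw [Nat.even_iff] at hc
      rw [Nat.mul_mod, hc, Nat.zero_mul, Nat.zero_mod]
  rw [Finset.sum_congr rfl this]
  simp

def delta (ε : ℤ) (n : ℕ) : ℕ :=
  if (ε = 1 ∧ n % 2 = 1) ∨ (ε = -1 ∧ n % 2 = 0) then 2 else 1

lemma delta_pos (ε : ℤ) (n : ℕ) : 1 ≤ delta ε n := by
  unfold delta; split_ifs <;> omega

lemma T_add (s t : Multiset ℕ) (x : ℕ) : T (s + t) x = T s x + T t x := by
  simp [T, Multiset.map_add, Multiset.sum_add]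

lemma T_replicate (c a x : ℕ) : T (Multiset.replicate c a) x = c * min a x := by
  simp [T, Multiset.map_replicate, Multiset.sum_replicate]

/-- a part with constrained parity has count ≥ δ if present -/
lemma count_ge_delta {m : ℕ} (ε : ℤ) (d : Nat.Partition m) (hd : EpsAdmissible ε d)
    (n q : ℕ) (hq : q ∈ d.parts) (hpar : q % 2 ≠ n % 2) :
    delta ε n ≤ d.parts.count q := by
  have h1 : 1 ≤ d.parts.count q := Multiset.one_le_count_iff_mem.2 hq
  unfold delta
  split_ifs with h
  · rcases h with ⟨he, hn⟩ | ⟨he, hn⟩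
    · have : Even (d.parts.count q) := hd q (Or.inl ⟨he, by rw [Nat.even_iff]; omega⟩)
      rw [Nat.even_iff] at this; omega
    · have : Even (d.parts.count q) := hd q (Or.inr ⟨he, by rw [Nat.odd_iff]; omega⟩)
      rw [Nat.even_iff] at this; omega
  · omega

lemma existsF {m : ℕ} (ε : ℤ) (hε : ε = 1 ∨ ε = -1) (d : Nat.Partition m)
    (hd : EpsAdmissible ε d) (hfull : FullMembers d) (n : ℕ) (hn1 : 1 ≤ n)
    (hn2 : n + 1 ≤ d.parts.sup) :
    ∃ F : Nat.Partition m, EpsAdmissible ε F ∧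
      ∀ x, T F.parts x = T d.parts x + (if x = n then delta ε n else 0) := by
  classical
  set δ := delta ε n with hδ
  have hδpos : 1 ≤ δ := delta_pos ε n
  -- parity relation: δ = 2 → the parts n±1 have constrained parity
  have hpar1 : (n + 1) % 2 ≠ n % 2 := by omega
  have hpar2 : 2 ≤ n → (n - 1) % 2 ≠ n % 2 := by omega
  have hc1 : δ ≤ d.parts.count (n + 1) :=
    count_ge_delta ε d hd n (n + 1) (hfull (n + 1) (by omega) hn2) hpar1
  have hc2 : 2 ≤ n → δ ≤ d.parts.count (n - 1) := fun h2 =>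
    count_ge_delta ε d hd n (n - 1) (hfull (n - 1) (by omega) (by omega)) (hpar2 h2)
  set rem : Multiset ℕ :=
    Multiset.replicate δ (n + 1) + (if 2 ≤ n then Multiset.replicate δ (n - 1) else 0)
    with hrem
  have hcount_rem : ∀ q, rem.count q =
      (if q = n + 1 then δ else 0) + (if 2 ≤ n ∧ q = n - 1 then δ else 0) := by
    intro q
    rw [hrem, Multiset.count_add, apply_ite (Multiset.count q)]
    simp only [Multiset.count_replicate, Multiset.count_zero]
    split_ifs <;> omega
  have hrem_le : rem ≤ d.parts := by
    rw [Multiset.le_iff_count]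
    intro q
    rw [hcount_rem q]
    by_cases h1 : q = n + 1
    · subst h1
      rw [if_pos rfl, if_neg (by omega)]
      omega
    · rw [if_neg h1]
      by_cases h2 : 2 ≤ n ∧ q = n - 1
      · obtain ⟨h2', hq⟩ := h2
        subst hq
        rw [if_pos ⟨h2', rfl⟩]
        have := hc2 h2'
        omega
      · rw [if_neg h2]
        omega
  obtain ⟨rest, hrest⟩ := Multiset.le_iff_exists_add.1 hrem_le
  have hsum_rem : rem.sum = δ * (n + 1) + (if 2 ≤ n then δ * (n - 1) else 0) := by
    rw [hrem]
    split_ifs with h <;> simp [Multiset.sum_replicate, smul_eq_mul]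
  have hmemrest : ∀ a ∈ rest, a ∈ d.parts := by
    intro a ha; rw [hrest]; exact Multiset.mem_add.2 (Or.inr ha)
  refine ⟨⟨rest + Multiset.replicate (2 * δ) n, ?_, ?_⟩, ?_, ?_⟩
  · intro i hi
    rcases Multiset.mem_add.1 hi with h | h
    · exact d.parts_pos (hmemrest i h)
    · rw [Multiset.eq_of_mem_replicate h]; omega
  · -- sum = m
    rw [Multiset.sum_add, Multiset.sum_replicate, smul_eq_mul]
    have hm : rem.sum + rest.sum = m := by
      rw [← Multiset.sum_add, ← hrest, d.parts_sum]
    rw [hsum_rem] at hm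
    have key : 2 * δ * n = δ * (n + 1) + (if 2 ≤ n then δ * (n - 1) else 0) := by
      split_ifs with h
      · obtain ⟨t, rfl⟩ : ∃ t, n = t + 1 := ⟨n - 1, by omega⟩
        simp only [Nat.add_sub_cancel]
        ring
      · have : n = 1 := by omega
        subst this; ring
    omega
  · -- admissible
    intro p hp
    have hcd : Even (d.parts.count p) := hd p hp
    have hcF : (rest + Multiset.replicate (2 * δ) n).count p =
        rest.count p + (if p = n then 2 * δ else 0) := by
      rw [Multiset.count_add, Multiset.count_replicate]
      split_ifs with h1 h2 <;> omega
    have hcdd : d.parts.count p = rem.count p + rest.count p := by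
      rw [hrest, Multiset.count_add]
    have hrem_even : rem.count p % 2 = 0 := by
      rw [hcount_rem p]
      rcases Nat.eq_or_lt_of_le hδpos with hδ1 | hδ2
      · -- δ = 1 : then p cannot be n ± 1
        have hδval : δ = 1 := hδ1.symm
        have hnpar : (ε = 1 ∧ n % 2 = 0) ∨ (ε = -1 ∧ n % 2 = 1) := by
          rcases hε with he | he <;> rw [hδ, delta] at hδval <;>
            [skip; skip] <;> subst he <;> simp at hδval <;> omega
        have hppar : (ε = 1 ∧ p % 2 = 0) ∨ (ε = -1 ∧ p % 2 = 1) := by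
          rcases hp with ⟨he, hpe⟩ | ⟨he, hpe⟩
          · rw [Nat.even_iff] at hpe; exact Or.inl ⟨he, hpe⟩
          · rw [Nat.odd_iff] at hpe; exact Or.inr ⟨he, hpe⟩
        have hne1 : p ≠ n + 1 := by rcases hnpar with ⟨h,h'⟩|⟨h,h'⟩ <;>
          rcases hppar with ⟨g,g'⟩|⟨g,g'⟩ <;> first | omega | (rw [h] at g; omega) | omega
        have hne2 : ¬(2 ≤ n ∧ p = n - 1) := by
          rintro ⟨h2, rfl⟩
          rcases hnpar with ⟨h,h'⟩|⟨h,h'⟩ <;> rcases hppar with ⟨g,g'⟩|⟨g,g'⟩ <;>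
            first | omega | (rw [h] at g; omega)
        rw [if_neg hne1, if_neg hne2]
      · have hδval : δ = 2 := by
          rw [hδ, delta] at hδ2 ⊢
          split_ifs at hδ2 ⊢ with h
          · rfl
          · omega
        split_ifs <;> omega
    rw [Nat.even_iff] at hcd ⊢
    rw [hcF]
    have hle : rem.count p ≤ d.parts.count p := by omega
    split_ifs <;> omega
  · -- T values
    intro x
    show T (rest + Multiset.replicate (2 * δ) n) x = _
    have hTd : T d.parts x = T rem x + T rest x := by rw [hrest, T_add]
    have hTrem : T rem x = δ * min (n + 1) x + (if 2 ≤ n then δ * min (n - 1) x else 0) := by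
      rw [hrem]
      split_ifs with h <;> simp [T_add, T_replicate, T]
    rw [T_add, T_replicate, hTd, hTrem]
    have key : 2 * δ * min n x =
        δ * min (n + 1) x + (if 2 ≤ n then δ * min (n - 1) x else 0)
          + (if x = n then δ else 0) := by
      split_ifs with h1 h2 h2
      · -- 2 ≤ n, x = n
        rw [h2]
        rw [min_self, min_eq_right (by omega : n ≤ n + 1),
          min_eq_left (by omega : n - 1 ≤ n)]
        obtain ⟨t, rfl⟩ : ∃ t, n = t + 1 := ⟨n - 1, by omega⟩
        simp only [Nat.add_sub_cancel]; ring
      · -- 2 ≤ n, x ≠ n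
        rcases lt_or_gt_of_ne h2 with hx | hx
        · rw [min_eq_right (by omega : x ≤ n), min_eq_right (by omega : x ≤ n + 1),
            min_eq_right (by omega : x ≤ n - 1)]
          ring
        · rw [min_eq_left (by omega : n ≤ x), min_eq_left (by omega : n + 1 ≤ x),
            min_eq_left (by omega : n - 1 ≤ x)]
          obtain ⟨t, rfl⟩ : ∃ t, n = t + 1 := ⟨n - 1, by omega⟩
          simp only [Nat.add_sub_cancel]; ring
      · -- n = 1, x = n
        have : n = 1 := by omega
        subst this; subst h2
        simp
        ring
      · -- n = 1, x ≠ n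
        have hn1' : n = 1 := by omega
        subst hn1'
        rcases lt_or_gt_of_ne h2 with hx | hx
        · interval_cases x; simp
        · rw [min_eq_left (by omega : 1 ≤ x), min_eq_left (by omega : 1 + 1 ≤ x)]
          ring
    omega

lemma part_eq_of_T_eq {m : ℕ} {f d : Nat.Partition m}
    (h : ∀ x, T f.parts x = T d.parts x) : f = d := by
  have h0f : (0 : ℕ) ∉ f.parts := fun hc => (f.parts_pos hc).false
  have h0d : (0 : ℕ) ∉ d.parts := fun hc => (d.parts_pos hc).false
  exact Nat.Partition.ext (eq_of_T_eq h0f h0d h)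

lemma strict_exists {m : ℕ} {f d : Nat.Partition m} (hle : DominanceLE f d)
    (hne : f ≠ d) : ∃ n, 1 ≤ n ∧ n ≤ d.parts.sup - 1 ∧ T d.parts n < T f.parts n := by
  have hT := (dominance_iff_T f d).1 hle
  have hex : ∃ x, T f.parts x ≠ T d.parts x := by
    by_contra hc
    push_neg at hc
    exact hne (part_eq_of_T_eq hc)
  obtain ⟨x, hx⟩ := hex
  have hlt : T d.parts x < T f.parts x := lt_of_le_of_ne (hT x) (Ne.symm hx)
  have hx1 : 1 ≤ x := by
    rcases Nat.eq_zero_or_pos x with rfl | h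
    · rw [T_zero, T_zero] at hlt; omega
    · exact h
  have hxk : x < d.parts.sup := by
    by_contra hc
    push_neg at hc
    have h1 : T d.parts x = m := by
      rw [T_eq_sum_of_le d.parts x (fun a ha => le_trans (Multiset.le_sup ha) hc),
        d.parts_sum]
    have h2 : T f.parts x ≤ m := by
      have := T_le_sum f.parts x
      rwa [f.parts_sum] at this
    omega
  exact ⟨x, hx1, by omega, hlt⟩

lemma bump {m : ℕ} (ε : ℤ) (hε : ε = 1 ∨ ε = -1) {f d : Nat.Partition m}
    (hdadm : EpsAdmissible ε d) (hfadm : EpsAdmissible ε f) (n : ℕ)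
    (h : T d.parts n < T f.parts n) :
    T d.parts n + delta ε n ≤ T f.parts n := by
  unfold delta
  split_ifs with hc
  · rcases hc with ⟨he, hn⟩ | ⟨he, hn⟩
    · subst he
      have h1 := T_parity_one d hdadm n hn
      have h2 := T_parity_one f hfadm n hn
      omega
    · subst he
      have h1 := T_parity_neg d hdadm n hn
      have h2 := T_parity_neg f hfadm n hn
      omega
  · omega

end CMDAux

open CMDAux

/-- Let `d` be an `ε`-admissible partition of `m` with full members, with largest part
`k`.  Then the number of `ε`-admissible partitions `f` of `m` such that `d > f` is a
minimal `ε`-degeneration is exactly `k - 1`. -/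
theorem count_minimal_degenerations_of_fullMembers {m : ℕ} (hm : 0 < m) (ε : ℤ)
    (hε : ε = 1 ∨ ε = -1) (d : Nat.Partition m) (hd : EpsAdmissible ε d)
    (hfull : FullMembers d) (k : ℕ) (hk : k = d.parts.sup) :
    {f : Nat.Partition m | IsMinimalDegeneration ε d f}.ncard = k - 1 := by
  classical
  -- choose the covers
  have hFex : ∀ n, 1 ≤ n → n ≤ k - 1 → ∃ F : Nat.Partition m, EpsAdmissible ε F ∧
      ∀ x, T F.parts x = T d.parts x + (if x = n then delta ε n else 0) := by
    intro n h1 h2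
    exact existsF ε hε d hd hfull n h1 (by omega)
  set F : ℕ → Nat.Partition m := fun n =>
    if h : 1 ≤ n ∧ n ≤ k - 1 then (hFex n h.1 h.2).choose else d with hF
  have hFspec : ∀ n, 1 ≤ n → n ≤ k - 1 → EpsAdmissible ε (F n) ∧
      ∀ x, T (F n).parts x = T d.parts x + (if x = n then delta ε n else 0) := by
    intro n h1 h2
    rw [hF]
    simp only [dif_pos (⟨h1, h2⟩ : 1 ≤ n ∧ n ≤ k - 1)]
    exact (hFex n h1 h2).choose_spec
  -- F n < d
  have hFlt : ∀ n, 1 ≤ n → n ≤ k - 1 → DominanceLT (F n) d := by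
    intro n h1 h2
    obtain ⟨hadm, hT⟩ := hFspec n h1 h2
    constructor
    · rw [dominance_iff_T]
      intro x
      rw [hT x]
      omega
    · intro hc
      have h5 := hT n
      rw [hc] at h5
      simp at h5
      have h6 := delta_pos ε n
      omega
  -- any admissible f strictly below d is ≤ some F n
  have hkey : ∀ f : Nat.Partition m, EpsAdmissible ε f → DominanceLT f d →
      ∃ n, 1 ≤ n ∧ n ≤ k - 1 ∧ DominanceLE f (F n) ∧ T d.parts n < T f.parts n := by
    intro f hfadm ⟨hle, hne⟩
    obtain ⟨n, h1, h2, h3⟩ := strict_exists hle hne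
    rw [← hk] at h2
    refine ⟨n, h1, h2, ?_, h3⟩
    rw [dominance_iff_T]
    intro x
    rw [(hFspec n h1 h2).2 x]
    rcases eq_or_ne x n with rfl | hxn
    · rw [if_pos rfl]
      exact bump ε hε hd hfadm x h3
    · rw [if_neg hxn]
      rw [add_zero]
      exact (dominance_iff_T f d).1 hle x
  -- each F n is a minimal degeneration
  have hFmin : ∀ n, 1 ≤ n → n ≤ k - 1 → IsMinimalDegeneration ε d (F n) := by
    intro n h1 h2
    obtain ⟨hadm, hT⟩ := hFspec n h1 h2
    refine ⟨hd, hadm, hFlt n h1 h2, ?_⟩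
    rintro d' hd'adm ⟨hle1, hne1⟩ hlt2
    obtain ⟨n', g1, g2, g3, g4⟩ := hkey d' hd'adm hlt2
    -- T d' ≤ T (F n) pointwise... F n ≤ d' gives ∀ x, T d' x ≤ T (F n) x
    have hTd' : ∀ x, T d'.parts x ≤ T (F n).parts x := (dominance_iff_T (F n) d').1 hle1
    have hn'n : n' = n := by
      by_contra hc
      have := hTd' n'
      rw [hT n', if_neg hc] at this
      omega
    subst hn'n
    -- now T d' = T (F n) everywhere
    apply hne1
    symm
    apply part_eq_of_T_eq
    intro x
    have hub := hTd' x
    rw [hT x] at hub ⊢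
    rcases eq_or_ne x n' with rfl | hxn
    · rw [if_pos rfl] at hub ⊢
      have := bump ε hε hd hd'adm x g4
      omega
    · rw [if_neg hxn] at hub ⊢
      have := (dominance_iff_T d' d).1 hlt2.1 x
      omega
  -- the set is exactly the image of F on Icc 1 (k-1)
  have hset : {f : Nat.Partition m | IsMinimalDegeneration ε d f} =
      ↑((Finset.Icc 1 (k - 1)).image F) := by
    ext f
    simp only [Set.mem_setOf_eq, Finset.coe_image, Set.mem_image, Finset.mem_coe,
      Finset.mem_Icc]
    constructor
    · rintro ⟨_, hfadm, hflt, hmin⟩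
      obtain ⟨n, h1, h2, h3, _⟩ := hkey f hfadm hflt
      refine ⟨n, ⟨h1, h2⟩, ?_⟩
      by_contra hne
      exact hmin (F n) (hFspec n h1 h2).1 ⟨h3, fun hc => hne hc.symm⟩ (hFlt n h1 h2)
    · rintro ⟨n, ⟨h1, h2⟩, rfl⟩
      exact hFmin n h1 h2
  rw [hset, Set.ncard_coe_finset, Finset.card_image_of_injOn, Nat.card_Icc]
  · omega
  · -- injectivity
    intro a ha b hb hab
    simp only [Finset.coe_Icc, Set.mem_Icc] at ha hb
    have hTa := (hFspec a ha.1 ha.2).2 a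
    have hTb := (hFspec b hb.1 hb.2).2 a
    rw [hab] at hTa
    rw [hTa, if_pos rfl] at hTb
    have := delta_pos ε a
    by_contra hne
    rw [if_neg (fun hc : a = b => hne hc)] at hTb
    omega
end

section
/- Let V be a finite-dimensional complex vector space with a nondegenerate alternating bilinear form ω and let z be a nilpotent endomorphism of V that is skew-adjoint with respect to ω. Write the Jordan type of z as d with distinct parts d_1 > d_2 > ... > d_k > 0 of multiplicities s_1, ..., s_k, let p ∈ {1, ..., k} satisfy d_p ≥ d_{p+1} + 2 (where d_{k+1} := 0), and set r := s_1 + ... + s_p. Then the subspace F₀ := im(z^{d_p - 1}) ∩ ker(z) satisfies: dim F₀ = r; z(F₀) = 0; F₀ is isotropic; z(F₀^⊥) ⊆ F₀^⊥; and the endomorphism of F₀^⊥/F₀ induced by z is nilpotent of Jordan type [(d_1 - 2)^{s_1}, ..., (d_p - 2)^{s_p}, (d_{p+1})^{s_{p+1}}, ..., (d_k)^{s_k}] (parts equal to 0 being discarded). -/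
open Module LinearMap Submodule

open Module LinearMap Submodule

section MultisetAux

lemma msum_filter_pos (g : ℕ → ℕ) (hg : g 0 = 0) (t : Multiset ℕ) :
    ((t.filter (fun x => 0 < x)).map g).sum = (t.map g).sum := by
  induction t using Multiset.induction_on with
  | empty => simp
  | cons a s ih =>
    by_cases h : 0 < a
    · rw [Multiset.filter_cons_of_pos _ h]; simp [ih]
    · rw [Multiset.filter_cons_of_neg _ h]
      have : a = 0 := by omega
      simp [ih, this, hg]

lemma msum_filter_pos_sum (t : Multiset ℕ) :
    (t.filter (fun x => 0 < x)).sum = t.sum := by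
  have := msum_filter_pos id rfl t
  simpa using this

lemma msum_min_succ (t : Multiset ℕ) (i : ℕ) :
    (t.map (fun q => min q (i + 1))).sum
      = (t.map (fun q => min q i)).sum + Multiset.card (t.filter (fun q => i + 1 ≤ q)) := by
  induction t using Multiset.induction_on with
  | empty => simp
  | cons a s ih =>
    by_cases h : i + 1 ≤ a
    · rw [Multiset.filter_cons_of_pos _ h,
        show Multiset.filter (LE.le (i + 1)) s = Multiset.filter (fun q => i + 1 ≤ q) s from rfl]
      simp only [Multiset.map_cons, Multiset.sum_cons, Multiset.card_cons, ih]; omega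
    · rw [Multiset.filter_cons_of_neg _ h,
        show Multiset.filter (LE.le (i + 1)) s = Multiset.filter (fun q => i + 1 ≤ q) s from rfl]
      simp only [Multiset.map_cons, Multiset.sum_cons, ih]
      omega

lemma msum_two_filter (t : Multiset ℕ) (a : ℕ) :
    (t.map (fun q => if a ≤ q then 2 else 0)).sum
      = 2 * Multiset.card (t.filter (fun q => a ≤ q)) := by
  induction t using Multiset.induction_on with
  | empty => simp
  | cons b s ih =>
    by_cases h : a ≤ b
    · rw [Multiset.filter_cons_of_pos _ h,
        show Multiset.filter (LE.le a) s = Multiset.filter (fun q => a ≤ q) s from rfl]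
      simp [ih, h]; omega
    · rw [Multiset.filter_cons_of_neg _ h,
        show Multiset.filter (LE.le a) s = Multiset.filter (fun q => a ≤ q) s from rfl]
      simp [ih, h]

end MultisetAux

section LinAux

variable {V W : Type*} [AddCommGroup V] [Module ℂ V] [AddCommGroup W] [Module ℂ W]

lemma aux_ker_pow_le (z : Module.End ℂ V) {p q : ℕ} (h : p ≤ q) :
    LinearMap.ker (z ^ p) ≤ LinearMap.ker (z ^ q) := by
  obtain ⟨c, rfl⟩ := Nat.exists_eq_add_of_le h
  intro x hx
  simp only [LinearMap.mem_ker] at hx ⊢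
  rw [pow_add, pow_mul_comm, Module.End.mul_apply, hx, map_zero]

lemma aux_range_pow_le (z : Module.End ℂ V) {p q : ℕ} (h : p ≤ q) :
    LinearMap.range (z ^ q) ≤ LinearMap.range (z ^ p) := by
  obtain ⟨c, rfl⟩ := Nat.exists_eq_add_of_le h
  rintro x ⟨y, rfl⟩
  exact ⟨(z ^ c) y, by rw [← Module.End.mul_apply, ← pow_add]⟩

lemma aux_map_pow_ker (z : Module.End ℂ V) (p q : ℕ) :
    Submodule.map (z ^ p) (LinearMap.ker (z ^ (p + q)))
      = LinearMap.range (z ^ p) ⊓ LinearMap.ker (z ^ q) := by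
  ext v
  constructor
  · rintro ⟨x, hx, rfl⟩
    have hx' : (z ^ (p + q)) x = 0 := hx
    refine ⟨⟨x, rfl⟩, LinearMap.mem_ker.2 ?_⟩
    rw [← Module.End.mul_apply, ← pow_add, add_comm q p, hx']
  · rintro ⟨⟨x, rfl⟩, hv⟩
    have hv' : (z ^ q) ((z ^ p) x) = 0 := hv
    refine ⟨x, LinearMap.mem_ker.2 ?_, rfl⟩
    rw [add_comm, pow_add, Module.End.mul_apply, hv']

lemma aux_finrank_map [FiniteDimensional ℂ V] (f : V →ₗ[ℂ] W) (S : Submodule ℂ V) :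
    finrank ℂ (Submodule.map f S) + finrank ℂ ((LinearMap.ker f ⊓ S : Submodule ℂ V)) =
      finrank ℂ S := by
  have h1 := LinearMap.finrank_range_add_finrank_ker (f.domRestrict S)
  rw [LinearMap.range_domRestrict, LinearMap.ker_domRestrict] at h1
  have h2 : Submodule.comap S.subtype (LinearMap.ker f)
      = Submodule.comap S.subtype (LinearMap.ker f ⊓ S) := by
    ext x; simp [x.2]
  rw [h2] at h1
  rwa [(Submodule.comapSubtypeEquivOfLe (inf_le_right :
    LinearMap.ker f ⊓ S ≤ S)).finrank_eq] at h1

lemma aux_finrank_range_inf_ker [FiniteDimensional ℂ V] (z : Module.End ℂ V) (p q : ℕ) :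
    finrank ℂ (LinearMap.range (z ^ p) ⊓ LinearMap.ker (z ^ q) : Submodule ℂ V)
      + finrank ℂ (LinearMap.ker (z ^ p)) = finrank ℂ (LinearMap.ker (z ^ (p + q))) := by
  have h1 := aux_finrank_map (z ^ p) (LinearMap.ker (z ^ (p + q)))
  rw [aux_map_pow_ker] at h1
  rwa [inf_eq_left.mpr (aux_ker_pow_le z (Nat.le_add_right p q))] at h1

lemma aux_range_restrict (f : Module.End ℂ V) (p : Submodule ℂ V) (h : ∀ x ∈ p, f x ∈ p) :
    LinearMap.range (f.restrict h) = Submodule.comap p.subtype (Submodule.map f p) := by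
  ext x
  simp only [LinearMap.mem_range, Submodule.mem_comap, Submodule.mem_map]
  constructor
  · rintro ⟨y, rfl⟩
    exact ⟨y, y.2, by simp [LinearMap.restrict_apply]⟩
  · rintro ⟨y, hy, hyx⟩
    exact ⟨⟨y, hy⟩, Subtype.ext (by simpa [LinearMap.restrict_apply] using hyx)⟩

lemma aux_range_mapQ (p : Submodule ℂ V) (g : Module.End ℂ V) (h : p ≤ p.comap g) :
    LinearMap.range (Submodule.mapQ p p g h) = Submodule.map p.mkQ (LinearMap.range g) := by
  have : LinearMap.range (Submodule.mapQ p p g h)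
      = Submodule.map (Submodule.mapQ p p g h) (Submodule.map p.mkQ ⊤) := by
    rw [Submodule.map_top, Submodule.range_mkQ, Submodule.map_top]
  rw [this, ← Submodule.map_comp, Submodule.mapQ_mkQ, Submodule.map_comp, Submodule.map_top]

end LinAux



/-- An endomorphism `z` has Jordan type the partition `d` if
`dim ker (z^i) = Σ_j min (d_j, i)` for all `i ≥ 0`. -/
def HasJordanType {V : Type*} [AddCommGroup V] [Module ℂ V] (z : Module.End ℂ V)
    {m : ℕ} (d : Nat.Partition m) : Prop :=
  ∀ i : ℕ, Module.finrank ℂ (LinearMap.ker (z ^ i)) = (d.parts.map (fun p => min p i)).sum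

/-- The endomorphism of `F^⊥ / F` induced by `z`, given that `z` preserves
`F^⊥` (the orthogonal complement of `F` with respect to `ω`) and induces a map of the
quotient. -/
noncomputable def inducedQuotientEnd {V : Type*} [AddCommGroup V] [Module ℂ V]
    (ω : V →ₗ[ℂ] V →ₗ[ℂ] ℂ) (z : Module.End ℂ V) (F : Submodule ℂ V)
    (hW : ∀ x ∈ LinearMap.BilinForm.orthogonal ω F,
      z x ∈ LinearMap.BilinForm.orthogonal ω F)
    (h' : Submodule.comap (LinearMap.BilinForm.orthogonal ω F).subtype F ≤
      Submodule.comap (z.restrict hW)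
        (Submodule.comap (LinearMap.BilinForm.orthogonal ω F).subtype F)) :
    Module.End ℂ
      (↥(LinearMap.BilinForm.orthogonal ω F) ⧸
        Submodule.comap (LinearMap.BilinForm.orthogonal ω F).subtype F) :=
  Submodule.mapQ _ _ (z.restrict hW) h'

/-- The parts of the Jordan type of the induced endomorphism: each part `q ≥ a` is
replaced by `q - 2`, the other parts are kept, and zero entries are discarded. -/
def reducedParts {m : ℕ} (d : Nat.Partition m) (a : ℕ) : Multiset ℕ :=
  Multiset.filter (fun x => 0 < x) (d.parts.map (fun q => if a ≤ q then q - 2 else q))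

set_option maxHeartbeats 1000000 in
/-- Let `(V, ω)` be a finite-dimensional complex symplectic vector space (`ω` a
nondegenerate alternating bilinear form) and `z` a nilpotent skew-adjoint endomorphism of
Jordan type `d`.  Let `a = d_p` be a part of `d` with `d_p ≥ d_{p+1} + 2` (every part
`< a` is `≤ a - 2`, and `a ≥ 2`), and let `r` be the number of parts `≥ a`.  Then
`F₀ := im (z^(a-1)) ∩ ker z` has dimension `r`, is killed by `z`, is isotropic, `z`
preserves `F₀^⊥`, and the endomorphism of `F₀^⊥ / F₀` induced by `z` is nilpotent of
Jordan type obtained from `d` by replacing each part `q ≥ a` by `q - 2` (discarding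
zeros). -/
theorem symplectic_induction_subspace_exists {V : Type*} [AddCommGroup V] [Module ℂ V]
    [FiniteDimensional ℂ V]
    (ω : V →ₗ[ℂ] V →ₗ[ℂ] ℂ)
    (hnd : ∀ v : V, (∀ w : V, ω v w = 0) → v = 0)
    (halt : ∀ v : V, ω v v = 0)
    (z : Module.End ℂ V) (hznil : IsNilpotent z)
    (hskew : ∀ v w : V, ω (z v) w = - ω v (z w))
    {m : ℕ} (hdim : Module.finrank ℂ V = m)
    (d : Nat.Partition m) (hJT : HasJordanType z d)
    (a : ℕ) (ha : a ∈ d.parts) (ha2 : 2 ≤ a)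
    (hgap : ∀ q ∈ d.parts, q < a → q + 2 ≤ a)
    (r : ℕ) (hr : r = Multiset.card (d.parts.filter (fun q => a ≤ q))) :
    Module.finrank ℂ ↥(LinearMap.range (z ^ (a - 1)) ⊓ LinearMap.ker z) = r ∧
    (∀ v ∈ LinearMap.range (z ^ (a - 1)) ⊓ LinearMap.ker z, z v = 0) ∧
    (∀ v ∈ LinearMap.range (z ^ (a - 1)) ⊓ LinearMap.ker z,
      ∀ w ∈ LinearMap.range (z ^ (a - 1)) ⊓ LinearMap.ker z, ω v w = 0) ∧
    (∀ x ∈ LinearMap.BilinForm.orthogonal ω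
        (LinearMap.range (z ^ (a - 1)) ⊓ LinearMap.ker z),
      z x ∈ LinearMap.BilinForm.orthogonal ω
        (LinearMap.range (z ^ (a - 1)) ⊓ LinearMap.ker z)) ∧
    ∀ (hW : ∀ x ∈ LinearMap.BilinForm.orthogonal ω
        (LinearMap.range (z ^ (a - 1)) ⊓ LinearMap.ker z),
        z x ∈ LinearMap.BilinForm.orthogonal ω
          (LinearMap.range (z ^ (a - 1)) ⊓ LinearMap.ker z))
      (h' : Submodule.comap
          (LinearMap.BilinForm.orthogonal ω
            (LinearMap.range (z ^ (a - 1)) ⊓ LinearMap.ker z)).subtype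
          (LinearMap.range (z ^ (a - 1)) ⊓ LinearMap.ker z) ≤
        Submodule.comap (z.restrict hW)
          (Submodule.comap
            (LinearMap.BilinForm.orthogonal ω
              (LinearMap.range (z ^ (a - 1)) ⊓ LinearMap.ker z)).subtype
            (LinearMap.range (z ^ (a - 1)) ⊓ LinearMap.ker z))),
      ∃ d' : Nat.Partition (m - 2 * r),
        d'.parts = reducedParts d a ∧
        HasJordanType
          (inducedQuotientEnd ω z (LinearMap.range (z ^ (a - 1)) ⊓ LinearMap.ker z) hW h')
          d' := by
  classical
  -- basic form facts
  have hss : ∀ v w : V, ω v w = - ω w v := by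
    intro v w
    have h := halt (v + w)
    simp only [map_add, LinearMap.add_apply, halt v, halt w] at h
    linear_combination h
  have hrefl : ω.IsRefl := by
    intro x y hxy
    rw [hss, hxy, neg_zero]
  have hndg : LinearMap.BilinForm.Nondegenerate ω :=
    ⟨hnd, fun y hy => hnd y (fun w => by rw [hss, hy w, neg_zero])⟩
  have horthtop := LinearMap.BilinForm.orthogonal_top_eq_bot hndg
  have hskewpow : ∀ (n : ℕ) (v w : V), ω ((z ^ n) v) w = (-1 : ℂ) ^ n * ω v ((z ^ n) w) := by
    intro n
    induction n with
    | zero => intro v w; simp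
    | succ n ih =>
      intro v w
      rw [pow_succ' z, Module.End.mul_apply, hskew, ih v (z w),
        show (z ^ n) (z w) = (z * z ^ n) w from by rw [← Module.End.mul_apply, pow_mul_comm']]
      ring
  set F : Submodule ℂ V := LinearMap.range (z ^ (a - 1)) ⊓ LinearMap.ker z with hFdef
  -- dimension bookkeeping
  have key_r : ∀ i : ℕ, finrank ℂ (LinearMap.ker (z ^ (i + 1)))
      = finrank ℂ (LinearMap.ker (z ^ i))
        + Multiset.card (d.parts.filter (fun q => i + 1 ≤ q)) := by
    intro i
    rw [hJT, hJT, msum_min_succ]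
  have hra : finrank ℂ (LinearMap.ker (z ^ a)) = finrank ℂ (LinearMap.ker (z ^ (a - 1))) + r := by
    have h := key_r (a - 1)
    rw [show a - 1 + 1 = a from by omega] at h
    rw [h, hr]
  have hFr : finrank ℂ F = r := by
    have h1 := aux_finrank_range_inf_ker z (a - 1) 1
    rw [show a - 1 + 1 = a from by omega, pow_one] at h1
    rw [hFdef]
    omega
  -- killed by z
  have hkill : ∀ v ∈ F, z v = 0 := fun v hv => hv.2
  -- isotropy
  have hiso : ∀ v ∈ F, ∀ w ∈ F, ω v w = 0 := by
    rintro v hv w hw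
    obtain ⟨⟨x, hx⟩, -⟩ := hv
    obtain ⟨b, hb⟩ : ∃ b, a - 1 = b + 1 := ⟨a - 2, by omega⟩
    rw [← hx, hskewpow]
    have : (z ^ (a - 1)) w = 0 := by
      rw [hb, pow_succ, Module.End.mul_apply, hkill w hw, map_zero]
    rw [this, map_zero, mul_zero]
  -- W preserved
  have hWpres : ∀ x ∈ LinearMap.BilinForm.orthogonal ω F,
      z x ∈ LinearMap.BilinForm.orthogonal ω F := by
    intro x hx
    rw [LinearMap.BilinForm.mem_orthogonal_iff] at hx ⊢
    intro n hn
    have h1 : ω n (z x) = - ω (z n) x := by rw [hskew]; ring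
    show ω n (z x) = 0
    rw [h1, hkill n hn, map_zero, LinearMap.zero_apply, neg_zero]
  refine ⟨hFr, hkill, hiso, hWpres, ?_⟩
  intro hW2 h'2
  have hFW : F ≤ LinearMap.BilinForm.orthogonal ω F := by
    intro x hx
    rw [LinearMap.BilinForm.mem_orthogonal_iff]
    intro n hn
    exact hiso n hn x hx
  have hF'r : finrank ℂ
      (Submodule.comap (LinearMap.BilinForm.orthogonal ω F).subtype F) = r := by
    rw [(Submodule.comapSubtypeEquivOfLe hFW).finrank_eq, hFr]
  have hWr : finrank ℂ (LinearMap.BilinForm.orthogonal ω F) + r = m := by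
    have h := LinearMap.BilinForm.finrank_add_finrank_orthogonal hrefl F
    rw [horthtop, inf_bot_eq, finrank_bot, add_zero, hdim, hFr] at h
    omega
  have hQr : finrank ℂ
      (↥(LinearMap.BilinForm.orthogonal ω F) ⧸
        Submodule.comap (LinearMap.BilinForm.orthogonal ω F).subtype F) + r
      = finrank ℂ (LinearMap.BilinForm.orthogonal ω F) := by
    have := Submodule.finrank_quotient_add_finrank
      (Submodule.comap (LinearMap.BilinForm.orthogonal ω F).subtype F)
    omega
  -- W = ker z^{a-1} ⊔ range z
  have hsupW : LinearMap.ker (z ^ (a - 1)) ⊔ LinearMap.range z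
      = LinearMap.BilinForm.orthogonal ω F := by
    have le1 : LinearMap.ker (z ^ (a - 1)) ≤ LinearMap.BilinForm.orthogonal ω F := by
      intro x hx
      rw [LinearMap.BilinForm.mem_orthogonal_iff]
      rintro n ⟨⟨u, hu⟩, -⟩
      show ω n x = 0
      rw [← hu, hskewpow, (LinearMap.mem_ker.1 hx), map_zero, mul_zero]
    have le2 : LinearMap.range z ≤ LinearMap.BilinForm.orthogonal ω F := by
      rintro x ⟨y, rfl⟩
      rw [LinearMap.BilinForm.mem_orthogonal_iff]
      intro n hn
      show ω n (z y) = 0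
      have h1 : ω n (z y) = - ω (z n) y := by rw [hskew]; ring
      rw [h1, hkill n hn, map_zero, LinearMap.zero_apply, neg_zero]
    refine Submodule.eq_of_le_of_finrank_le (sup_le le1 le2) ?_
    have h2 := Submodule.finrank_sup_add_finrank_inf_eq
      (LinearMap.ker (z ^ (a - 1))) (LinearMap.range z)
    have h3 := aux_finrank_range_inf_ker z 1 (a - 1)
    rw [show 1 + (a - 1) = a from by omega, pow_one] at h3
    have h4 := LinearMap.finrank_range_add_finrank_ker z
    rw [hdim] at h4
    have h5 : LinearMap.ker (z ^ (a - 1)) ⊓ LinearMap.range z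
        = LinearMap.range z ⊓ LinearMap.ker (z ^ (a - 1)) := inf_comm _ _
    rw [h5] at h2
    omega
  -- map of W under powers
  have hz_mem : ∀ i : ℕ, ∀ x ∈ LinearMap.BilinForm.orthogonal ω F,
      (z ^ i) x ∈ LinearMap.BilinForm.orthogonal ω F :=
    fun i x hx => Module.End.pow_apply_mem_of_forall_mem i hW2 x hx
  have hmapW_le : ∀ i : ℕ, Submodule.map (z ^ i) (LinearMap.BilinForm.orthogonal ω F)
      ≤ LinearMap.BilinForm.orthogonal ω F := by
    intro i
    rw [Submodule.map_le_iff_le_comap]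
    intro x hx
    exact hz_mem i x hx
  have hmap_lo : ∀ i : ℕ, i ≤ a - 1 →
      Submodule.map (z ^ i) (LinearMap.BilinForm.orthogonal ω F)
      = (LinearMap.range (z ^ i) ⊓ LinearMap.ker (z ^ (a - 1 - i)))
          ⊔ LinearMap.range (z ^ (i + 1)) := by
    intro i hi
    rw [← hsupW, Submodule.map_sup]
    have h1 := aux_map_pow_ker z i (a - 1 - i)
    rw [show i + (a - 1 - i) = a - 1 from by omega] at h1
    rw [h1]
    congr 1
    rw [← LinearMap.range_comp, ← Module.End.mul_eq_comp, ← pow_succ]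
  have hmap_hi : ∀ i : ℕ, a - 1 ≤ i →
      Submodule.map (z ^ i) (LinearMap.BilinForm.orthogonal ω F)
      = LinearMap.range (z ^ (i + 1)) := by
    intro i hi
    have h0 := hmap_lo (a - 1) le_rfl
    rw [Nat.sub_self, pow_zero] at h0
    rw [show ((1 : Module.End ℂ V)) = LinearMap.id from rfl, LinearMap.ker_id, inf_bot_eq,
      bot_sup_eq] at h0
    obtain ⟨c, rfl⟩ := Nat.exists_eq_add_of_le hi
    rw [show a - 1 + c + 1 = c + (a - 1 + 1) from by omega,
      show a - 1 + c = c + (a - 1) from by omega, pow_add, Module.End.mul_eq_comp,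
      Submodule.map_comp, h0, ← LinearMap.range_comp, ← Module.End.mul_eq_comp, ← pow_add]
  -- rank-nullity for the induced endomorphism
  have hker_rank : ∀ i : ℕ,
      finrank ℂ (LinearMap.ker ((inducedQuotientEnd ω z F hW2 h'2) ^ i))
        + finrank ℂ (Submodule.map (z ^ i) (LinearMap.BilinForm.orthogonal ω F))
      = finrank ℂ
          (↥(LinearMap.BilinForm.orthogonal ω F) ⧸
            Submodule.comap (LinearMap.BilinForm.orthogonal ω F).subtype F)
        + finrank ℂ (F ⊓ Submodule.map (z ^ i) (LinearMap.BilinForm.orthogonal ω F) :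
            Submodule ℂ V) := by
    intro i
    have hE : (inducedQuotientEnd ω z F hW2 h'2) ^ i
        = Submodule.mapQ _ _ ((z.restrict hW2) ^ i)
            ((Submodule.comap (LinearMap.BilinForm.orthogonal ω F).subtype
              F).le_comap_pow_of_le_comap h'2 i) :=
      (Submodule.mapQ_pow _ h'2 i).symm
    have hrange : LinearMap.range ((inducedQuotientEnd ω z F hW2 h'2) ^ i)
        = Submodule.map
            (Submodule.comap (LinearMap.BilinForm.orthogonal ω F).subtype F).mkQ
            (Submodule.comap (LinearMap.BilinForm.orthogonal ω F).subtype
              (Submodule.map (z ^ i) (LinearMap.BilinForm.orthogonal ω F))) := by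
      rw [hE, aux_range_mapQ, Module.End.pow_restrict i hW2, aux_range_restrict]
    have hrn := LinearMap.finrank_range_add_finrank_ker
      ((inducedQuotientEnd ω z F hW2 h'2) ^ i)
    rw [hrange] at hrn
    have h5 := aux_finrank_map
      (Submodule.comap (LinearMap.BilinForm.orthogonal ω F).subtype F).mkQ
      (Submodule.comap (LinearMap.BilinForm.orthogonal ω F).subtype
        (Submodule.map (z ^ i) (LinearMap.BilinForm.orthogonal ω F)))
    rw [Submodule.ker_mkQ] at h5
    have h6 : Submodule.comap (LinearMap.BilinForm.orthogonal ω F).subtype F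
          ⊓ Submodule.comap (LinearMap.BilinForm.orthogonal ω F).subtype
              (Submodule.map (z ^ i) (LinearMap.BilinForm.orthogonal ω F))
        = Submodule.comap (LinearMap.BilinForm.orthogonal ω F).subtype
            (F ⊓ Submodule.map (z ^ i) (LinearMap.BilinForm.orthogonal ω F)) :=
      (Submodule.comap_inf _ _ _).symm
    have h7 : finrank ℂ (Submodule.comap (LinearMap.BilinForm.orthogonal ω F).subtype
          (Submodule.map (z ^ i) (LinearMap.BilinForm.orthogonal ω F)))
        = finrank ℂ (Submodule.map (z ^ i) (LinearMap.BilinForm.orthogonal ω F)) :=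
      (Submodule.comapSubtypeEquivOfLe (hmapW_le i)).finrank_eq
    have h8 : finrank ℂ (Submodule.comap (LinearMap.BilinForm.orthogonal ω F).subtype
          (F ⊓ Submodule.map (z ^ i) (LinearMap.BilinForm.orthogonal ω F)))
        = finrank ℂ
            (F ⊓ Submodule.map (z ^ i) (LinearMap.BilinForm.orthogonal ω F) :
              Submodule ℂ V) :=
      (Submodule.comapSubtypeEquivOfLe (le_trans inf_le_left hFW)).finrank_eq
    rw [h6, h7, h8] at h5
    omega
  -- the reduced partition
  set f : ℕ → ℕ := fun q => if a ≤ q then q - 2 else q with hfdef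
  have hparts_sum : (reducedParts d a).sum + 2 * r = m := by
    have e1 : (reducedParts d a).sum = (d.parts.map f).sum := by
      rw [reducedParts, msum_filter_pos_sum]
    have e2 : (d.parts.map (fun q => f q + (if a ≤ q then 2 else 0))).sum
        = (d.parts.map (fun q => q)).sum := by
      refine congrArg Multiset.sum (Multiset.map_congr rfl ?_)
      intro q hq
      simp only [hfdef]
      split_ifs with h
      · omega
      · omega
    rw [Multiset.sum_map_add, msum_two_filter, Multiset.map_id'] at e2
    rw [e1, hr, e2, d.parts_sum]
  refine ⟨⟨reducedParts d a, fun {i} hi => (Multiset.of_mem_filter hi), by omega⟩, rfl, ?_⟩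
  -- Jordan type of the induced endomorphism
  intro i
  show finrank ℂ (LinearMap.ker ((inducedQuotientEnd ω z F hW2 h'2) ^ i))
      = ((reducedParts d a).map (fun p => min p i)).sum
  have hsum_red : ((reducedParts d a).map (fun p => min p i)).sum
      = (d.parts.map (fun q => min (f q) i)).sum := by
    rw [reducedParts, msum_filter_pos (fun x => min x i) (by simp), Multiset.map_map]
    rfl
  have hkr := hker_rank i
  rcases le_or_gt i (a - 2) with hcase | hcase
  · -- low case : dimension = dim ker z^i
    have hi1 : i ≤ a - 1 := by omega
    have hmap := hmap_lo i hi1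
    have hFle : F ≤ Submodule.map (z ^ i) (LinearMap.BilinForm.orthogonal ω F) := by
      rw [hmap]
      refine le_trans ?_ le_sup_left
      rintro x ⟨hx1, hx2⟩
      refine ⟨aux_range_pow_le z (by omega) hx1, ?_⟩
      have : x ∈ LinearMap.ker (z ^ 1) := by rwa [pow_one]
      exact aux_ker_pow_le z (by omega) this
    rw [inf_eq_left.mpr hFle, hFr] at hkr
    have eA := aux_finrank_range_inf_ker z i (a - 1 - i)
    rw [show i + (a - 1 - i) = a - 1 from by omega] at eA
    have eB := LinearMap.finrank_range_add_finrank_ker (z ^ (i + 1))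
    rw [hdim] at eB
    have eABeq : (LinearMap.range (z ^ i) ⊓ LinearMap.ker (z ^ (a - 1 - i)))
        ⊓ LinearMap.range (z ^ (i + 1))
        = LinearMap.range (z ^ (i + 1)) ⊓ LinearMap.ker (z ^ (a - 1 - i)) := by
      ext x
      simp only [Submodule.mem_inf]
      constructor
      · rintro ⟨⟨h1, h2⟩, h3⟩; exact ⟨h3, h2⟩
      · rintro ⟨h1, h2⟩; exact ⟨⟨aux_range_pow_le z (by omega) h1, h2⟩, h1⟩
    have eABr := aux_finrank_range_inf_ker z (i + 1) (a - 1 - i)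
    rw [show i + 1 + (a - 1 - i) = a from by omega] at eABr
    have esup := Submodule.finrank_sup_add_finrank_inf_eq
      (LinearMap.range (z ^ i) ⊓ LinearMap.ker (z ^ (a - 1 - i)))
      (LinearMap.range (z ^ (i + 1)))
    rw [eABeq] at esup
    rw [hmap] at hkr
    have hfin : finrank ℂ (LinearMap.ker ((inducedQuotientEnd ω z F hW2 h'2) ^ i))
        = finrank ℂ (LinearMap.ker (z ^ i)) := by omega
    rw [hfin, hJT i, hsum_red]
    refine congrArg Multiset.sum (Multiset.map_congr rfl ?_)
    intro q hq
    simp only [hfdef]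
    split_ifs with h
    · omega
    · rfl
  · -- high case
    have hi1 : a - 1 ≤ i := by omega
    have hmap := hmap_hi i hi1
    rw [hmap] at hkr
    have eFX : F ⊓ LinearMap.range (z ^ (i + 1))
        = LinearMap.range (z ^ (i + 1)) ⊓ LinearMap.ker (z ^ 1) := by
      ext x
      simp only [Submodule.mem_inf, hFdef]
      constructor
      · rintro ⟨⟨h1, h2⟩, h3⟩
        exact ⟨h3, by rwa [pow_one]⟩
      · rintro ⟨h1, h2⟩
        rw [pow_one] at h2
        exact ⟨⟨aux_range_pow_le z (by omega) h1, h2⟩, h1⟩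
    rw [eFX] at hkr
    have eFXr := aux_finrank_range_inf_ker z (i + 1) 1
    have eB := LinearMap.finrank_range_add_finrank_ker (z ^ (i + 1))
    rw [hdim] at eB
    have hfin : finrank ℂ (LinearMap.ker ((inducedQuotientEnd ω z F hW2 h'2) ^ i)) + 2 * r
        = finrank ℂ (LinearMap.ker (z ^ (i + 1 + 1))) := by omega
    have e2 : (d.parts.map (fun q => min (f q) i + (if a ≤ q then 2 else 0))).sum
        = (d.parts.map (fun q => min q (i + 1 + 1))).sum := by
      refine congrArg Multiset.sum (Multiset.map_congr rfl ?_)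
      intro q hq
      simp only [hfdef]
      split_ifs with h
      · omega
      · have := hgap q hq (by omega)
        omega
    rw [Multiset.sum_map_add, msum_two_filter, ← hr] at e2
    have e3 := hJT (i + 1 + 1)
    rw [hsum_red]
    omega
end

section
/- Let V be a finite-dimensional complex vector space with a nondegenerate alternating bilinear form ω and let z be a nilpotent endomorphism of V that is skew-adjoint with respect to ω. Write the Jordan type of z as d with distinct parts d_1 > d_2 > ... > d_k > 0 of multiplicities s_1, ..., s_k, let p ∈ {1, ..., k} satisfy d_p ≥ d_{p+1} + 2 (where d_{k+1} := 0), and set r := s_1 + ... + s_p. If F is an isotropic subspace of V with dim F = r and z(F) = 0 such that the endomorphism of F^⊥/F induced by z (note z(F^⊥) ⊆ F^⊥ since z is skew-adjoint and z(F) = 0) has Jordan type [(d_1 - 2)^{s_1}, ..., (d_p - 2)^{s_p}, (d_{p+1})^{s_{p+1}}, ..., (d_k)^{s_k}] (parts equal to 0 being discarded), then F = im(z^{d_p - 1}) ∩ ker(z). In particular there is exactly one such subspace F; this is the statement that the generalized Springer map for the corresponding induction of nilpotent orbits in sp(V) has degree one. -/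
lemma sum_min_succ (s : Multiset ℕ) (a : ℕ) (ha : 1 ≤ a) :
    (s.map (fun q => min q a)).sum
      = (s.map (fun q => min q (a-1))).sum
        + Multiset.card (s.filter (fun q => a ≤ q)) := by
  induction s using Multiset.induction with
  | empty => simp
  | cons q s ih =>
    by_cases h : a ≤ q <;>
      simp only [Multiset.map_cons, Multiset.sum_cons, Multiset.filter_cons, h,
        if_pos, if_neg, Multiset.card_add, Multiset.card_singleton, ih] <;>
      simp [h, ih] <;> omega

lemma sum_reduced (a : ℕ) (ha2 : 2 ≤ a) (s : Multiset ℕ)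
    (hpos : ∀ q ∈ s, 0 < q) (hgap : ∀ q ∈ s, q < a → q + 2 ≤ a) :
    (s.map (fun q => min q (a-1))).sum
      = ((Multiset.filter (fun x => 0 < x)
            (s.map (fun q => if a ≤ q then q - 2 else q))).map
          (fun p => min p (a-2))).sum
        + Multiset.card (s.filter (fun q => a ≤ q)) := by
  induction s using Multiset.induction with
  | empty => simp
  | cons q s ih =>
    have hq : 0 < q := hpos q (Multiset.mem_cons_self q s)
    have hgq : q < a → q + 2 ≤ a := hgap q (Multiset.mem_cons_self q s)
    have ih' := ih (fun x hx => hpos x (Multiset.mem_cons_of_mem hx))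
      (fun x hx => hgap x (Multiset.mem_cons_of_mem hx))
    by_cases h : a ≤ q
    · by_cases h2 : 0 < q - 2 <;>
        simp only [Multiset.map_cons, Multiset.sum_cons, Multiset.filter_cons, h, h2,
          if_pos, if_neg, not_true, Multiset.card_add] <;>
        simp [h, h2, ih'] <;> omega
    · simp only [Multiset.map_cons, Multiset.sum_cons, Multiset.filter_cons, h, hq, if_neg, if_pos]
      simp [h, hq, ih']
      omega

lemma skew_pow {V : Type*} [AddCommGroup V] [Module ℂ V]
    (ω : V →ₗ[ℂ] V →ₗ[ℂ] ℂ) (z : Module.End ℂ V)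
    (hskew : ∀ v w : V, ω (z v) w = - ω v (z w)) :
    ∀ (k : ℕ) (x y : V), ω ((z ^ k) x) y = (-1 : ℂ) ^ k * ω x ((z ^ k) y) := by
  intro k
  induction k with
  | zero => simp
  | succ k ih =>
    intro x y
    have h1 : (z ^ (k+1)) x = (z ^ k) (z x) := by
      rw [pow_succ]; rfl
    have h2 : (z ^ (k+1)) y = z ((z ^ k) y) := by
      rw [pow_succ']; rfl
    rw [h1, ih (z x) y, hskew, h2]
    ring


/-- Let `(V, ω)` be a finite-dimensional complex symplectic vector space (`ω` a
nondegenerate alternating bilinear form) and `z` a nilpotent skew-adjoint endomorphism of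
Jordan type `d`.  Let `a = d_p` be a part of `d` with `d_p ≥ d_{p+1} + 2` (every part
`< a` is `≤ a - 2`, and `a ≥ 2`), and let `r` be the number of parts `≥ a`.  If `F` is an
isotropic subspace of `V` of dimension `r` with `z F = 0` such that the endomorphism of
`F^⊥ / F` induced by `z` has Jordan type obtained from `d` by replacing each part `q ≥ a`
by `q - 2` (discarding zeros), then `F = im (z^(a-1)) ∩ ker z`.  In particular there is
exactly one such subspace: the generalized Springer map for the corresponding induction
of nilpotent orbits in `sp(V)` has degree one. -/
theorem symplectic_induction_subspace_unique {V : Type*} [AddCommGroup V] [Module ℂ V]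
    [FiniteDimensional ℂ V]
    (ω : V →ₗ[ℂ] V →ₗ[ℂ] ℂ)
    (hnd : ∀ v : V, (∀ w : V, ω v w = 0) → v = 0)
    (halt : ∀ v : V, ω v v = 0)
    (z : Module.End ℂ V) (hznil : IsNilpotent z)
    (hskew : ∀ v w : V, ω (z v) w = - ω v (z w))
    {m : ℕ} (hdim : Module.finrank ℂ V = m)
    (d : Nat.Partition m) (hJT : HasJordanType z d)
    (a : ℕ) (ha : a ∈ d.parts) (ha2 : 2 ≤ a)
    (hgap : ∀ q ∈ d.parts, q < a → q + 2 ≤ a)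
    (r : ℕ) (hr : r = Multiset.card (d.parts.filter (fun q => a ≤ q)))
    (F : Submodule ℂ V)
    (hiso : ∀ v ∈ F, ∀ w ∈ F, ω v w = 0)
    (hdimF : Module.finrank ℂ F = r)
    (hzF : ∀ v ∈ F, z v = 0)
    (hW : ∀ x ∈ LinearMap.BilinForm.orthogonal ω F,
      z x ∈ LinearMap.BilinForm.orthogonal ω F)
    (h' : Submodule.comap (LinearMap.BilinForm.orthogonal ω F).subtype F ≤
      Submodule.comap (z.restrict hW)
        (Submodule.comap (LinearMap.BilinForm.orthogonal ω F).subtype F))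
    (hind : ∃ d' : Nat.Partition (m - 2 * r),
      d'.parts = reducedParts d a ∧
      HasJordanType (inducedQuotientEnd ω z F hW h') d') :
    F = LinearMap.range (z ^ (a - 1)) ⊓ LinearMap.ker z := by
  classical
  obtain ⟨d', hd'parts, hJT'⟩ := hind
  have hAlt : ω.IsAlt := halt
  have hRefl : ω.IsRefl := hAlt.isRefl
  have hNd : LinearMap.BilinForm.Nondegenerate ω :=
    hRefl.nondegenerate_iff_separatingLeft.mpr hnd
  set W : Submodule ℂ V := LinearMap.BilinForm.orthogonal ω F with hWdef
  have hFW : F ≤ W := by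
    intro v hv
    rw [hWdef, LinearMap.BilinForm.mem_orthogonal_iff]
    intro n hn
    exact hiso n hn v hv
  -- dimension of W
  have hdimW : Module.finrank ℂ W = m - r := by
    rw [hWdef, LinearMap.BilinForm.finrank_orthogonal hNd, hdim, hdimF]
  set F' : Submodule ℂ W := Submodule.comap W.subtype F with hF'def
  have hmapF' : Submodule.map W.subtype F' = F := by
    rw [hF'def, Submodule.map_comap_subtype, inf_eq_right.mpr hFW]
  have hdimF' : Module.finrank ℂ F' = r := by
    rw [← hdimF, ← hmapF', Submodule.finrank_map_subtype_eq]
  set zW : Module.End ℂ W := z.restrict hW with hzWdef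
  set i : ℕ := a - 2 with hidef
  -- kernel of powers of the induced quotient map
  have hpowmap : (inducedQuotientEnd ω z F hW h') ^ i
      = Submodule.mapQ F' F' (zW ^ i) (F'.le_comap_pow_of_le_comap h' i) := by
    rw [Submodule.mapQ_pow]
    rfl
  have hkerbar : LinearMap.ker ((inducedQuotientEnd ω z F hW h') ^ i)
      = Submodule.map F'.mkQ (Submodule.comap (zW ^ i) F') := by
    rw [hpowmap]
    have hc : Submodule.comap F'.mkQ
        (LinearMap.ker (Submodule.mapQ F' F' (zW ^ i) (F'.le_comap_pow_of_le_comap h' i)))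
        = Submodule.comap (zW ^ i) F' := by
      ext y
      simp [Submodule.mapQ_apply, Submodule.Quotient.mk_eq_zero]
    rw [← hc, Submodule.map_comap_eq_of_surjective F'.mkQ_surjective]
  -- dimension bookkeeping for the quotient kernel
  have hF'le : F' ≤ Submodule.comap (zW ^ i) F' := F'.le_comap_pow_of_le_comap h' i
  have hdimker : Module.finrank ℂ (Submodule.comap (zW ^ i) F')
      = Module.finrank ℂ (LinearMap.ker ((inducedQuotientEnd ω z F hW h') ^ i)) + r := by
    rw [hkerbar]
    set N := Submodule.comap (zW ^ i) F' with hNdef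
    have hg := LinearMap.finrank_range_add_finrank_ker (F'.mkQ.comp N.subtype)
    have hrg : LinearMap.range (F'.mkQ.comp N.subtype) = Submodule.map F'.mkQ N := by
      rw [LinearMap.range_comp, Submodule.range_subtype]
    have hkg : LinearMap.ker (F'.mkQ.comp N.subtype) = Submodule.comap N.subtype F' := by
      rw [LinearMap.ker_comp, Submodule.ker_mkQ]
    have hfk : Module.finrank ℂ (Submodule.comap N.subtype F') = r := by
      rw [← hdimF', ← Submodule.finrank_map_subtype_eq N (Submodule.comap N.subtype F'),
        Submodule.map_comap_subtype, inf_eq_right.mpr hF'le]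
    rw [hrg, hkg] at hg
    rw [hfk] at hg
    exact hg.symm
  -- Usub and its identification
  set Usub : Submodule ℂ V := W ⊓ Submodule.comap (z ^ i) F with hUdef
  have hUmap : Submodule.map W.subtype (Submodule.comap (zW ^ i) F') = Usub := by
    have hzWpow : zW ^ i = (z ^ i).restrict
        (Module.End.pow_apply_mem_of_forall_mem i hW) := by
      rw [hzWdef, Module.End.pow_restrict]
    ext x
    simp only [Submodule.mem_map, Submodule.mem_comap, hUdef, Submodule.mem_inf]
    constructor
    · rintro ⟨⟨y, hyW⟩, hy, rfl⟩
      refine ⟨hyW, ?_⟩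
      have hy2 : (((zW ^ i) ⟨y, hyW⟩ : W) : V) ∈ F := hy
      rwa [hzWpow, LinearMap.restrict_coe_apply] at hy2
    · rintro ⟨hxW, hxF⟩
      refine ⟨⟨x, hxW⟩, ?_, rfl⟩
      show (((zW ^ i) ⟨x, hxW⟩ : W) : V) ∈ F
      rw [hzWpow, LinearMap.restrict_coe_apply]
      exact hxF
  have hdimU : Module.finrank ℂ Usub = Module.finrank ℂ (Submodule.comap (zW ^ i) F') := by
    rw [← hUmap, Submodule.finrank_map_subtype_eq]
  -- the sums
  have hS : (d.parts.map (fun q => min q (a-1))).sum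
      = ((reducedParts d a).map (fun p => min p (a-2))).sum
        + Multiset.card (d.parts.filter (fun q => a ≤ q)) := by
    exact sum_reduced a ha2 d.parts (fun q hq => d.parts_pos hq) hgap
  -- dim Usub = dim ker z^(a-1)
  have hdimU2 : Module.finrank ℂ Usub = Module.finrank ℂ (LinearMap.ker (z ^ (a-1))) := by
    rw [hdimU, hdimker, hJT' i, hd'parts, hJT (a-1), hS, hr]
  -- Usub ≤ ker z^(a-1)
  have hUK : Usub ≤ LinearMap.ker (z ^ (a-1)) := by
    rintro x ⟨hxW, hxF⟩
    have hx : (z ^ i) x ∈ F := hxF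
    have : a - 1 = i + 1 := by omega
    rw [LinearMap.mem_ker, this, pow_succ']
    exact hzF _ hx
  have hUeq : Usub = LinearMap.ker (z ^ (a-1)) :=
    Submodule.eq_of_le_of_finrank_le hUK (le_of_eq hdimU2.symm)
  have hKW : LinearMap.ker (z ^ (a-1)) ≤ W := by
    rw [← hUeq]; exact inf_le_left
  -- F ≤ range (z^(a-1))
  have hrange_orth : LinearMap.range (z ^ (a-1))
      ≤ LinearMap.BilinForm.orthogonal ω (LinearMap.ker (z ^ (a-1))) := by
    rintro w ⟨v, rfl⟩
    rw [LinearMap.BilinForm.mem_orthogonal_iff]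
    intro n hn
    have h0 : (z ^ (a-1)) n = 0 := hn
    have := skew_pow ω z hskew (a-1) n v
    rw [h0] at this
    simp only [map_zero, LinearMap.zero_apply] at this
    have hne : ((-1 : ℂ) ^ (a-1)) ≠ 0 := pow_ne_zero _ (by norm_num)
    have := this.symm
    rcases mul_eq_zero.mp this with h | h
    · exact absurd h hne
    · exact h
  have hdimrange : Module.finrank ℂ (LinearMap.range (z ^ (a-1)))
      = Module.finrank ℂ (LinearMap.BilinForm.orthogonal ω (LinearMap.ker (z ^ (a-1)))) := by
    rw [LinearMap.BilinForm.finrank_orthogonal hNd]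
    have := LinearMap.finrank_range_add_finrank_ker (z ^ (a-1))
    omega
  have hrange_eq : LinearMap.range (z ^ (a-1))
      = LinearMap.BilinForm.orthogonal ω (LinearMap.ker (z ^ (a-1))) :=
    Submodule.eq_of_le_of_finrank_le hrange_orth (le_of_eq hdimrange.symm)
  have hFrange : F ≤ LinearMap.range (z ^ (a-1)) := by
    rw [hrange_eq]
    intro f hf
    rw [LinearMap.BilinForm.mem_orthogonal_iff]
    intro n hn
    have : ω f n = 0 := hKW hn f hf
    exact hRefl f n this
  -- F ≤ range ⊓ ker
  have hFle : F ≤ LinearMap.range (z ^ (a-1)) ⊓ LinearMap.ker z := by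
    intro f hf
    exact ⟨hFrange hf, hzF f hf⟩
  -- finrank of range ⊓ ker = r
  have hdimG : Module.finrank ℂ (LinearMap.range (z ^ (a-1)) ⊓ LinearMap.ker z : Submodule ℂ V)
      = r := by
    set φ : ↥(LinearMap.ker (z ^ a)) →ₗ[ℂ] V :=
      (z ^ (a-1)).domRestrict (LinearMap.ker (z ^ a)) with hφ
    have hrangeφ : LinearMap.range φ
        = LinearMap.range (z ^ (a-1)) ⊓ LinearMap.ker z := by
      ext w
      simp only [LinearMap.mem_range, Submodule.mem_inf, LinearMap.mem_ker, hφ,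
        LinearMap.domRestrict_apply]
      constructor
      · rintro ⟨⟨v, hv⟩, rfl⟩
        have hv' : (z ^ a) v = 0 := hv
        refine ⟨⟨v, rfl⟩, ?_⟩
        have hzz : z ((z ^ (a-1)) v) = (z ^ a) v := by
          have h : a = (a-1) + 1 := by omega
          rw [h, pow_succ']
          rfl
        rw [hzz, hv']
      · rintro ⟨⟨v, rfl⟩, hw⟩
        have hv : (z ^ a) v = 0 := by
          have h : a = (a-1) + 1 := by omega
          rw [h, pow_succ']
          exact hw
        exact ⟨⟨v, hv⟩, rfl⟩
    have hkerφ : LinearMap.ker φ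
        = Submodule.comap (LinearMap.ker (z ^ a)).subtype (LinearMap.ker (z ^ (a-1))) :=
      LinearMap.ker_domRestrict _ _
    have hle : LinearMap.ker (z ^ (a-1)) ≤ LinearMap.ker (z ^ a) := by
      intro x hx
      rw [LinearMap.mem_ker] at hx ⊢
      have h : a = (a-1) + 1 := by omega
      rw [h, pow_succ']
      show z ((z ^ (a-1)) x) = 0
      rw [hx, map_zero]
    have hdk : Module.finrank ℂ (LinearMap.ker φ)
        = Module.finrank ℂ (LinearMap.ker (z ^ (a-1))) := by
      rw [hkerφ, ← Submodule.finrank_map_subtype_eq, Submodule.map_comap_subtype,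
        inf_eq_right.mpr hle]
    have hrn := LinearMap.finrank_range_add_finrank_ker φ
    rw [hrangeφ, hdk, hJT a, hJT (a-1)] at hrn
    have hsum := sum_min_succ d.parts a (by omega)
    rw [← hr] at hsum
    omega
  exact (Submodule.eq_of_le_of_finrank_le hFle (by rw [hdimG, hdimF])).symm ▸ rfl
end
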